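/- arXiv:1308.1367 — 10 statements merged into one kernel-verified Lean document; each statement's English description precedes it below -/
import Mathlib

section
/- Suppose h : ℝ → ℝ has property (L), and let U = {x ∈ ℝ : h(x) > 0}. Then there exists a countable collection G of closed bounded intervals such that: (i) the union of the intervals in G equals U; (ii) every I ∈ G intersects exactly two other intervals of G, one on its left and one on its right, and the ratio of lengths of any two intersecting intervals of G lies in [1/2, 2]; (iii) any two disjoint intervals I, I′ ∈ G are separated by a distance at least |I|/4; (iv) for every I ∈ G the double interval 2I (same center, twice the length) is contained in U; (v) every I ∈ G satisfies max{|I|, inf_{x∈I} h(x), sup_{x∈I} h(x)} ≤ 6 min{|I|, inf_{x∈I} h(x), sup_{x∈I} h(x)}; (vi) there exist nonnegative C^∞ functions ψ_I, each supported in the corresponding I ∈ G, with Σ_{I∈G} ψ_I(x) = 1 for x ∈ U and Σ_{I∈G} ψ_I(x) = 0 for x ∉ U, and such that for every integer j ≥ 0 there is a constant C_j, independent of h, with |ψ_I^{(j)}(x)| ≤ C_j |I|^{−j} for all I ∈ G and all x ∈ ℝ. -/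
/-!
Property (L) says that on any interval shorter than half the value of `h` at one of its points,
`h` is comparable to that value within a factor `2`. From a base point of each component of
`U = {h > 0}` walk in steps `x ↦ x ± 3/10 · h x`: consecutive steps are then comparable, the
walk stays in `U`, and it exhausts the component, since a bounded walk converges to a fixed
point of `x ↦ x ± 3/10 · h x`, i.e. to a zero of `h`. Widening each step by a sixth of the
adjacent steps gives intervals that meet only their two neighbours and are short compared with
`h`, whence (ii)-(v). Smooth transitions across the overlaps telescope to the partition of
unity, and the overlaps are comparable to the lengths of the intervals, whence the derivative
bounds.
-/

open MeasureTheory Real Set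
open scoped ENNReal NNReal Topology Classical

noncomputable section

/-- A continuous nonnegative `h : ℝ → ℝ` has property (L) if for every bounded interval `J`,
either `sup_J h ≤ 2 inf_J h` or `sup_J h < 2|J|`. -/
def PropertyL (h : ℝ → ℝ) : Prop :=
  Continuous h ∧ (∀ x, 0 ≤ h x) ∧
    ∀ a b : ℝ, a ≤ b →
      sSup (h '' Set.Icc a b) ≤ 2 * sInf (h '' Set.Icc a b) ∨
        sSup (h '' Set.Icc a b) < 2 * (b - a)

theorem exists_isFixedPt_mem_Icc_of_iterate_le {α : Type*} [ConditionallyCompleteLinearOrder α]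
    [TopologicalSpace α] [OrderTopology α] {f : α → α} (hf : Continuous f)
    (hle : ∀ x, x ≤ f x) {x y : α} (hy : ∀ k, f^[k] x ≤ y) :
    ∃ z ∈ Icc x y, Function.IsFixedPt f z := by
  have hmono : Monotone fun k => f^[k] x :=
    monotone_nat_of_le_succ fun k => by rw [Function.iterate_succ_apply']; exact hle _
  have hbdd : BddAbove (range fun k => f^[k] x) := ⟨y, forall_mem_range.2 hy⟩
  refine ⟨⨆ k, f^[k] x, ⟨?_, ciSup_le hy⟩,
    isFixedPt_of_tendsto_iterate (tendsto_atTop_ciSup hmono hbdd) hf.continuousAt⟩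
  simpa using le_ciSup hbdd 0

theorem exists_isFixedPt_mem_Icc_of_le_iterate {α : Type*} [ConditionallyCompleteLinearOrder α]
    [TopologicalSpace α] [OrderTopology α] {f : α → α} (hf : Continuous f)
    (hle : ∀ x, f x ≤ x) {x y : α} (hy : ∀ k, y ≤ f^[k] x) :
    ∃ z ∈ Icc y x, Function.IsFixedPt f z := by
  obtain ⟨z, hz, hfix⟩ :=
    exists_isFixedPt_mem_Icc_of_iterate_le (α := αᵒᵈ) (f := f) hf hle hy
  exact ⟨z, ⟨hz.2, hz.1⟩, hfix⟩

theorem Monotone.exists_mem_Icc_add_one {α : Type*} [LinearOrder α] {t : ℤ → α}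
    (ht : Monotone t) {a b : ℤ} {y : α} (ha : t a ≤ y) (hb : y ≤ t b) :
    ∃ n, y ∈ Icc (t n) (t (n + 1)) := by
  by_contra hne
  simp only [mem_Icc, not_exists, not_and, not_le] at hne
  have hle : ∀ n, a ≤ n → t n ≤ y := fun n hn => by
    induction n, hn using Int.leInduction with
    | base => exact ha
    | succ n _ ih => exact (hne n ih).le
  exact (hne _ (hle (max a b) (le_max_left _ _))).not_ge (hb.trans (ht (by omega)))

theorem hasSum_sub_add_one_of_eq {G : Type*} [AddCommGroup G] [TopologicalSpace G]
    {f : ℤ → G} {k : ℤ} {a : G} (ha : ∀ m ≤ k, f m = a)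
    (h0 : ∀ m, k + 2 ≤ m → f m = 0) :
    HasSum (fun m => f m - f (m + 1)) a := by
  have hsupp : ∀ m ∉ ({k, k + 1} : Finset ℤ), f m - f (m + 1) = 0 := by
    intro m hm
    simp only [Finset.mem_insert, Finset.mem_singleton, not_or] at hm
    rcases lt_or_gt_of_ne hm.1 with hlt | hgt
    · rw [ha m hlt.le, ha (m + 1) (by omega), sub_self]
    · rw [h0 m (by omega), h0 (m + 1) (by omega), sub_self]
  have hsum : HasSum _ _ := hasSum_sum_of_ne_finset_zero hsupp
  rwa [Finset.sum_pair (by omega), ha k le_rfl, h0 (k + 1 + 1) (by omega), sub_add_sub_cancel,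
    sub_zero] at hsum

theorem Real.smoothTransition.exists_abs_iteratedDeriv_le (j : ℕ) :
    ∃ M, 0 < M ∧ ∀ x, |iteratedDeriv j smoothTransition x| ≤ M := by
  obtain ⟨C, hC⟩ := (isCompact_Icc (a := (0 : ℝ)) (b := 1)).exists_bound_of_continuousOn
    ((smoothTransition.contDiff (n := ⊤)).continuous_iteratedDeriv j
      (by exact_mod_cast le_top)).continuousOn
  refine ⟨max C 1, lt_max_of_lt_right one_pos, fun x => ?_⟩
  -- outside `[0, 1]` the function is locally constant, with value `0` or `1`
  have hconst : ∀ c : ℝ, |c| ≤ 1 → smoothTransition =ᶠ[𝓝 x] (fun _ => c) →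
      |iteratedDeriv j smoothTransition x| ≤ max C 1 := by
    intro c hc hx
    rw [hx.iteratedDeriv_eq, iteratedDeriv_const]
    split_ifs
    · exact hc.trans (le_max_right _ _)
    · simp
  rcases lt_or_ge x 0 with hx0 | hx0
  · exact hconst 0 (by simp) (Filter.eventually_of_mem (Iio_mem_nhds hx0)
      fun y hy => smoothTransition.zero_of_nonpos (le_of_lt hy))
  rcases le_or_gt x 1 with hx1 | hx1
  · exact (hC x ⟨hx0, hx1⟩).trans (le_max_left _ _)
  · exact hconst 1 (by simp) (Filter.eventually_of_mem (Ioi_mem_nhds hx1)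
      fun y hy => smoothTransition.one_of_one_le (le_of_lt hy))

section ComponentBase

variable {α : Type*} [TopologicalSpace α] [Nonempty α]

/-- A point of the connected component of `x` in `U`, depending only on that component. -/
def componentBase (U : Set α) (x : α) : α := Classical.epsilon (· ∈ connectedComponentIn U x)

variable {U : Set α} {x y b : α}

theorem componentBase_mem (hx : x ∈ U) : componentBase U x ∈ connectedComponentIn U x :=
  Classical.epsilon_spec ⟨x, mem_connectedComponentIn hx⟩

theorem componentBase_eq_of_mem (hy : y ∈ connectedComponentIn U x) :
    componentBase U y = componentBase U x := by
  rw [componentBase, componentBase, connectedComponentIn_eq hy]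

theorem componentBase_eq (hb : b ∈ componentBase U '' U) (hy : y ∈ connectedComponentIn U b) :
    componentBase U y = b := by
  obtain ⟨x, hx, rfl⟩ := hb
  rw [componentBase_eq_of_mem hy, componentBase_eq_of_mem (componentBase_mem hx)]

theorem mem_of_mem_image_componentBase (hb : b ∈ componentBase U '' U) : b ∈ U := by
  obtain ⟨x, hx, rfl⟩ := hb
  exact connectedComponentIn_subset _ _ (componentBase_mem hx)

theorem countable_image_componentBase [LocallyConnectedSpace α]
    [TopologicalSpace.SeparableSpace α] (hU : IsOpen U) : (componentBase U '' U).Countable := by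
  refine PairwiseDisjoint.countable_of_isOpen (s := connectedComponentIn U) ?_
    (fun _ _ => hU.connectedComponentIn)
    (fun b hb => ⟨b, mem_connectedComponentIn (mem_of_mem_image_componentBase hb)⟩)
  intro b hb b' hb' hne
  exact disjoint_left.2 fun z hz hz' =>
    hne ((componentBase_eq hb hz).symm.trans (componentBase_eq hb' hz'))

end ComponentBase

namespace PropertyL

variable {h : ℝ → ℝ} (hL : PropertyL h)
include hL

theorem bddAbove_image_Icc (a b : ℝ) : BddAbove (h '' Icc a b) :=
  (isCompact_Icc.image hL.1).bddAbove

theorem bddBelow_image (s : Set ℝ) : BddBelow (h '' s) :=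
  ⟨0, forall_mem_image.2 fun x _ => hL.2.1 x⟩

theorem half_le_sInf_and_sSup_le {a b p : ℝ} (hp : p ∈ Icc a b) (hab : b - a ≤ h p / 2) :
    h p / 2 ≤ sInf (h '' Icc a b) ∧ sSup (h '' Icc a b) ≤ 2 * h p := by
  have hsup : h p ≤ sSup (h '' Icc a b) := le_csSup (hL.bddAbove_image_Icc a b) ⟨p, hp, rfl⟩
  have hinf : sInf (h '' Icc a b) ≤ h p := csInf_le (hL.bddBelow_image _) ⟨p, hp, rfl⟩
  rcases hL.2.2 a b (hp.1.trans hp.2) with H | H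
  · constructor <;> linarith
  · linarith

theorem half_le_and_le_two_mul {p q : ℝ} (hq : |q - p| ≤ h p / 2) :
    h p / 2 ≤ h q ∧ h q ≤ 2 * h p := by
  have hp : p ∈ Icc (min p q) (max p q) := ⟨min_le_left _ _, le_max_left _ _⟩
  have hq' : q ∈ Icc (min p q) (max p q) := ⟨min_le_right _ _, le_max_right _ _⟩
  have hlen : max p q - min p q ≤ h p / 2 := by rwa [max_sub_min_eq_abs', abs_sub_comm]
  obtain ⟨hinf, hsup⟩ := hL.half_le_sInf_and_sSup_le hp hlen
  exact ⟨hinf.trans (csInf_le (hL.bddBelow_image _) ⟨q, hq', rfl⟩),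
    (le_csSup (hL.bddAbove_image_Icc _ _) ⟨q, hq', rfl⟩).trans hsup⟩

theorem pos_of_abs_sub_le {p q : ℝ} (hp : 0 < h p) (hq : |q - p| ≤ h p / 2) : 0 < h q := by
  linarith [(hL.half_le_and_le_two_mul hq).1]

theorem Icc_subset_setOf_pos {p : ℝ} (hp : 0 < h p) :
    Icc (p - h p / 2) (p + h p / 2) ⊆ {x | 0 < h x} := fun q hq =>
  hL.pos_of_abs_sub_le hp (abs_sub_le_iff.2 ⟨by linarith [hq.2], by linarith [hq.1]⟩)

end PropertyL

namespace Whitney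

/- The `n`-th interval of a chain `t` is `[t n, t (n + 1)]` widened on each side by a sixth of
the smaller adjacent step. Consecutive intervals overlap exactly in
`[t n - margin t n, t n + margin t n]`, across which `transition t n` climbs from `0` to `1`. -/

def step (t : ℤ → ℝ) (n : ℤ) : ℝ := t (n + 1) - t n

structure IsDoublingChain (t : ℤ → ℝ) : Prop where
  step_pos : ∀ n, 0 < step t n
  step_add_one_le : ∀ n, step t (n + 1) ≤ 2 * step t n
  step_le_step_add_one : ∀ n, step t n ≤ 2 * step t (n + 1)

def margin (t : ℤ → ℝ) (n : ℤ) : ℝ := min (step t (n - 1)) (step t n) / 6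

def left (t : ℤ → ℝ) (n : ℤ) : ℝ := t n - margin t n

def right (t : ℤ → ℝ) (n : ℤ) : ℝ := t (n + 1) + margin t (n + 1)

def width (t : ℤ → ℝ) (n : ℤ) : ℝ := right t n - left t n

def transition (t : ℤ → ℝ) (n : ℤ) (x : ℝ) : ℝ :=
  smoothTransition ((x - left t n) / (2 * margin t n))

def bump (t : ℤ → ℝ) (n : ℤ) (x : ℝ) : ℝ := transition t n x - transition t (n + 1) x

theorem width_eq (t : ℤ → ℝ) (n : ℤ) :
    width t n = step t n + margin t n + margin t (n + 1) := by
  simp only [width, left, right, step]; ring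

theorem margin_add_one (t : ℤ → ℝ) (n : ℤ) :
    margin t (n + 1) = min (step t n) (step t (n + 1)) / 6 := by
  simp [margin]

theorem margin_le_step (t : ℤ → ℝ) (n : ℤ) : margin t n ≤ step t n / 6 := by
  rw [margin]; gcongr; exact min_le_right _ _

theorem margin_add_one_le_step (t : ℤ → ℝ) (n : ℤ) : margin t (n + 1) ≤ step t n / 6 := by
  rw [margin_add_one]; gcongr; exact min_le_left _ _

theorem width_le (t : ℤ → ℝ) (n : ℤ) : width t n ≤ 4 / 3 * step t n := by
  rw [width_eq]; linarith [margin_le_step t n, margin_add_one_le_step t n]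

theorem contDiff_transition (t : ℤ → ℝ) (n : ℤ) :
    ContDiff ℝ (⊤ : ℕ∞) (transition t n) :=
  smoothTransition.contDiff.comp ((contDiff_id.sub contDiff_const).div_const _)

theorem contDiff_bump (t : ℤ → ℝ) (n : ℤ) : ContDiff ℝ (⊤ : ℕ∞) (bump t n) :=
  (contDiff_transition t n).sub (contDiff_transition t (n + 1))

def smoothTransitionDerivBound (j : ℕ) : ℝ :=
  (smoothTransition.exists_abs_iteratedDeriv_le j).choose

theorem smoothTransitionDerivBound_pos (j : ℕ) : 0 < smoothTransitionDerivBound j :=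
  (smoothTransition.exists_abs_iteratedDeriv_le j).choose_spec.1

theorem abs_iteratedDeriv_smoothTransition_div_le (j : ℕ) (a : ℝ) {w : ℝ} (hw : 0 < w)
    (x : ℝ) :
    |iteratedDeriv j (fun y => smoothTransition ((y - a) / w)) x| ≤
      smoothTransitionDerivBound j / w ^ j := by
  rw [show (fun y => smoothTransition ((y - a) / w)) = fun y => smoothTransition (w⁻¹ * (y - a))
      by simp only [div_eq_inv_mul],
    iteratedDeriv_comp_sub_const j (fun z => smoothTransition (w⁻¹ * z)) a,
    iteratedDeriv_comp_const_mul smoothTransition.contDiff,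
    abs_mul, abs_pow, abs_inv, abs_of_pos hw, inv_pow, inv_mul_eq_div]
  exact div_le_div_of_nonneg_right
    ((smoothTransition.exists_abs_iteratedDeriv_le j).choose_spec.2 _) (by positivity)

namespace IsDoublingChain

variable {t : ℤ → ℝ} (ht : IsDoublingChain t)
include ht

theorem strictMono : StrictMono t :=
  strictMono_int_of_lt_succ fun n => sub_pos.1 (ht.step_pos n)

theorem step_le_margin (n : ℤ) : step t n ≤ 12 * margin t n := by
  have := ht.step_add_one_le (n - 1)
  rw [sub_add_cancel] at this
  rw [margin]
  rcases min_cases (step t (n - 1)) (step t n) with ⟨hm, -⟩ | ⟨hm, -⟩ <;> rw [hm] <;>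
    linarith [ht.step_pos n]

theorem step_le_margin_add_one (n : ℤ) : step t n ≤ 12 * margin t (n + 1) := by
  have := ht.step_le_step_add_one n
  rw [margin_add_one]
  rcases min_cases (step t n) (step t (n + 1)) with ⟨hm, -⟩ | ⟨hm, -⟩ <;> rw [hm] <;>
    linarith [ht.step_pos n]

theorem margin_pos (n : ℤ) : 0 < margin t n := by
  linarith [ht.step_le_margin n, ht.step_pos n]

theorem le_width (n : ℤ) : 7 / 6 * step t n ≤ width t n := by
  rw [width_eq]; linarith [ht.step_le_margin n, ht.step_le_margin_add_one n]

theorem width_pos (n : ℤ) : 0 < width t n := by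
  linarith [ht.le_width n, ht.step_pos n]

theorem left_lt_right (n : ℤ) : left t n < right t n := sub_pos.1 (ht.width_pos n)

theorem add_margin_le_left_add_one (n : ℤ) : t n + margin t n ≤ left t (n + 1) := by
  have := margin_le_step t n
  have := margin_add_one_le_step t n
  have := ht.step_pos n
  simp only [left, step] at *
  linarith

theorem left_strictMono : StrictMono (left t) :=
  strictMono_int_of_lt_succ fun n => by
    have := ht.add_margin_le_left_add_one n
    have := ht.margin_pos n
    simp only [left] at *
    linarith

theorem right_strictMono : StrictMono (right t) :=
  strictMono_int_of_lt_succ fun n => by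
    have := ht.add_margin_le_left_add_one (n + 1)
    simp only [left, right] at *
    linarith [ht.margin_pos (n + 1 + 1)]

theorem add_margin_mono : Monotone fun n => t n + margin t n :=
  monotone_int_of_le_succ fun n => by
    have := ht.add_margin_le_left_add_one n
    simp only [left] at this
    linarith [ht.margin_pos (n + 1)]

theorem Icc_subset_Icc_left_right (n : ℤ) :
    Icc (t n) (t (n + 1)) ⊆ Icc (left t n) (right t n) :=
  Icc_subset_Icc (by simp [left, (ht.margin_pos n).le]) (by simp [right, (ht.margin_pos _).le])

theorem width_add_one_le (n : ℤ) : width t (n + 1) ≤ 2 * width t n := by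
  have := margin_add_one_le_step t (n + 1)
  rw [width_eq, width_eq]
  linarith [ht.step_le_margin n, ht.step_le_margin (n + 1), ht.step_add_one_le n]

theorem width_le_width_add_one (n : ℤ) : width t n ≤ 2 * width t (n + 1) := by
  have := ht.step_le_margin_add_one (n + 1)
  rw [width_eq, width_eq]
  linarith [margin_le_step t n, ht.step_le_margin_add_one n, ht.step_le_step_add_one n]

theorem width_le_two_mul {n m : ℤ} (hnm : |n - m| ≤ 1) : width t m ≤ 2 * width t n := by
  obtain rfl | rfl | rfl : m = n - 1 ∨ m = n ∨ m = n + 1 := by rw [abs_le] at hnm; omega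
  · simpa using ht.width_le_width_add_one (n - 1)
  · linarith [ht.width_pos m]
  · exact ht.width_add_one_le n

theorem width_div_four_le_left_sub_right (n : ℤ) :
    width t n / 4 ≤ left t (n + 2) - right t n ∧
      width t (n + 2) / 4 ≤ left t (n + 2) - right t n := by
  have h1 := width_le t n
  have h2 := width_le t (n + 1 + 1)
  have h3 := margin_le_step t (n + 1)
  have h4 := margin_add_one_le_step t (n + 1)
  have h5 := ht.step_le_step_add_one n
  have h6 := ht.step_add_one_le (n + 1)
  rw [show n + 2 = n + 1 + 1 by ring]
  simp only [left, right, step] at *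
  constructor <;> linarith

theorem width_div_four_le_abs_sub {n m : ℤ} (hnm : 2 ≤ |n - m|) {x y : ℝ}
    (hx : x ∈ Icc (left t n) (right t n)) (hy : y ∈ Icc (left t m) (right t m)) :
    width t n / 4 ≤ |x - y| := by
  rcases le_abs'.1 hnm with hlt | hgt
  · have hgap := (ht.width_div_four_le_left_sub_right n).1
    have := ht.left_strictMono.monotone (show n + 2 ≤ m by omega)
    rw [abs_sub_comm, abs_of_nonneg (by linarith [hx.2, hy.1, ht.width_pos n])]
    linarith [hx.2, hy.1]
  · have hgap := (ht.width_div_four_le_left_sub_right (n - 2)).2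
    rw [sub_add_cancel] at hgap
    have := ht.right_strictMono.monotone (show m ≤ n - 2 by omega)
    rw [abs_of_nonneg (by linarith [hx.1, hy.2, ht.width_pos n])]
    linarith [hx.1, hy.2]

theorem inter_nonempty_iff {n m : ℤ} :
    (Icc (left t n) (right t n) ∩ Icc (left t m) (right t m)).Nonempty ↔ |n - m| ≤ 1 := by
  constructor
  · rintro ⟨x, hxn, hxm⟩
    by_contra! hnm
    have := ht.width_div_four_le_abs_sub (show 2 ≤ |n - m| by omega) hxn hxm
    linarith [ht.width_pos n, show |x - x| = 0 by simp]
  · intro hnm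
    obtain rfl | rfl | rfl : m = n - 1 ∨ m = n ∨ m = n + 1 := by rw [abs_le] at hnm; omega
    · have := ht.Icc_subset_Icc_left_right (n - 1)
      rw [sub_add_cancel] at this
      exact ⟨t n,
        ht.Icc_subset_Icc_left_right n (left_mem_Icc.2 (ht.strictMono (lt_add_one n)).le),
        this (right_mem_Icc.2 (ht.strictMono (sub_one_lt n)).le)⟩
    · exact ⟨left t m, left_mem_Icc.2 (ht.left_lt_right m).le,
        left_mem_Icc.2 (ht.left_lt_right m).le⟩
    · exact ⟨t (n + 1), ht.Icc_subset_Icc_left_right n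
        (right_mem_Icc.2 (ht.strictMono (lt_add_one n)).le),
        ht.Icc_subset_Icc_left_right (n + 1)
          (left_mem_Icc.2 (ht.strictMono (lt_add_one _)).le)⟩

theorem isPreconnected_iUnion : IsPreconnected (⋃ n, Icc (left t n) (right t n)) :=
  IsPreconnected.iUnion_of_chain (fun _ => isPreconnected_Icc) fun n => by
    rw [Order.succ_eq_add_one]
    exact ht.inter_nonempty_iff.2 (by simp)

theorem transition_eq_zero {n : ℤ} {x : ℝ} (hx : x ≤ left t n) : transition t n x = 0 :=
  smoothTransition.zero_of_nonpos
    (div_nonpos_of_nonpos_of_nonneg (by linarith) (by linarith [ht.margin_pos n]))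

theorem transition_eq_one {n : ℤ} {x : ℝ} (hx : t n + margin t n ≤ x) :
    transition t n x = 1 := by
  have := ht.margin_pos n
  refine smoothTransition.one_of_one_le ((one_le_div (by positivity)).2 ?_)
  simp only [left]; linarith

theorem bump_nonneg (n : ℤ) (x : ℝ) : 0 ≤ bump t n x := by
  rw [bump, sub_nonneg]
  rcases le_or_gt x (left t (n + 1)) with hx | hx
  · rw [ht.transition_eq_zero hx]; exact smoothTransition.nonneg _
  · rw [ht.transition_eq_one (hx.le.trans' (ht.add_margin_le_left_add_one n))]
    exact smoothTransition.le_one _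

theorem support_bump_subset (n : ℤ) :
    Function.support (bump t n) ⊆ Icc (left t n) (right t n) := by
  intro x hx
  by_contra hout
  refine hx ?_
  rcases not_and_or.1 hout with hlt | hgt
  · have hlt := lt_of_not_ge hlt
    rw [bump, ht.transition_eq_zero hlt.le,
      ht.transition_eq_zero (hlt.le.trans (ht.left_strictMono (lt_add_one n)).le), sub_self]
  · have hgt := lt_of_not_ge hgt
    have := ht.add_margin_le_left_add_one n
    have := ht.margin_pos (n + 1)
    simp only [left, right] at *
    rw [bump, ht.transition_eq_one (by linarith), ht.transition_eq_one (by linarith), sub_self]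

theorem hasSum_bump {n : ℤ} {x : ℝ} (hx : x ∈ Icc (t n) (t (n + 1))) :
    HasSum (fun m => bump t m x) 1 := by
  obtain ⟨k, hk1, hk2⟩ : ∃ k, t k + margin t k ≤ x ∧ x ≤ right t k := by
    rcases le_total x (t n + margin t n) with hle | hle
    · refine ⟨n - 1, ?_, ?_⟩
      · have := ht.add_margin_le_left_add_one (n - 1)
        rw [sub_add_cancel] at this
        linarith [hx.1, ht.margin_pos n, show left t n = t n - margin t n from rfl]
      · simpa [right] using hle
    · exact ⟨n, hle, hx.2.trans (by simp [right, (ht.margin_pos _).le])⟩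
  refine hasSum_sub_add_one_of_eq (k := k) (fun m hm => ?_) (fun m hm => ?_)
  · exact ht.transition_eq_one ((ht.add_margin_mono hm).trans hk1)
  · refine ht.transition_eq_zero (hk2.trans ?_)
    have := ht.add_margin_le_left_add_one (k + 1)
    have := ht.left_strictMono.monotone (show k + 1 + 1 ≤ m by omega)
    simp only [left, right] at *
    linarith

theorem abs_iteratedDeriv_bump_le (n : ℤ) (j : ℕ) (x : ℝ) :
    |iteratedDeriv j (bump t n) x| ≤
      2 * smoothTransitionDerivBound j * 8 ^ j * width t n ^ (-(j : ℤ)) := by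
  set M := smoothTransitionDerivBound j
  have hM := smoothTransitionDerivBound_pos j
  have hW := ht.width_pos n
  have htransition : ∀ m, width t n / 8 ≤ 2 * margin t m →
      |iteratedDeriv j (transition t m) x| ≤ M * 8 ^ j / width t n ^ j := fun m hm => by
    have hm' : 0 < width t n / 8 := by positivity
    calc |iteratedDeriv j (transition t m) x| ≤ M / (2 * margin t m) ^ j :=
          abs_iteratedDeriv_smoothTransition_div_le j _ (hm'.trans_le hm) x
      _ ≤ M / (width t n / 8) ^ j := by gcongr
      _ = M * 8 ^ j / width t n ^ j := by rw [div_pow, div_div_eq_mul_div]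
  have h1 := htransition n (by linarith [width_le t n, ht.step_le_margin n])
  have h2 := htransition (n + 1) (by linarith [width_le t n, ht.step_le_margin_add_one n])
  have hsub : iteratedDeriv j (bump t n) x =
      iteratedDeriv j (transition t n) x - iteratedDeriv j (transition t (n + 1)) x :=
    iteratedDeriv_fun_sub ((contDiff_transition t n).contDiffAt.of_le (by exact_mod_cast le_top))
      ((contDiff_transition t (n + 1)).contDiffAt.of_le (by exact_mod_cast le_top))
  rw [hsub, zpow_neg, zpow_natCast]
  calc _ ≤ _ := abs_sub _ _
    _ ≤ M * 8 ^ j / width t n ^ j + M * 8 ^ j / width t n ^ j := add_le_add h1 h2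
    _ = _ := by ring

end IsDoublingChain

section Orbit

/- The factor `3/10` makes the widened intervals at most `4/3 · 3/10 = 2/5` times the value of `h`
at the anchor of the step, below the `1/2` at which property (L) makes `h` comparable to that
value. -/

def orbit (h : ℝ → ℝ) (x₀ : ℝ) : ℤ → ℝ
  | (n : ℕ) => (fun x => x + 3 / 10 * h x)^[n] x₀
  | Int.negSucc n => (fun x => x - 3 / 10 * h x)^[n + 1] x₀

/-- The endpoint of `[orbit h x₀ n, orbit h x₀ (n + 1)]` from which that step was taken. -/
def anchor (h : ℝ → ℝ) (x₀ : ℝ) (n : ℤ) : ℝ :=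
  if 0 ≤ n then orbit h x₀ n else orbit h x₀ (n + 1)

variable {h : ℝ → ℝ} {x₀ : ℝ}

theorem orbit_natCast (k : ℕ) : orbit h x₀ k = (fun x => x + 3 / 10 * h x)^[k] x₀ := rfl

theorem orbit_neg_natCast (k : ℕ) : orbit h x₀ (-k) = (fun x => x - 3 / 10 * h x)^[k] x₀ := by
  cases k <;> rfl

theorem orbit_add_one {n : ℤ} (hn : 0 ≤ n) :
    orbit h x₀ (n + 1) = orbit h x₀ n + 3 / 10 * h (orbit h x₀ n) := by
  lift n to ℕ using hn
  rw [← Nat.cast_succ, orbit_natCast, orbit_natCast, Function.iterate_succ_apply']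

theorem orbit_of_neg {n : ℤ} (hn : n < 0) :
    orbit h x₀ n = orbit h x₀ (n + 1) - 3 / 10 * h (orbit h x₀ (n + 1)) := by
  obtain ⟨k, hk⟩ := Int.exists_eq_neg_ofNat (show n + 1 ≤ 0 by omega)
  rw [hk, show n = -((k + 1 : ℕ) : ℤ) by push_cast; omega, orbit_neg_natCast, orbit_neg_natCast,
    Function.iterate_succ_apply']

theorem step_orbit (h : ℝ → ℝ) (x₀ : ℝ) (n : ℤ) :
    step (orbit h x₀) n = 3 / 10 * h (anchor h x₀ n) := by
  rw [step, anchor]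
  split_ifs with hn
  · rw [orbit_add_one hn]; ring
  · rw [orbit_of_neg (lt_of_not_ge hn)]; ring

theorem width_orbit_le (h : ℝ → ℝ) (x₀ : ℝ) (n : ℤ) :
    width (orbit h x₀) n ≤ 2 / 5 * h (anchor h x₀ n) := by
  linarith [width_le (orbit h x₀) n, step_orbit h x₀ n]

theorem anchor_add_one {n : ℤ} (hn : 0 ≤ n) :
    anchor h x₀ (n + 1) = anchor h x₀ n + 3 / 10 * h (anchor h x₀ n) := by
  simp only [anchor, if_pos hn, if_pos (show 0 ≤ n + 1 by omega), orbit_add_one hn]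

theorem anchor_sub_one {n : ℤ} (hn : n < 0) :
    anchor h x₀ (n - 1) = anchor h x₀ n - 3 / 10 * h (anchor h x₀ n) := by
  simp only [anchor, if_neg (show ¬0 ≤ n - 1 by omega), if_neg (show ¬0 ≤ n by omega),
    sub_add_cancel, orbit_of_neg hn]

theorem anchor_neg_one : anchor h x₀ (-1) = anchor h x₀ 0 := by
  simp [anchor]

variable (hL : PropertyL h)
include hL

theorem anchor_mem (n : ℤ) : anchor h x₀ n ∈ Icc (orbit h x₀ n) (orbit h x₀ (n + 1)) := by
  have hstep := step_orbit h x₀ n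
  have := hL.2.1 (anchor h x₀ n)
  rw [step] at hstep
  unfold anchor at *
  split_ifs at * <;> constructor <;> linarith

theorem comparable_of_eq_add_or_sub {p q : ℝ}
    (hq : q = p + 3 / 10 * h p ∨ q = p - 3 / 10 * h p) : h p / 2 ≤ h q ∧ h q ≤ 2 * h p := by
  refine hL.half_le_and_le_two_mul ?_
  have := hL.2.1 p
  rcases hq with rfl | rfl
  · rw [add_sub_cancel_left, abs_of_nonneg (by linarith)]; linarith
  · rw [sub_sub_cancel_left, abs_neg, abs_of_nonneg (by linarith)]; linarith

theorem anchor_pos (hx₀ : 0 < h x₀) (n : ℤ) : 0 < h (anchor h x₀ n) := by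
  induction n using Int.induction_on with
  | zero => exact hx₀
  | succ i ih =>
    linarith [(comparable_of_eq_add_or_sub hL
      (.inl (anchor_add_one (x₀ := x₀) (Int.natCast_nonneg i)))).1]
  | pred i ih =>
    rcases eq_or_ne i 0 with rfl | hi
    · simpa [anchor_neg_one] using ih
    · linarith [(comparable_of_eq_add_or_sub hL
        (.inr (anchor_sub_one (x₀ := x₀) (show -(i : ℤ) < 0 by omega)))).1]

theorem anchor_add_one_comparable (n : ℤ) :
    h (anchor h x₀ (n + 1)) ≤ 2 * h (anchor h x₀ n) ∧
      h (anchor h x₀ n) ≤ 2 * h (anchor h x₀ (n + 1)) := by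
  rcases lt_trichotomy n (-1) with hn | rfl | hn
  · have := comparable_of_eq_add_or_sub hL
      (.inr (anchor_sub_one (x₀ := x₀) (show n + 1 < 0 by omega)))
    rw [add_sub_cancel_right] at this
    constructor <;> linarith [this.1, this.2]
  · rw [show (-1 : ℤ) + 1 = 0 by norm_num, anchor_neg_one]
    constructor <;> linarith [hL.2.1 (anchor h x₀ 0)]
  · have := comparable_of_eq_add_or_sub hL
      (.inl (anchor_add_one (x₀ := x₀) (show 0 ≤ n by omega)))
    constructor <;> linarith [this.1, this.2]

theorem isDoublingChain_orbit (hx₀ : 0 < h x₀) : IsDoublingChain (orbit h x₀) where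
  step_pos n := by rw [step_orbit]; linarith [anchor_pos hL hx₀ n]
  step_add_one_le n := by
    rw [step_orbit, step_orbit]; linarith [(anchor_add_one_comparable (x₀ := x₀) hL n).1]
  step_le_step_add_one n := by
    rw [step_orbit, step_orbit]; linarith [(anchor_add_one_comparable (x₀ := x₀) hL n).2]

theorem exists_le_orbit {y : ℝ} (hy : Icc x₀ y ⊆ {x | 0 < h x}) :
    ∃ n, y ≤ orbit h x₀ n := by
  by_contra! hlt
  obtain ⟨z, hz, hfix⟩ := exists_isFixedPt_mem_Icc_of_iterate_le
    (f := fun x => x + 3 / 10 * h x) (continuous_id.add (continuous_const.mul hL.1))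
    (fun x => by linarith [hL.2.1 x]) (fun k => (hlt k).le)
  have hz0 : h z = 0 := by
    have : z + 3 / 10 * h z = z := hfix
    linarith
  exact (hy hz).ne' hz0

theorem exists_orbit_le {y : ℝ} (hy : Icc y x₀ ⊆ {x | 0 < h x}) :
    ∃ n, orbit h x₀ n ≤ y := by
  by_contra! hlt
  obtain ⟨z, hz, hfix⟩ := exists_isFixedPt_mem_Icc_of_le_iterate
    (f := fun x => x - 3 / 10 * h x) (continuous_id.sub (continuous_const.mul hL.1))
    (fun x => by linarith [hL.2.1 x])
    (fun k => by simpa only [orbit_neg_natCast] using (hlt (-k)).le)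
  have hz0 : h z = 0 := by
    have : z - 3 / 10 * h z = z := hfix
    linarith
  exact (hy hz).ne' hz0

theorem exists_mem_Icc_orbit (hx₀ : 0 < h x₀) {y : ℝ} (hy : uIcc x₀ y ⊆ {x | 0 < h x}) :
    ∃ n, y ∈ Icc (orbit h x₀ n) (orbit h x₀ (n + 1)) := by
  obtain ⟨a, ha⟩ := exists_orbit_le hL (Icc_subset_uIcc'.trans hy)
  obtain ⟨b, hb⟩ := exists_le_orbit hL (Icc_subset_uIcc.trans hy)
  exact (isDoublingChain_orbit hL hx₀).strictMono.monotone.exists_mem_Icc_add_one ha hb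

end Orbit

section OrbitIntervals

variable {h : ℝ → ℝ} {x₀ : ℝ} (hL : PropertyL h) (hx₀ : 0 < h x₀)
include hL hx₀

theorem le_width_orbit (n : ℤ) : 7 / 20 * h (anchor h x₀ n) ≤ width (orbit h x₀) n := by
  linarith [(isDoublingChain_orbit hL hx₀).le_width n, step_orbit h x₀ n]

theorem half_le_sInf_and_sSup_le_orbit (n : ℤ) :
    h (anchor h x₀ n) / 2 ≤ sInf (h '' Icc (left (orbit h x₀) n) (right (orbit h x₀) n)) ∧
      sSup (h '' Icc (left (orbit h x₀) n) (right (orbit h x₀) n)) ≤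
        2 * h (anchor h x₀ n) :=
  hL.half_le_sInf_and_sSup_le
    ((isDoublingChain_orbit hL hx₀).Icc_subset_Icc_left_right n (anchor_mem hL n))
    (by linarith [width_orbit_le h x₀ n, anchor_pos hL hx₀ n, show width (orbit h x₀) n =
      right (orbit h x₀) n - left (orbit h x₀) n from rfl])

theorem half_anchor_le_of_mem {n : ℤ} {q : ℝ}
    (hq : q ∈ Icc (left (orbit h x₀) n) (right (orbit h x₀) n)) :
    h (anchor h x₀ n) / 2 ≤ h q :=
  (half_le_sInf_and_sSup_le_orbit hL hx₀ n).1.trans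
    (csInf_le (hL.bddBelow_image _) ⟨q, hq, rfl⟩)

theorem Icc_left_right_orbit_subset (n : ℤ) :
    Icc (left (orbit h x₀) n) (right (orbit h x₀) n) ⊆ {x | 0 < h x} := fun _ hq => by
  show 0 < h _
  linarith [half_anchor_le_of_mem hL hx₀ hq, anchor_pos hL hx₀ n]

theorem width_orbit_le_of_mem {n : ℤ} {q : ℝ}
    (hq : q ∈ Icc (left (orbit h x₀) n) (right (orbit h x₀) n)) :
    width (orbit h x₀) n ≤ h q := by
  linarith [half_anchor_le_of_mem hL hx₀ hq, width_orbit_le h x₀ n, anchor_pos hL hx₀ n]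

theorem Icc_double_orbit_subset (n : ℤ) :
    Icc (left (orbit h x₀) n - width (orbit h x₀) n / 2)
      (right (orbit h x₀) n + width (orbit h x₀) n / 2) ⊆ {x | 0 < h x} := by
  have ht := isDoublingChain_orbit hL hx₀
  have hH := anchor_pos hL hx₀ n
  have hW := width_orbit_le h x₀ n
  have hstep := step_orbit h x₀ n
  have hε := margin_le_step (orbit h x₀) n
  have hε' := margin_add_one_le_step (orbit h x₀) n
  have hmem := anchor_mem (x₀ := x₀) hL n
  have ha := half_anchor_le_of_mem hL hx₀
    (ht.Icc_subset_Icc_left_right n (left_mem_Icc.2 (ht.strictMono (lt_add_one n)).le))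
  have hb := half_anchor_le_of_mem hL hx₀
    (ht.Icc_subset_Icc_left_right n (right_mem_Icc.2 (ht.strictMono (lt_add_one n)).le))
  simp only [step, left, right] at *
  -- the three pieces lie within half the value of `h` from `orbit h x₀ n`, from the anchor, and
  -- from `orbit h x₀ (n + 1)`
  rintro x ⟨hx1, hx2⟩
  rcases le_total x (orbit h x₀ n) with hxa | hxa
  · exact hL.Icc_subset_setOf_pos (p := orbit h x₀ n) (by linarith)
      ⟨by linarith, by linarith⟩
  rcases le_total x (orbit h x₀ (n + 1)) with hxb | hxb
  · exact hL.Icc_subset_setOf_pos hH ⟨by linarith [hmem.2], by linarith [hmem.1]⟩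
  · exact hL.Icc_subset_setOf_pos (p := orbit h x₀ (n + 1)) (by linarith)
      ⟨by linarith, by linarith⟩

theorem max_le_six_mul_min_orbit (n : ℤ) :
    max (width (orbit h x₀) n)
        (max (sInf (h '' Icc (left (orbit h x₀) n) (right (orbit h x₀) n)))
          (sSup (h '' Icc (left (orbit h x₀) n) (right (orbit h x₀) n)))) ≤
      6 * min (width (orbit h x₀) n)
        (min (sInf (h '' Icc (left (orbit h x₀) n) (right (orbit h x₀) n)))
          (sSup (h '' Icc (left (orbit h x₀) n) (right (orbit h x₀) n)))) := by
  set S := h '' Icc (left (orbit h x₀) n) (right (orbit h x₀) n)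
  obtain ⟨hinf, hsup⟩ := half_le_sInf_and_sSup_le_orbit hL hx₀ n
  have hle : sInf S ≤ sSup S :=
    csInf_le_csSup ((nonempty_Icc.2 ((isDoublingChain_orbit hL hx₀).left_lt_right n).le).image h)
      (hL.bddBelow_image _) (hL.bddAbove_image_Icc _ _)
  have hW := width_orbit_le h x₀ n
  have hW' := le_width_orbit hL hx₀ n
  have hH := anchor_pos hL hx₀ n
  have hmax : max (width (orbit h x₀) n) (max (sInf S) (sSup S)) ≤ 2 * h (anchor h x₀ n) :=
    max_le (by linarith) (max_le (by linarith) hsup)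
  have hmin :
      7 / 20 * h (anchor h x₀ n) ≤ min (width (orbit h x₀) n) (min (sInf S) (sSup S)) :=
    le_min hW' (le_min (by linarith) (by linarith))
  linarith

theorem Icc_left_right_orbit_subset_connectedComponentIn (n : ℤ) :
    Icc (left (orbit h x₀) n) (right (orbit h x₀) n) ⊆
      connectedComponentIn {x | 0 < h x} x₀ := by
  have ht := isDoublingChain_orbit hL hx₀
  have hx₀mem : x₀ ∈ ⋃ m, Icc (left (orbit h x₀) m) (right (orbit h x₀) m) :=
    mem_iUnion.2 ⟨0, ht.Icc_subset_Icc_left_right 0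
      (left_mem_Icc.2 (ht.strictMono (lt_add_one 0)).le)⟩
  exact (subset_iUnion _ n).trans (ht.isPreconnected_iUnion.subset_connectedComponentIn hx₀mem
    (iUnion_subset (Icc_left_right_orbit_subset hL hx₀)))

end OrbitIntervals

section Family

/-- Whitney intervals are indexed by the base point of a component of `{h > 0}` and a position in
the chain through it. -/
abbrev Index (h : ℝ → ℝ) : Type := ↥(componentBase {x | 0 < h x} '' {x | 0 < h x}) × ℤ

def interval (h : ℝ → ℝ) (p : Index h) : ℝ × ℝ :=
  (left (orbit h p.1) p.2, right (orbit h p.1) p.2)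

def bumpAt (h : ℝ → ℝ) : ℝ × ℝ → ℝ → ℝ :=
  Function.extend (interval h) (fun p => bump (orbit h p.1) p.2) 0

variable {h : ℝ → ℝ}

theorem base_pos (p : Index h) : 0 < h p.1 :=
  mem_of_mem_image_componentBase (U := {x | 0 < h x}) p.1.2

variable (hL : PropertyL h)
include hL

theorem isDoublingChain (p : Index h) : IsDoublingChain (orbit h p.1) :=
  isDoublingChain_orbit hL (base_pos p)

theorem componentBase_eq_of_mem_interval {p : Index h} {x : ℝ}
    (hx : x ∈ Icc (interval h p).1 (interval h p).2) : componentBase {x | 0 < h x} x = p.1 :=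
  componentBase_eq p.1.2
    (Icc_left_right_orbit_subset_connectedComponentIn hL (base_pos p) p.2 hx)

theorem interval_injective : Function.Injective (interval h) := by
  rintro ⟨b, n⟩ ⟨b', m⟩ hpq
  have hb : b = b' := Subtype.ext <|
    (componentBase_eq_of_mem_interval hL (p := (b, n))
      (left_mem_Icc.2 ((isDoublingChain hL (b, n)).left_lt_right n).le)).symm.trans
    (componentBase_eq_of_mem_interval hL (p := (b', m))
      (by rw [← hpq]; exact left_mem_Icc.2 ((isDoublingChain hL (b, n)).left_lt_right n).le))
  subst hb
  exact Prod.ext rfl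
    ((isDoublingChain hL (b, n)).left_strictMono.injective (congrArg Prod.fst hpq))

theorem exists_mem_Icc_orbit_componentBase {x : ℝ} (hx : 0 < h x) :
    ∃ n, x ∈ Icc (orbit h (componentBase {x | 0 < h x} x) n)
      (orbit h (componentBase {x | 0 < h x} x) (n + 1)) := by
  have hsub : uIcc (componentBase {x | 0 < h x} x) x ⊆ {x | 0 < h x} :=
    (isPreconnected_connectedComponentIn.ordConnected.uIcc_subset
      (componentBase_mem (U := {x | 0 < h x}) hx)
      (mem_connectedComponentIn (F := {x | 0 < h x}) hx)).trans (connectedComponentIn_subset _ _)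
  exact exists_mem_Icc_orbit hL (base_pos (⟨_, x, hx, rfl⟩, 0)) hsub

theorem width_div_four_le_abs_sub_of_mem_interval {p q : Index h}
    (hpq : ¬(p.1 = q.1 ∧ |p.2 - q.2| ≤ 1)) {x y : ℝ}
    (hx : x ∈ Icc (interval h p).1 (interval h p).2)
    (hy : y ∈ Icc (interval h q).1 (interval h q).2) :
    width (orbit h p.1) p.2 / 4 ≤ |x - y| := by
  by_cases hb : p.1 = q.1
  · have hnm : 2 ≤ |p.2 - q.2| := by have := not_and.1 hpq hb; omega
    rw [show q = (p.1, q.2) from Prod.ext hb.symm rfl] at hy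
    exact (isDoublingChain hL p).width_div_four_le_abs_sub hnm hx hy
  -- were `|x - y| < h x / 2`, the segment `[x, y]` would join the components of `p.1` and `q.1`
  by_contra! hlt
  have hW := width_orbit_le_of_mem hL (base_pos p) hx
  have hxpos : 0 < h x := by linarith [(isDoublingChain hL p).width_pos p.2]
  have hsub : uIcc x y ⊆ {x | 0 < h x} :=
    (uIcc_subset_Icc ⟨by linarith, by linarith⟩
      ⟨by linarith [le_abs_self (x - y)], by linarith [neg_abs_le (x - y)]⟩).trans
      (hL.Icc_subset_setOf_pos hxpos)
  have hy' : y ∈ connectedComponentIn {x | 0 < h x} x :=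
    isPreconnected_uIcc.subset_connectedComponentIn left_mem_uIcc hsub right_mem_uIcc
  exact hb (Subtype.ext ((componentBase_eq_of_mem_interval hL hx).symm.trans
    ((componentBase_eq_of_mem hy').symm.trans (componentBase_eq_of_mem_interval hL hy))))

theorem interval_inter_nonempty_iff {p q : Index h} :
    (Icc (interval h p).1 (interval h p).2 ∩ Icc (interval h q).1 (interval h q).2).Nonempty ↔
      p.1 = q.1 ∧ |p.2 - q.2| ≤ 1 := by
  constructor
  · rintro ⟨x, hxp, hxq⟩
    by_contra hpq
    have := width_div_four_le_abs_sub_of_mem_interval hL hpq hxp hxq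
    rw [sub_self, abs_zero] at this
    linarith [(isDoublingChain hL p).width_pos p.2]
  · obtain ⟨b, n⟩ := p
    obtain ⟨b', m⟩ := q
    rintro ⟨rfl : b = b', hnm⟩
    exact (isDoublingChain hL (b, n)).inter_nonempty_iff.2 hnm

theorem width_le_two_mul_of_inter_nonempty {p q : Index h}
    (hpq : (Icc (interval h p).1 (interval h p).2 ∩
      Icc (interval h q).1 (interval h q).2).Nonempty) :
    width (orbit h q.1) q.2 ≤ 2 * width (orbit h p.1) p.2 := by
  obtain ⟨hb, hnm⟩ := (interval_inter_nonempty_iff hL).1 hpq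
  rw [← hb]
  exact (isDoublingChain hL p).width_le_two_mul hnm

theorem exists_neighbours (p : Index h) :
    ∃ J ∈ range (interval h), ∃ K ∈ range (interval h),
      J ≠ interval h p ∧ K ≠ interval h p ∧ J ≠ K ∧
      J.1 < (interval h p).1 ∧ (interval h p).2 < K.2 ∧
      (Icc J.1 J.2 ∩ Icc (interval h p).1 (interval h p).2).Nonempty ∧
      (Icc (interval h p).1 (interval h p).2 ∩ Icc K.1 K.2).Nonempty ∧
      ∀ L ∈ range (interval h), L ≠ interval h p →
        (Icc L.1 L.2 ∩ Icc (interval h p).1 (interval h p).2).Nonempty → L = J ∨ L = K := by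
  obtain ⟨b, n⟩ := p
  have ht := isDoublingChain hL (b, n)
  have hne : ∀ {m m' : ℤ}, m ≠ m' → interval h (b, m) ≠ interval h (b, m') :=
    fun hmm' e => hmm' (congrArg Prod.snd (interval_injective hL e))
  refine ⟨interval h (b, n - 1), mem_range_self _, interval h (b, n + 1), mem_range_self _,
    hne (by omega), hne (by omega), hne (by omega), ht.left_strictMono (sub_one_lt n),
    ht.right_strictMono (lt_add_one n), (interval_inter_nonempty_iff hL).2 ⟨rfl, by simp⟩,
    (interval_inter_nonempty_iff hL).2 ⟨rfl, by simp⟩, ?_⟩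
  rintro _ ⟨⟨b', m⟩, rfl⟩ hmn hinter
  obtain ⟨rfl : b' = b, hm⟩ := (interval_inter_nonempty_iff hL).1 hinter
  obtain rfl | rfl | rfl : m = n - 1 ∨ m = n ∨ m = n + 1 := by rw [abs_le] at hm; omega
  · exact .inl rfl
  · exact absurd rfl hmn
  · exact .inr rfl

theorem countable_range_interval : (range (interval h)).Countable := by
  have := (countable_image_componentBase (U := {x | 0 < h x})
    (isOpen_lt continuous_const hL.1)).to_subtype
  exact countable_range _

theorem iUnion_interval : ⋃ I ∈ range (interval h), Icc I.1 I.2 = {x | 0 < h x} := by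
  refine Subset.antisymm (iUnion₂_subset ?_) fun x hx => ?_
  · rintro _ ⟨p, rfl⟩
    exact Icc_left_right_orbit_subset hL (base_pos p) p.2
  · obtain ⟨n, hn⟩ := exists_mem_Icc_orbit_componentBase hL hx
    set b : ↥(componentBase {x | 0 < h x} '' {x | 0 < h x}) := ⟨_, x, hx, rfl⟩
    exact mem_biUnion (mem_range_self (b, n))
      ((isDoublingChain hL (b, n)).Icc_subset_Icc_left_right n hn)

theorem bumpAt_interval (p : Index h) : bumpAt h (interval h p) = bump (orbit h p.1) p.2 :=
  (interval_injective hL).extend_apply _ _ p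

theorem hasSum_bumpAt (x : ℝ) :
    HasSum (fun I : range (interval h) => bumpAt h I x) ({x | 0 < h x}.indicator 1 x) := by
  rw [← (Equiv.ofInjective _ (interval_injective hL)).hasSum_iff]
  simp only [Function.comp_def, Equiv.ofInjective_apply, bumpAt_interval hL]
  by_cases hx : 0 < h x
  · obtain ⟨n, hn⟩ := exists_mem_Icc_orbit_componentBase hL hx
    set b : ↥(componentBase {x | 0 < h x} '' {x | 0 < h x}) := ⟨_, x, hx, rfl⟩
    rw [indicator_of_mem (s := {x | 0 < h x}) hx, Pi.one_apply,
      ← (Prod.mk_right_injective b).hasSum_iff]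
    · exact (isDoublingChain hL (b, n)).hasSum_bump hn
    -- the bumps of the other chains vanish on the component of `x`
    rintro ⟨b', m⟩ hbm
    by_contra hne
    have := componentBase_eq_of_mem_interval hL
      ((isDoublingChain hL (b', m)).support_bump_subset m hne)
    exact hbm ⟨m, by rw [show b' = b from Subtype.ext this.symm]⟩
  · rw [indicator_of_notMem (s := {x | 0 < h x}) hx]
    convert hasSum_zero with p
    by_contra hne
    exact hx (Icc_left_right_orbit_subset hL (base_pos p) p.2
      ((isDoublingChain hL p).support_bump_subset p.2 hne))

end Family

end Whitney

open Whitney in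
/-- **Lemma 2.1 (Whitney-type partition).** If `h` has property (L) and
`U = {h > 0}`, then there is a countable collection `G` of closed bounded intervals
(encoded by their endpoint pairs) covering exactly `U`, each meeting exactly two others
(one on each side) with length ratios in `[1/2, 2]`, disjoint ones separated by at least a
quarter length, doubles contained in `U`, lengths comparable to `h` with factor `6`,
together with a subordinate smooth partition of unity with derivative bounds uniform in `h`. -/
theorem whitney_partition_of_propertyL :
    ∃ Cψ : ℕ → ℝ, (∀ j, 0 < Cψ j) ∧
      ∀ h : ℝ → ℝ, PropertyL h →
        ∃ (G : Set (ℝ × ℝ)) (ψ : ℝ × ℝ → ℝ → ℝ),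
          G.Countable ∧ (∀ I ∈ G, I.1 < I.2) ∧
          -- (i) the union of the intervals is U
          (⋃ I ∈ G, Set.Icc I.1 I.2) = {x : ℝ | 0 < h x} ∧
          -- (ii) every interval meets exactly two others, one on each side
          (∀ I ∈ G, ∃ J ∈ G, ∃ K ∈ G, J ≠ I ∧ K ≠ I ∧ J ≠ K ∧
            J.1 < I.1 ∧ I.2 < K.2 ∧
            (Set.Icc J.1 J.2 ∩ Set.Icc I.1 I.2).Nonempty ∧
            (Set.Icc I.1 I.2 ∩ Set.Icc K.1 K.2).Nonempty ∧
            ∀ L ∈ G, L ≠ I → (Set.Icc L.1 L.2 ∩ Set.Icc I.1 I.2).Nonempty → L = J ∨ L = K) ∧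
          -- (ii) ratio of lengths of intersecting intervals lies in [1/2, 2]
          (∀ I ∈ G, ∀ J ∈ G, (Set.Icc I.1 I.2 ∩ Set.Icc J.1 J.2).Nonempty →
            J.2 - J.1 ≤ 2 * (I.2 - I.1)) ∧
          -- (iii) disjoint intervals are separated by at least |I|/4
          (∀ I ∈ G, ∀ J ∈ G, Set.Icc I.1 I.2 ∩ Set.Icc J.1 J.2 = ∅ →
            ∀ x ∈ Set.Icc I.1 I.2, ∀ y ∈ Set.Icc J.1 J.2, (I.2 - I.1) / 4 ≤ |x - y|) ∧
          -- (iv) the double interval lies inside U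
          (∀ I ∈ G,
            Set.Icc (I.1 - (I.2 - I.1) / 2) (I.2 + (I.2 - I.1) / 2) ⊆ {x : ℝ | 0 < h x}) ∧
          -- (v) |I|, inf_I h and sup_I h are 6-comparable
          (∀ I ∈ G,
            max (I.2 - I.1) (max (sInf (h '' Set.Icc I.1 I.2)) (sSup (h '' Set.Icc I.1 I.2))) ≤
              6 * min (I.2 - I.1)
                (min (sInf (h '' Set.Icc I.1 I.2)) (sSup (h '' Set.Icc I.1 I.2)))) ∧
          -- (vi) the subordinate smooth partition of unity
          (∀ I ∈ G, ContDiff ℝ (⊤ : ℕ∞) (ψ I) ∧ (∀ x, 0 ≤ ψ I x) ∧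
            Function.support (ψ I) ⊆ Set.Icc I.1 I.2 ∧
            ∀ (j : ℕ) (x : ℝ), |iteratedDeriv j (ψ I) x| ≤ Cψ j * (I.2 - I.1) ^ (-(j : ℤ))) ∧
          (∀ x : ℝ, (0 < h x → HasSum (fun I : G => ψ I x) 1) ∧
            (¬ 0 < h x → HasSum (fun I : G => ψ I x) 0)) := by
  refine ⟨fun j => 2 * smoothTransitionDerivBound j * 8 ^ j,
    fun j => by have := smoothTransitionDerivBound_pos j; positivity, fun h hL => ?_⟩
  refine ⟨range (interval h), bumpAt h, countable_range_interval hL,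
    forall_mem_range.2 fun p => (isDoublingChain hL p).left_lt_right p.2, iUnion_interval hL,
    forall_mem_range.2 (exists_neighbours hL),
    forall_mem_range.2 fun _ => forall_mem_range.2 fun _ => width_le_two_mul_of_inter_nonempty hL,
    forall_mem_range.2 fun _ => forall_mem_range.2 fun _ hpq _ hx _ hy =>
      width_div_four_le_abs_sub_of_mem_interval hL
        (mt (interval_inter_nonempty_iff hL).2 (not_nonempty_iff_eq_empty.2 hpq)) hx hy,
    forall_mem_range.2 fun p => Icc_double_orbit_subset hL (base_pos p) p.2,
    forall_mem_range.2 fun p => max_le_six_mul_min_orbit hL (base_pos p) p.2,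
    forall_mem_range.2 fun p => ?_,
    fun x => ⟨fun hx => by simpa [hx] using hasSum_bumpAt hL x,
      fun hx => by simpa [hx] using hasSum_bumpAt hL x⟩⟩
  have ht := isDoublingChain hL p
  rw [bumpAt_interval hL]
  exact ⟨contDiff_bump _ p.2, ht.bump_nonneg p.2, ht.support_bump_subset p.2,
    ht.abs_iteratedDeriv_bump_le p.2⟩
end
end

section
/- Suppose h : ℝ → ℝ has property (L), and let U = {x ∈ ℝ : h(x) > 0}. Then there exist a function g : U → ℝ which is C^∞ on U and absolute constants C_0 ≥ 1 and (C_j)_{j≥1}, all independent of h, such that C_0^{−1} h(x) ≤ g(x) ≤ C_0 h(x) for all x ∈ U and |g^{(j)}(x)| ≤ C_j (g(x))^{1−j} for all x ∈ U and every integer j ≥ 1. -/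
/-!
First `h` is replaced by its `1`-Lipschitz envelope `d x = inf_y (h y + |x - y|)`: property (L)
says that `h` at most halves within distance `h x / 4` of `x`, whence `h / 4 ≤ d ≤ h`.
Then `g = 1 / I` with `I x = ∫ ((x - y) ^ 2 + d y ^ 2)⁻¹ dy`. Writing the kernel as
`Im ((x - y - i d y)⁻¹) / d y` shows that its `j`-th derivative in `x` is
`O_j (|x - y - i d y| ^ (-(j + 2)))`, and `|x - y - i d y| ≳ max |x - y| (d x)` because `d` is
`1`-Lipschitz; integrating, `I ^ (j) = O_j (d ^ (-(j + 1)))`, while the window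
`|y - x| ≤ d x / 2` gives `I ≥ 1 / (3 d)`. Hence `g ≈ d ≈ h`, and induction on `g' = -I' g ^ 2`
with the Leibniz rule gives `|g ^ (j)| ≲_j d ^ (1 - j) ≈ g ^ (1 - j)`, with constants that do not
depend on `h`.
-/

open MeasureTheory Real Set
open scoped ENNReal NNReal Topology Classical

noncomputable section

open scoped Nat

theorem PropertyL.le_two_mul_of_abs_sub_le {h : ℝ → ℝ} (hL : PropertyL h) {x y : ℝ}
    (hxy : |x - y| ≤ h x / 4) : h x ≤ 2 * h y := by
  obtain ⟨hc, hnn, hdich⟩ := hL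
  have hJ : IsCompact (h '' Icc (min x y) (max x y)) := isCompact_Icc.image hc
  have hx : h x ≤ sSup (h '' Icc (min x y) (max x y)) :=
    le_csSup hJ.bddAbove ⟨x, ⟨min_le_left _ _, le_max_left _ _⟩, rfl⟩
  have hy : sInf (h '' Icc (min x y) (max x y)) ≤ h y :=
    csInf_le hJ.bddBelow ⟨y, ⟨min_le_right _ _, le_max_right _ _⟩, rfl⟩
  rcases hdich _ _ min_le_max with hsup | hsup
  · linarith
  · rw [max_sub_min_eq_abs'] at hsup
    linarith [hnn x]

/-- For `h ≥ 0`, the largest `1`-Lipschitz minorant of `h`. -/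
def lipschitzEnvelope (h : ℝ → ℝ) (x : ℝ) : ℝ := ⨅ y, h y + |x - y|

section lipschitzEnvelope

variable {h : ℝ → ℝ}

lemma bddBelow_range_add_abs_sub (hh : ∀ y, 0 ≤ h y) (x : ℝ) :
    BddBelow (range fun y => h y + |x - y|) :=
  ⟨0, by rintro _ ⟨y, rfl⟩; exact add_nonneg (hh y) (abs_nonneg _)⟩

lemma lipschitzEnvelope_le (hh : ∀ y, 0 ≤ h y) (x : ℝ) : lipschitzEnvelope h x ≤ h x := by
  simpa [lipschitzEnvelope] using ciInf_le (bddBelow_range_add_abs_sub hh x) x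

lemma lipschitzWith_lipschitzEnvelope (hh : ∀ y, 0 ≤ h y) :
    LipschitzWith 1 (lipschitzEnvelope h) := by
  refine LipschitzWith.of_le_add fun x x' => ?_
  rw [← sub_le_iff_le_add]
  refine le_ciInf fun y => ?_
  have := ciInf_le (bddBelow_range_add_abs_sub hh x) y
  have := abs_sub_le x x' y
  rw [Real.dist_eq]
  unfold lipschitzEnvelope
  linarith

lemma PropertyL.div_four_le_lipschitzEnvelope (hL : PropertyL h) (x : ℝ) :
    h x / 4 ≤ lipschitzEnvelope h x := by
  refine le_ciInf fun y => ?_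
  rcases le_total |x - y| (h x / 4) with hxy | hxy
  · linarith [hL.le_two_mul_of_abs_sub_le hxy, abs_nonneg (x - y), hL.2.1 y]
  · linarith [hL.2.1 y]

end lipschitzEnvelope

theorem Complex.abs_im_pow_succ_le (w : ℂ) (n : ℕ) :
    |(w ^ (n + 1)).im| ≤ (n + 1) * ‖w‖ ^ n * |w.im| := by
  induction n with
  | zero => simp
  | succ n ih =>
    rw [pow_succ, Complex.mul_im]
    have hre : |(w ^ (n + 1)).re| ≤ ‖w‖ ^ (n + 1) := by
      simpa only [norm_pow] using Complex.abs_re_le_norm (w ^ (n + 1))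
    calc |(w ^ (n + 1)).re * w.im + (w ^ (n + 1)).im * w.re|
        ≤ |(w ^ (n + 1)).re| * |w.im| + |(w ^ (n + 1)).im| * |w.re| := by
          rw [← abs_mul, ← abs_mul]; exact abs_add_le _ _
      _ ≤ ‖w‖ ^ (n + 1) * |w.im| + (n + 1) * ‖w‖ ^ n * |w.im| * ‖w‖ := by
          gcongr
          exact Complex.abs_re_le_norm w
      _ = (↑(n + 1) + 1) * ‖w‖ ^ (n + 1) * |w.im| := by push_cast; ring

/-- The `j`-th derivative in `x` of `((x - y) ^ 2 + d y ^ 2)⁻¹ = Im ((x - y - i d y)⁻¹) / d y`.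
Where `d y = 0` it is `0` (as `a / 0 = 0`), which only removes the zero set of `d` from the
integrals below. -/
def cauchyKernel (d : ℝ → ℝ) (j : ℕ) (x y : ℝ) : ℝ :=
  (-1) ^ j * j ! * ((((x - y : ℝ) : ℂ) - d y * Complex.I)⁻¹ ^ (j + 1)).im / d y

section cauchyKernel

variable (d : ℝ → ℝ)

lemma cauchyKernel_zero_of_ne {y : ℝ} (hy : d y ≠ 0) (x : ℝ) :
    cauchyKernel d 0 x y = ((x - y) ^ 2 + d y ^ 2)⁻¹ := by
  simp [cauchyKernel, Complex.inv_im, Complex.normSq_apply, ← sq, div_div_cancel_left' hy]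

lemma cauchyKernel_zero_nonneg (x y : ℝ) : 0 ≤ cauchyKernel d 0 x y := by
  rcases eq_or_ne (d y) 0 with hy | hy
  · simp [cauchyKernel, hy]
  · rw [cauchyKernel_zero_of_ne d hy]
    positivity

lemma hasDerivAt_cauchyKernel (j : ℕ) (x y : ℝ) :
    HasDerivAt (fun x => cauchyKernel d j x y) (cauchyKernel d (j + 1) x y) x := by
  rcases eq_or_ne (d y) 0 with hy | hy
  · simpa [cauchyKernel, hy] using hasDerivAt_const x (0 : ℝ)
  set a : ℂ := y + d y * Complex.I
  have ha : ∀ t : ℝ, ((t - y : ℝ) : ℂ) - d y * Complex.I = t - a := fun t => by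
    simp only [a]; push_cast; ring
  have hxa : (x : ℂ) - a ≠ 0 := by
    intro h0
    simpa [a, hy] using congrArg Complex.im h0
  have hw : HasDerivAt (fun z : ℂ => (z - a)⁻¹ ^ (j + 1))
      (-((j : ℂ) + 1) * ((x : ℂ) - a)⁻¹ ^ (j + 2)) x := by
    refine ((((hasDerivAt_id' (x : ℂ)).sub_const a).fun_inv hxa).fun_pow (j + 1)).congr_deriv ?_
    rw [Nat.add_sub_cancel, div_eq_mul_inv, ← inv_pow]
    push_cast
    ring
  have him : HasDerivAt (fun t : ℝ => (((t : ℂ) - a)⁻¹ ^ (j + 1)).im)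
      (-((j : ℂ) + 1) * ((x : ℂ) - a)⁻¹ ^ (j + 2)).im x :=
    Complex.imCLM.hasFDerivAt.comp_hasDerivAt x hw.comp_ofReal
  simp only [cauchyKernel, ha]
  refine ((him.const_mul ((-1 : ℝ) ^ j * j !)).div_const (d y)).congr_deriv ?_
  rw [show -((j : ℂ) + 1) = ((-((j : ℝ) + 1) : ℝ) : ℂ) by push_cast; ring,
    Complex.im_ofReal_mul, Nat.factorial_succ]
  push_cast
  ring

lemma abs_cauchyKernel_le (j : ℕ) (x y : ℝ) :
    |cauchyKernel d j x y| ≤ (j + 1)! / ‖((x - y : ℝ) : ℂ) - d y * Complex.I‖ ^ (j + 2) := by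
  rcases eq_or_ne (d y) 0 with hy | hy
  · simp only [cauchyKernel, hy, div_zero, abs_zero]
    positivity
  set z : ℂ := ((x - y : ℝ) : ℂ) - d y * Complex.I
  have hz : 0 < ‖z‖ := norm_pos_iff.mpr fun h0 => hy (by simpa [z] using congrArg Complex.im h0)
  have him : |z⁻¹.im| = |d y| / ‖z‖ ^ 2 := by
    rw [Complex.inv_im, Complex.normSq_eq_norm_sq, abs_div, abs_neg,
      abs_of_pos (by positivity : 0 < ‖z‖ ^ 2)]
    simp [z]
  calc |cauchyKernel d j x y| = j ! * |(z⁻¹ ^ (j + 1)).im| / |d y| := by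
        simp [cauchyKernel, z, abs_mul, abs_div]
    _ ≤ j ! * ((j + 1) * ‖z⁻¹‖ ^ j * |z⁻¹.im|) / |d y| := by
        gcongr
        exact Complex.abs_im_pow_succ_le _ j
    _ = (j + 1)! / ‖z‖ ^ (j + 2) := by
        rw [him, norm_inv, inv_pow, Nat.factorial_succ]
        push_cast
        field_simp
        ring

lemma measurable_cauchyKernel (hd : Continuous d) (j : ℕ) (x : ℝ) :
    Measurable (cauchyKernel d j x) := by
  unfold cauchyKernel
  fun_prop

end cauchyKernel

lemma inv_pow_add_two_le {c N t : ℝ} (hc : 0 < c) (hcN : c ≤ N) (htN : |t| ≤ 2 * N) (j : ℕ) :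
    (N ^ (j + 2))⁻¹ ≤ 8 / c ^ j * (t ^ 2 + c ^ 2)⁻¹ := by
  have ht : t ^ 2 ≤ 4 * N ^ 2 := by nlinarith [sq_abs t, abs_nonneg t]
  have hcN2 : c ^ 2 ≤ N ^ 2 := by gcongr
  have hcj : c ^ j ≤ N ^ j := by gcongr
  calc (N ^ (j + 2))⁻¹ ≤ (c ^ j * (t ^ 2 + c ^ 2) / 8)⁻¹ := by
        gcongr
        rw [pow_add]
        nlinarith [pow_pos hc j]
    _ = 8 / c ^ j * (t ^ 2 + c ^ 2)⁻¹ := by field_simp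

lemma integrable_inv_sub_sq_add_sq (x₀ : ℝ) {c : ℝ} (hc : c ≠ 0) :
    Integrable fun y => ((x₀ - y) ^ 2 + c ^ 2)⁻¹ := by
  have h := ((integrable_inv_one_add_sq.comp_div hc).const_mul (c ^ 2)⁻¹).comp_sub_left x₀
  refine h.congr (ae_of_all _ fun y => ?_)
  field_simp
  ring

lemma integral_inv_sub_sq_add_sq (x₀ : ℝ) {c : ℝ} (hc : 0 < c) :
    ∫ y, ((x₀ - y) ^ 2 + c ^ 2)⁻¹ = π / c := by
  have h : ∀ y : ℝ, (y ^ 2 + c ^ 2)⁻¹ = (c ^ 2)⁻¹ * (1 + (y / c) ^ 2)⁻¹ := fun y => by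
    field_simp
    ring
  rw [integral_sub_left_eq_self (fun y => (y ^ 2 + c ^ 2)⁻¹), funext h, integral_const_mul,
    Measure.integral_comp_div (fun y => (1 + y ^ 2)⁻¹), integral_univ_inv_one_add_sq,
    abs_of_pos hc, smul_eq_mul]
  field_simp

section LipschitzWeight

variable {d : ℝ → ℝ}

lemma LipschitzWith.le_norm_sub_mul_I (hd : LipschitzWith 1 d) {x x₀ : ℝ}
    (hx : |x - x₀| ≤ d x₀ / 4) (y : ℝ) :
    d x₀ / 4 ≤ ‖((x - y : ℝ) : ℂ) - d y * Complex.I‖ ∧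
      |x₀ - y| ≤ 2 * ‖((x - y : ℝ) : ℂ) - d y * Complex.I‖ := by
  set z : ℂ := ((x - y : ℝ) : ℂ) - d y * Complex.I
  have hre : |x - y| ≤ ‖z‖ := by simpa [z] using Complex.abs_re_le_norm z
  have him : |d y| ≤ ‖z‖ := by simpa [z] using Complex.abs_im_le_norm z
  have hlip : d x₀ ≤ d y + |x₀ - y| := by simpa [Real.dist_eq] using hd.le_add_mul x₀ y
  have htri : |x₀ - y| ≤ |x - x₀| + |x - y| := by
    simpa [abs_sub_comm x x₀] using abs_sub_le x₀ x y
  have hdy := le_abs_self (d y)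
  have hδ := abs_nonneg (x - x₀)
  rcases le_total |x₀ - y| (d x₀ / 2) with hnear | hfar
  · constructor <;> linarith
  · constructor <;> linarith

lemma abs_cauchyKernel_le_of_lipschitzWith (hd : LipschitzWith 1 d) {x x₀ : ℝ}
    (hx₀ : 0 < d x₀) (hx : |x - x₀| ≤ d x₀ / 4) (j : ℕ) (y : ℝ) :
    |cauchyKernel d j x y| ≤
      8 * (j + 1)! / (d x₀ / 4) ^ j * ((x₀ - y) ^ 2 + (d x₀ / 4) ^ 2)⁻¹ := by
  obtain ⟨hc, ht⟩ := hd.le_norm_sub_mul_I hx y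
  calc |cauchyKernel d j x y|
      ≤ (j + 1)! * (‖((x - y : ℝ) : ℂ) - d y * Complex.I‖ ^ (j + 2))⁻¹ :=
        (abs_cauchyKernel_le d j x y).trans_eq (div_eq_mul_inv _ _)
    _ ≤ (j + 1)! * (8 / (d x₀ / 4) ^ j * ((x₀ - y) ^ 2 + (d x₀ / 4) ^ 2)⁻¹) := by
        gcongr
        exact inv_pow_add_two_le (by positivity) hc ht j
    _ = _ := by ring

end LipschitzWeight

def cauchyKernelIntegral (d : ℝ → ℝ) (j : ℕ) (x : ℝ) : ℝ := ∫ y, cauchyKernel d j x y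

def cauchyRegularization (d : ℝ → ℝ) (x : ℝ) : ℝ := (cauchyKernelIntegral d 0 x)⁻¹

section cauchyKernelIntegral

variable {d : ℝ → ℝ} (hd : LipschitzWith 1 d)
include hd

lemma integrable_cauchyKernel {x : ℝ} (hx : 0 < d x) (j : ℕ) :
    Integrable (cauchyKernel d j x) :=
  ((integrable_inv_sub_sq_add_sq x (by positivity : d x / 4 ≠ 0)).const_mul _).mono'
    (measurable_cauchyKernel d hd.continuous j x).aestronglyMeasurable
    (ae_of_all _ fun y => abs_cauchyKernel_le_of_lipschitzWith hd hx
      (by rw [sub_self, abs_zero]; positivity) j y)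

lemma abs_cauchyKernelIntegral_mul_pow_le {x : ℝ} (hx : 0 < d x) (j : ℕ) :
    |cauchyKernelIntegral d j x| * d x ^ (j + 1) ≤ 8 * π * (j + 1)! * 4 ^ (j + 1) := by
  have hc : 0 < d x / 4 := by positivity
  have hint := integrable_inv_sub_sq_add_sq x hc.ne'
  calc |cauchyKernelIntegral d j x| * d x ^ (j + 1)
      ≤ (∫ y, 8 * (j + 1)! / (d x / 4) ^ j * ((x - y) ^ 2 + (d x / 4) ^ 2)⁻¹) * d x ^ (j + 1) := by
        gcongr
        refine abs_integral_le_integral_abs.trans <|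
          integral_mono (integrable_cauchyKernel hd hx j).abs (hint.const_mul _) fun y => ?_
        exact abs_cauchyKernel_le_of_lipschitzWith hd hx
          (by rw [sub_self, abs_zero]; positivity) j y
    _ = 8 * π * (j + 1)! * 4 ^ (j + 1) := by
        rw [integral_const_mul, integral_inv_sub_sq_add_sq x hc, div_pow]
        field_simp
        ring

lemma hasDerivAt_cauchyKernelIntegral {x₀ : ℝ} (hx₀ : 0 < d x₀) (j : ℕ) :
    HasDerivAt (cauchyKernelIntegral d j) (cauchyKernelIntegral d (j + 1) x₀) x₀ :=
  (hasDerivAt_integral_of_dominated_loc_of_deriv_le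
    (Metric.ball_mem_nhds x₀ (by positivity : 0 < d x₀ / 4))
    (Filter.Eventually.of_forall fun x =>
      (measurable_cauchyKernel d hd.continuous j x).aestronglyMeasurable)
    (integrable_cauchyKernel hd hx₀ j)
    (measurable_cauchyKernel d hd.continuous (j + 1) x₀).aestronglyMeasurable
    (ae_of_all _ fun y x hx => abs_cauchyKernel_le_of_lipschitzWith hd hx₀
      (by rw [Metric.mem_ball, Real.dist_eq] at hx; exact hx.le) (j + 1) y)
    ((integrable_inv_sub_sq_add_sq x₀ (by positivity : d x₀ / 4 ≠ 0)).const_mul _)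
    (ae_of_all _ fun y x _ => hasDerivAt_cauchyKernel d j x y)).2

lemma iteratedDerivWithin_cauchyKernelIntegral (m : ℕ) :
    ∀ j, ∀ x, 0 < d x →
      iteratedDerivWithin m (cauchyKernelIntegral d j) {x | 0 < d x} x =
        cauchyKernelIntegral d (j + m) x := by
  induction m with
  | zero => simp
  | succ m ih =>
    intro j x hx
    have hderiv : EqOn (derivWithin (cauchyKernelIntegral d j) {x | 0 < d x})
        (cauchyKernelIntegral d (j + 1)) {x | 0 < d x} := fun y hy =>
      ((hasDerivAt_cauchyKernelIntegral hd hy j).hasDerivWithinAt).derivWithin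
        ((isOpen_lt continuous_const hd.continuous).uniqueDiffWithinAt hy)
    rw [iteratedDerivWithin_succ', iteratedDerivWithin_congr hderiv hx, ih _ x hx,
      add_assoc, add_comm 1]

lemma contDiffOn_cauchyKernelIntegral (j : ℕ) :
    ContDiffOn ℝ (⊤ : ℕ∞) (cauchyKernelIntegral d j) {x | 0 < d x} :=
  contDiffOn_of_differentiableOn_deriv fun m _ x hx =>
    (hasDerivAt_cauchyKernelIntegral hd hx (j + m)).differentiableAt.differentiableWithinAt.congr
      (fun y hy => iteratedDerivWithin_cauchyKernelIntegral hd m j y hy)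
      (iteratedDerivWithin_cauchyKernelIntegral hd m j x hx)

lemma inv_mul_le_cauchyKernelIntegral_zero {x : ℝ} (hx : 0 < d x) :
    (3 * d x)⁻¹ ≤ cauchyKernelIntegral d 0 x := by
  set s := Icc (x - d x / 2) (x + d x / 2)
  have hK : ∀ y ∈ s, (3 * d x ^ 2)⁻¹ ≤ cauchyKernel d 0 x y := by
    rintro y ⟨hy₁, hy₂⟩
    have hxy : |x - y| ≤ d x / 2 := abs_le.mpr ⟨by linarith, by linarith⟩
    have hlip := abs_sub_le_iff.mp (by simpa [Real.dist_eq] using hd.dist_le_mul x y)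
    have hdy : 0 < d y := by linarith
    rw [cauchyKernel_zero_of_ne d hdy.ne']
    gcongr
    nlinarith [sq_abs (x - y), abs_nonneg (x - y)]
  have hint := integrable_cauchyKernel hd hx 0
  have hs : volume.real s = d x := by rw [Real.volume_real_Icc_of_le (by linarith)]; ring
  calc (3 * d x)⁻¹ = (3 * d x ^ 2)⁻¹ * volume.real s := by rw [hs]; field_simp
    _ ≤ ∫ y in s, cauchyKernel d 0 x y :=
      setIntegral_ge_of_const_le_real measurableSet_Icc measure_Icc_lt_top.ne hK
        hint.integrableOn
    _ ≤ cauchyKernelIntegral d 0 x :=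
      setIntegral_le_integral hint (ae_of_all _ (cauchyKernel_zero_nonneg d x))

lemma cauchyKernelIntegral_zero_pos {x : ℝ} (hx : 0 < d x) : 0 < cauchyKernelIntegral d 0 x :=
  (inv_pos.mpr (by positivity)).trans_le (inv_mul_le_cauchyKernelIntegral_zero hd hx)

lemma contDiffOn_cauchyRegularization :
    ContDiffOn ℝ (⊤ : ℕ∞) (cauchyRegularization d) {x | 0 < d x} :=
  (contDiffOn_cauchyKernelIntegral hd 0).inv fun _ hx => (cauchyKernelIntegral_zero_pos hd hx).ne'

lemma cauchyRegularization_mem_Icc {x : ℝ} (hx : 0 < d x) :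
    cauchyRegularization d x ∈ Icc (d x / (32 * π)) (3 * d x) := by
  have hpos := cauchyKernelIntegral_zero_pos hd hx
  have hup := abs_cauchyKernelIntegral_mul_pow_le hd hx 0
  rw [abs_of_pos hpos] at hup
  refine ⟨?_, inv_le_of_inv_le₀ (by positivity) (inv_mul_le_cauchyKernelIntegral_zero hd hx)⟩
  rw [cauchyRegularization, div_le_iff₀ (by positivity), ← div_eq_inv_mul, le_div_iff₀ hpos]
  norm_num at hup
  linarith

end cauchyKernelIntegral

theorem norm_iteratedDerivWithin_mul_mul_pow_le {𝕜 𝔸 : Type*} [NontriviallyNormedField 𝕜]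
    [NormedRing 𝔸] [NormedAlgebra 𝕜 𝔸] {f g : 𝕜 → 𝔸} {s : Set 𝕜} {x : 𝕜} {n : ℕ}
    (hs : UniqueDiffOn 𝕜 s) (hx : x ∈ s) (hf : ContDiffOn 𝕜 n f s) (hg : ContDiffOn 𝕜 n g s)
    {r u v : ℝ} {a b : ℕ → ℝ} (hr : 0 ≤ r)
    (hfa : ∀ i ≤ n, ‖iteratedDerivWithin i f s x‖ * r ^ i ≤ a i * u)
    (hgb : ∀ i ≤ n, ‖iteratedDerivWithin i g s x‖ * r ^ i ≤ b i * v) :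
    ‖iteratedDerivWithin n (fun y => f y * g y) s x‖ * r ^ n ≤
      (∑ i ∈ Finset.range (n + 1), n.choose i * (a i * b (n - i))) * (u * v) := by
  simp only [← norm_iteratedFDerivWithin_eq_norm_iteratedDerivWithin] at hfa hgb ⊢
  calc ‖iteratedFDerivWithin 𝕜 n (fun y => f y * g y) s x‖ * r ^ n
      ≤ (∑ i ∈ Finset.range (n + 1), n.choose i * ‖iteratedFDerivWithin 𝕜 i f s x‖ *
          ‖iteratedFDerivWithin 𝕜 (n - i) g s x‖) * r ^ n := by
        gcongr
        exact norm_iteratedFDerivWithin_mul_le hf hg hs hx le_rfl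
    _ = ∑ i ∈ Finset.range (n + 1), n.choose i * (‖iteratedFDerivWithin 𝕜 i f s x‖ * r ^ i) *
          (‖iteratedFDerivWithin 𝕜 (n - i) g s x‖ * r ^ (n - i)) := by
        rw [Finset.sum_mul]
        refine Finset.sum_congr rfl fun i hi => ?_
        rw [← pow_mul_pow_sub r (Finset.mem_range_succ_iff.mp hi)]
        ring
    _ ≤ ∑ i ∈ Finset.range (n + 1), n.choose i * (a i * u) * (b (n - i) * v) := by
        refine Finset.sum_le_sum fun i hi => ?_
        have hi := Finset.mem_range_succ_iff.mp hi
        exact mul_le_mul (mul_le_mul_of_nonneg_left (hfa i hi) (by positivity))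
          (hgb (n - i) (Nat.sub_le n i)) (by positivity)
          (mul_nonneg (by positivity) ((by positivity : (0 : ℝ) ≤ _).trans (hfa i hi)))
    _ = _ := by
        rw [Finset.sum_mul]
        exact Finset.sum_congr rfl fun i _ => by ring

theorem exists_abs_iteratedDerivWithin_inv_mul_pow_le (a : ℝ) (B : ℕ → ℝ) (n : ℕ) :
    ∃ A : ℝ, ∀ (s : Set ℝ) (f w : ℝ → ℝ), UniqueDiffOn ℝ s → ContDiffOn ℝ (⊤ : ℕ∞) f s →
      (∀ x ∈ s, 0 < w x) → (∀ x ∈ s, f x ≠ 0) → (∀ x ∈ s, |(f x)⁻¹| ≤ a * w x) →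
      (∀ i, ∀ x ∈ s, |iteratedDerivWithin i f s x| * w x ^ (i + 1) ≤ B i) →
      ∀ m ≤ n, ∀ x ∈ s, |iteratedDerivWithin m (fun y => (f y)⁻¹) s x| * w x ^ m ≤ A * w x := by
  induction n with
  | zero =>
    refine ⟨a, fun s f w _ _ _ _ hfa _ m hm x hx => ?_⟩
    obtain rfl := Nat.le_zero.mp hm
    simpa using hfa x hx
  | succ n ih =>
    obtain ⟨A, hA⟩ := ih
    set K := ∑ i ∈ Finset.range (n + 1), n.choose i *
      (B (i + 1) * ∑ l ∈ Finset.range (n - i + 1), (n - i).choose l * (A * A))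
    refine ⟨max A K, fun s f w hs hf hw hf0 hfa hfB m hm x hx => ?_⟩
    rcases Nat.le_succ_iff.mp hm with hm | rfl
    · exact (hA s f w hs hf hw hf0 hfa hfB m hm x hx).trans
        (mul_le_mul_of_nonneg_right (le_max_left A K) (hw x hx).le)
    set g := fun y => (f y)⁻¹
    -- `g' = -f' g ^ 2`, so Leibniz's rule bounds `g ^ (n + 1)` by the derivatives of order `≤ n`.
    have hg : ContDiffOn ℝ (⊤ : ℕ∞) g s := hf.inv hf0
    have hderiv : EqOn (derivWithin g s) (fun y => -(derivWithin f s y * (g y * g y))) s :=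
      fun y hy => by
        rw [derivWithin_fun_inv' (hf.differentiableOn (by simp) y hy) (hf0 y hy), neg_div,
          div_eq_mul_inv, ← inv_pow, sq]
    have hf' : ContDiffOn ℝ n (derivWithin f s) s := hf.derivWithin hs (by exact_mod_cast le_top)
    have hgg : ContDiffOn ℝ n (fun y => g y * g y) s :=
      (hg.of_le (by exact_mod_cast le_top)).mul (hg.of_le (by exact_mod_cast le_top))
    have hf'B : ∀ i ≤ n, ‖iteratedDerivWithin i (derivWithin f s) s x‖ * w x ^ i ≤
        B (i + 1) * (w x ^ 2)⁻¹ := fun i _ => by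
      rw [← iteratedDerivWithin_succ', Real.norm_eq_abs, le_mul_inv_iff₀ (by simp [hw x hx]),
        mul_assoc, ← pow_add]
      exact hfB (i + 1) x hx
    have hggB : ∀ i ≤ n, ‖iteratedDerivWithin i (fun y => g y * g y) s x‖ * w x ^ i ≤
        (∑ l ∈ Finset.range (i + 1), i.choose l * (A * A)) * (w x * w x) := fun i hi => by
      have hgA : ∀ l ≤ i, ‖iteratedDerivWithin l g s x‖ * w x ^ l ≤ A * w x := fun l hl =>
        hA s f w hs hf hw hf0 hfa hfB l (hl.trans hi) x hx
      exact norm_iteratedDerivWithin_mul_mul_pow_le hs hx (hg.of_le (by exact_mod_cast le_top))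
        (hg.of_le (by exact_mod_cast le_top)) (hw x hx).le hgA hgA
    have hprod := norm_iteratedDerivWithin_mul_mul_pow_le hs hx hf' hgg (hw x hx).le hf'B hggB
    rw [iteratedDerivWithin_succ', iteratedDerivWithin_congr hderiv hx,
      iteratedDerivWithin_fun_neg, abs_neg, ← Real.norm_eq_abs, pow_succ, ← mul_assoc]
    calc _ ≤ K * ((w x ^ 2)⁻¹ * (w x * w x)) * w x := by gcongr; exact (hw x hx).le
      _ = K * w x := by field_simp
      _ ≤ max A K * w x := by gcongr; exacts [(hw x hx).le, le_max_right A K]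

lemma le_mul_rpow_one_sub_of_mul_pow_le {D A w g c : ℝ} {j : ℕ} (hj : 1 ≤ j) (hD : 0 ≤ D)
    (hg : 0 < g) (hgw : g ≤ c * w) (hw : 0 < w) (h : D * w ^ j ≤ A * w) :
    D ≤ A * c ^ (j - 1) * g ^ (1 - (j : ℝ)) := by
  obtain ⟨k, rfl⟩ := Nat.exists_eq_add_of_le' hj
  have hc : 0 < c := pos_of_mul_pos_left (hg.trans_le hgw) hw.le
  have hDw : D * w ^ k ≤ A := by
    rw [pow_succ, ← mul_assoc] at h
    exact le_of_mul_le_mul_right h hw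
  have hgk : g ^ k ≤ c ^ k * w ^ k := by rw [← mul_pow]; gcongr
  rw [show 1 - ((k + 1 : ℕ) : ℝ) = -(k : ℝ) by push_cast; ring, rpow_neg hg.le, rpow_natCast,
    Nat.add_sub_cancel, ← div_eq_mul_inv, le_div_iff₀ (by positivity)]
  calc D * g ^ k ≤ D * (c ^ k * w ^ k) := by gcongr
    _ = D * w ^ k * c ^ k := by ring
    _ ≤ A * c ^ k := by gcongr

theorem exists_abs_iteratedDerivWithin_cauchyRegularization_le :
    ∃ C : ℕ → ℝ, ∀ d : ℝ → ℝ, LipschitzWith 1 d → ∀ j, 1 ≤ j → ∀ x, 0 < d x →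
      |iteratedDerivWithin j (cauchyRegularization d) {x | 0 < d x} x| ≤
        C j * cauchyRegularization d x ^ (1 - (j : ℝ)) := by
  choose A hA using
    exists_abs_iteratedDerivWithin_inv_mul_pow_le 3 fun j => 8 * π * (j + 1)! * 4 ^ (j + 1)
  refine ⟨fun j => A j * 3 ^ (j - 1), fun d hd j hj x hx => ?_⟩
  have hbound := hA j _ _ _ (isOpen_lt continuous_const hd.continuous).uniqueDiffOn
    (contDiffOn_cauchyKernelIntegral hd 0) (fun _ hx => hx)
    (fun _ hx => (cauchyKernelIntegral_zero_pos hd hx).ne')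
    (fun x hx => (abs_of_pos (inv_pos.mpr (cauchyKernelIntegral_zero_pos hd hx))).trans_le
      (cauchyRegularization_mem_Icc hd hx).2)
    (fun i x hx => by
      simpa [iteratedDerivWithin_cauchyKernelIntegral hd i 0 x hx] using
        abs_cauchyKernelIntegral_mul_pow_le hd hx i) j le_rfl x hx
  exact le_mul_rpow_one_sub_of_mul_pow_le hj (abs_nonneg _)
    (inv_pos.mpr (cauchyKernelIntegral_zero_pos hd hx)) (cauchyRegularization_mem_Icc hd hx).2 hx
    hbound

/-- **Proposition 2.2.** If `h` has property (L), there is a function `g`, smooth on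
`U = {h > 0}`, with `g ≈ h` on `U` and `|g^{(j)}| ≲_j g^{1−j}` on `U`, with all the
comparability constants universal (independent of `h`). -/
theorem smooth_comparable_of_propertyL :
    ∃ C₀ : ℝ, 1 ≤ C₀ ∧ ∃ C : ℕ → ℝ,
      ∀ h : ℝ → ℝ, PropertyL h →
        ∃ g : ℝ → ℝ,
          ContDiffOn ℝ (⊤ : ℕ∞) g {x : ℝ | 0 < h x} ∧
          (∀ x ∈ {x : ℝ | 0 < h x}, h x / C₀ ≤ g x ∧ g x ≤ C₀ * h x) ∧
          ∀ j : ℕ, 1 ≤ j → ∀ x ∈ {x : ℝ | 0 < h x},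
            |iteratedDerivWithin j g {x : ℝ | 0 < h x} x| ≤ C j * g x ^ (1 - (j : ℝ)) := by
  obtain ⟨C, hC⟩ := exists_abs_iteratedDerivWithin_cauchyRegularization_le
  refine ⟨128 * π, by nlinarith [pi_gt_three], C, fun h hL => ?_⟩
  set d := lipschitzEnvelope h
  have hd : LipschitzWith 1 d := lipschitzWith_lipschitzEnvelope hL.2.1
  have hUV : {x | 0 < h x} ⊆ {x | 0 < d x} := fun x hx =>
    (div_pos hx four_pos).trans_le (hL.div_four_le_lipschitzEnvelope x)
  refine ⟨cauchyRegularization d, (contDiffOn_cauchyRegularization hd).mono hUV,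
    fun x hx => ?_, fun j hj x hx => ?_⟩
  · obtain ⟨hlow, hup⟩ := cauchyRegularization_mem_Icc hd (hUV hx)
    have h₁ := hL.div_four_le_lipschitzEnvelope x
    have h₂ := lipschitzEnvelope_le hL.2.1 x
    constructor
    · calc h x / (128 * π) = h x / 4 / (32 * π) := by ring
        _ ≤ d x / (32 * π) := by gcongr
        _ ≤ _ := hlow
    · nlinarith [pi_gt_three, (show 0 < h x from hx).le]
  · rw [iteratedDerivWithin_congr_right_of_isOpen _ j (isOpen_lt continuous_const hL.1)
      (isOpen_lt continuous_const hd.continuous) ⟨hx, hUV hx⟩]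
    exact hC d hd j hj x (hUV hx)
end
end

section
/- Suppose h : ℝ → ℝ has property (L), let U = {x ∈ ℝ : h(x) > 0}, and let I ⊆ U be a closed bounded interval satisfying max{|I|, inf_{x∈I} h(x), sup_{x∈I} h(x)} ≤ 6 min{|I|, inf_{x∈I} h(x), sup_{x∈I} h(x)}. Let g : U → ℂ satisfy at least one of: (a) g is C¹ on U and h(x)|g′(x)| ≤ K|g(x)| for all x ∈ U; or (b) for some α ∈ [0,1] and constants c > 0, K ≥ 0, one has |g(x) − g(y)| ≤ K |x−y|^α |g(x)| / (h(x))^α whenever x, y ∈ U and |x−y| ≤ c h(x). Then sup_{x∈I} |g(x)| ≤ C inf_{x∈I} |g(x)|, where C depends only on K in case (a), and only on K, α, c in case (b). -/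
open MeasureTheory Real Set
open scoped ENNReal NNReal Topology Classical

noncomputable section

/-!
On `I = [a, b]` the comparability hypothesis forces `|I| ≤ 6 h` pointwise, so `g` can only change
by a bounded factor over `I`. In case (a), `‖g'‖ ≤ (6K / |I|) ‖g‖` on `I` and Grönwall's
inequality (run in both directions) gives the factor `exp (6K)`. In case (b), points at distance
at most `min c 1 · |I| / 6` satisfy `‖g q‖ ≤ (1 + K) ‖g p‖`, and `I` is crossed by
`⌈6 / min c 1⌉` such steps.
-/

theorem csSup_image_le_mul_csInf_image {α : Type*} {f : α → ℝ} {s : Set α} {C : ℝ}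
    (hs : s.Nonempty) (hC : 0 < C) (hf : ∀ x ∈ s, ∀ y ∈ s, f y ≤ C * f x) :
    sSup (f '' s) ≤ C * sInf (f '' s) := by
  refine csSup_le (hs.image f) ?_
  rintro _ ⟨y, hy, rfl⟩
  rw [← div_le_iff₀' hC]
  refine le_csInf (hs.image f) ?_
  rintro _ ⟨x, hx, rfl⟩
  rw [div_le_iff₀' hC]
  exact hf x hx y hy

theorem sub_le_six_mul_and_le_six_mul_sub {h : ℝ → ℝ} {a b : ℝ}
    (hh : ContinuousOn h (Icc a b))
    (hmm : max (b - a) (max (sInf (h '' Icc a b)) (sSup (h '' Icc a b))) ≤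
      6 * min (b - a) (min (sInf (h '' Icc a b)) (sSup (h '' Icc a b)))) :
    ∀ t ∈ Icc a b, b - a ≤ 6 * h t ∧ h t ≤ 6 * (b - a) := by
  intro t ht
  set S := h '' Icc a b
  have hbdd : IsCompact S := isCompact_Icc.image_of_continuousOn hh
  have hinf : sInf S ≤ h t := csInf_le hbdd.bddBelow ⟨t, ht, rfl⟩
  have hsup : h t ≤ sSup S := le_csSup hbdd.bddAbove ⟨t, ht, rfl⟩
  have hmin : min (b - a) (min (sInf S) (sSup S)) ≤ sInf S :=
    (min_le_right _ _).trans (min_le_left _ _)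
  have hmax : sSup S ≤ max (b - a) (max (sInf S) (sSup S)) :=
    (le_max_right _ _).trans (le_max_right _ _)
  constructor
  · linarith [le_max_left (b - a) (max (sInf S) (sSup S))]
  · linarith [min_le_left (b - a) (min (sInf S) (sSup S))]

section Gronwall

variable {E : Type*} [NormedAddCommGroup E] [NormedSpace ℝ E] {g g' : ℝ → E} {M : ℝ}

theorem norm_le_exp_mul_norm_of_norm_deriv_le {x y : ℝ} (hxy : x ≤ y)
    (hg : ∀ t ∈ Icc x y, HasDerivAt g (g' t) t) (hb : ∀ t ∈ Icc x y, ‖g' t‖ ≤ M * ‖g t‖) :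
    ‖g y‖ ≤ exp (M * (y - x)) * ‖g x‖ := by
  have := norm_le_gronwallBound_of_norm_deriv_right_le (ε := 0) (δ := ‖g x‖)
    (fun t ht => (hg t ht).continuousAt.continuousWithinAt)
    (fun t ht => (hg t (Ico_subset_Icc_self ht)).hasDerivWithinAt) le_rfl
    (fun t ht => by simpa using hb t (Ico_subset_Icc_self ht)) y (right_mem_Icc.2 hxy)
  rwa [gronwallBound_ε0, mul_comm] at this

theorem norm_le_exp_mul_norm_of_norm_deriv_le' {x y : ℝ} (hxy : x ≤ y)
    (hg : ∀ t ∈ Icc x y, HasDerivAt g (g' t) t) (hb : ∀ t ∈ Icc x y, ‖g' t‖ ≤ M * ‖g t‖) :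
    ‖g x‖ ≤ exp (M * (y - x)) * ‖g y‖ := by
  have hneg : ∀ t ∈ Icc (-y) (-x), -t ∈ Icc x y := fun t ht =>
    ⟨by linarith [ht.2], by linarith [ht.1]⟩
  have := norm_le_exp_mul_norm_of_norm_deriv_le (g := fun t => g (-t)) (g' := fun t => -g' (-t))
    (M := M) (neg_le_neg hxy)
    (fun t ht => by
      simpa [Function.comp_def] using (hg (-t) (hneg t ht)).scomp t (hasDerivAt_neg t))
    (fun t ht => by simpa using hb (-t) (hneg t ht))
  simpa [sub_eq_add_neg, add_comm] using this

theorem norm_le_exp_mul_norm_of_norm_deriv_le_Icc {a b : ℝ} (hM : 0 ≤ M)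
    (hg : ∀ t ∈ Icc a b, HasDerivAt g (g' t) t) (hb : ∀ t ∈ Icc a b, ‖g' t‖ ≤ M * ‖g t‖) :
    ∀ x ∈ Icc a b, ∀ y ∈ Icc a b, ‖g y‖ ≤ exp (M * (b - a)) * ‖g x‖ := by
  intro x hx y hy
  have hexp : ∀ u ∈ Icc a b, ∀ v ∈ Icc a b, exp (M * (v - u)) ≤ exp (M * (b - a)) :=
    fun u hu v hv => exp_le_exp.2 (mul_le_mul_of_nonneg_left (by linarith [hu.1, hv.2]) hM)
  rcases le_total x y with hxy | hyx
  · have hsub : Icc x y ⊆ Icc a b := Icc_subset_Icc hx.1 hy.2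
    calc ‖g y‖ ≤ exp (M * (y - x)) * ‖g x‖ :=
          norm_le_exp_mul_norm_of_norm_deriv_le hxy (fun t ht => hg t (hsub ht))
            (fun t ht => hb t (hsub ht))
      _ ≤ exp (M * (b - a)) * ‖g x‖ :=
          mul_le_mul_of_nonneg_right (hexp x hx y hy) (norm_nonneg _)
  · have hsub : Icc y x ⊆ Icc a b := Icc_subset_Icc hy.1 hx.2
    calc ‖g y‖ ≤ exp (M * (x - y)) * ‖g x‖ :=
          norm_le_exp_mul_norm_of_norm_deriv_le' hyx (fun t ht => hg t (hsub ht))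
            (fun t ht => hb t (hsub ht))
      _ ≤ exp (M * (b - a)) * ‖g x‖ :=
          mul_le_mul_of_nonneg_right (hexp y hy x hx) (norm_nonneg _)

theorem norm_le_exp_mul_norm_of_mul_norm_deriv_le {h : ℝ → ℝ} {K r a b : ℝ} (hab : a < b)
    (hK : 0 ≤ K) (hr : 0 ≤ r) (hh : ∀ t ∈ Icc a b, b - a ≤ r * h t)
    (hg : ∀ t ∈ Icc a b, DifferentiableAt ℝ g t)
    (hbound : ∀ t ∈ Icc a b, h t * ‖deriv g t‖ ≤ K * ‖g t‖) :
    ∀ x ∈ Icc a b, ∀ y ∈ Icc a b, ‖g y‖ ≤ exp (r * K) * ‖g x‖ := by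
  have hba : 0 < b - a := sub_pos.2 hab
  have hderiv : ∀ t ∈ Icc a b, ‖deriv g t‖ ≤ r * K / (b - a) * ‖g t‖ := by
    intro t ht
    rw [div_mul_eq_mul_div, le_div_iff₀ hba]
    calc ‖deriv g t‖ * (b - a) ≤ ‖deriv g t‖ * (r * h t) := by gcongr; exact hh t ht
      _ = r * (h t * ‖deriv g t‖) := by ring
      _ ≤ r * (K * ‖g t‖) := mul_le_mul_of_nonneg_left (hbound t ht) hr
      _ = r * K * ‖g t‖ := by ring
  have := norm_le_exp_mul_norm_of_norm_deriv_le_Icc (by positivity)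
    (fun t ht => (hg t ht).hasDerivAt) hderiv
  rwa [div_mul_cancel₀ _ hba.ne'] at this

end Gronwall

theorem Convex.le_pow_mul_of_forall_norm_sub_le {E : Type*} [SeminormedAddCommGroup E]
    [NormedSpace ℝ E] {s : Set E} (hs : Convex ℝ s) {F : E → ℝ} {δ D : ℝ} (hD : 0 ≤ D)
    (hstep : ∀ p ∈ s, ∀ q ∈ s, ‖p - q‖ ≤ δ → F q ≤ D * F p) {n : ℕ} (hn : n ≠ 0)
    {x y : E} (hx : x ∈ s) (hy : y ∈ s) (hxy : ‖y - x‖ ≤ n * δ) :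
    F y ≤ D ^ n * F x := by
  have hn' : (0 : ℝ) < n := Nat.cast_pos.2 (Nat.pos_of_ne_zero hn)
  set p : ℕ → E := fun k => x + ((k : ℝ) / n) • (y - x)
  have hp : ∀ k ≤ n, p k ∈ s := fun k hk => hs.add_smul_sub_mem hx hy
    ⟨by positivity, div_le_one_of_le₀ (by exact_mod_cast hk) hn'.le⟩
  have hpn : p n = y := by simp [p, div_self hn'.ne']
  have hp0 : p 0 = x := by simp [p]
  rw [← hpn, ← hp0]
  refine le_geom (u := fun k => F (p k)) hD n fun k hk => hstep _ (hp k hk.le) _ (hp _ hk) ?_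
  have hdiff : p k - p (k + 1) = -((1 / n : ℝ) • (y - x)) := by
    simp only [p, Nat.cast_succ]; rw [← neg_sub, add_sub_add_left_eq_sub, ← sub_smul]; ring_nf
  rwa [hdiff, norm_neg, norm_smul, Real.norm_of_nonneg (by positivity), one_div,
    inv_mul_le_iff₀ hn']

theorem norm_le_one_add_mul_norm_of_norm_sub_le {E : Type*} [SeminormedAddCommGroup E]
    {g : ℝ → E} {K α d p q : ℝ} (hK : 0 ≤ K) (hα : 0 ≤ α) (hd : 0 < d) (hpq : |p - q| ≤ d)
    (hg : ‖g p - g q‖ ≤ K * |p - q| ^ α * ‖g p‖ / d ^ α) :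
    ‖g q‖ ≤ (1 + K) * ‖g p‖ := by
  have hpow : |p - q| ^ α ≤ d ^ α := rpow_le_rpow (abs_nonneg _) hpq hα
  have hKg : K * |p - q| ^ α * ‖g p‖ / d ^ α ≤ K * ‖g p‖ := by
    rw [div_le_iff₀ (rpow_pos_of_pos hd α)]
    calc K * |p - q| ^ α * ‖g p‖ = K * ‖g p‖ * |p - q| ^ α := by ring
      _ ≤ K * ‖g p‖ * d ^ α := by gcongr
  calc ‖g q‖ ≤ ‖g p‖ + ‖g p - g q‖ := norm_le_insert _ _
    _ ≤ (1 + K) * ‖g p‖ := by linarith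

theorem norm_le_pow_mul_norm_of_holder {E : Type*} [SeminormedAddCommGroup E] {g : ℝ → E}
    {h : ℝ → ℝ} {K α c r a b : ℝ} (hK : 0 ≤ K) (hα : 0 ≤ α) (hc : 0 < c) (hr : 0 < r)
    (hpos : ∀ t ∈ Icc a b, 0 < h t) (hh : ∀ t ∈ Icc a b, b - a ≤ r * h t)
    (hg : ∀ x ∈ Icc a b, ∀ y ∈ Icc a b, |x - y| ≤ c * h x →
      ‖g x - g y‖ ≤ K * |x - y| ^ α * ‖g x‖ / h x ^ α) :
    ∀ x ∈ Icc a b, ∀ y ∈ Icc a b, ‖g y‖ ≤ (1 + K) ^ ⌈r / min c 1⌉₊ * ‖g x‖ := by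
  intro x hx y hy
  set m := min c 1
  have hm : 0 < m := lt_min hc one_pos
  have hstep : ∀ p ∈ Icc a b, ∀ q ∈ Icc a b, ‖p - q‖ ≤ m * (b - a) / r →
      ‖g q‖ ≤ (1 + K) * ‖g p‖ := by
    intro p hp q hq hpq
    have hpq' : |p - q| ≤ m * h p := by
      rw [Real.norm_eq_abs] at hpq
      calc |p - q| ≤ m * ((b - a) / r) := by rwa [mul_div_assoc] at hpq
        _ ≤ m * h p := by gcongr; rw [div_le_iff₀' hr]; exact hh p hp
    have hle : m * h p ≤ h p := mul_le_of_le_one_left (hpos p hp).le (min_le_right _ _)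
    have hlec : m * h p ≤ c * h p := mul_le_mul_of_nonneg_right (min_le_left _ _) (hpos p hp).le
    exact norm_le_one_add_mul_norm_of_norm_sub_le hK hα (hpos p hp) (hpq'.trans hle)
      (hg p hp q hq (hpq'.trans hlec))
  refine (convex_Icc a b).le_pow_mul_of_forall_norm_sub_le (F := fun t => ‖g t‖)
    (by linarith) hstep (Nat.ceil_pos.2 (by positivity)).ne' hx hy ?_
  have hba : 0 ≤ b - a := sub_nonneg.2 (hx.1.trans hx.2)
  calc ‖y - x‖ ≤ b - a := by
        rw [Real.norm_eq_abs, abs_le]; constructor <;> linarith [hx.1, hx.2, hy.1, hy.2]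
    _ = r / m * (m * (b - a) / r) := by field_simp
    _ ≤ ⌈r / m⌉₊ * (m * (b - a) / r) := by gcongr; exact Nat.le_ceil _

/-- **Proposition 2.3.** Suppose `h` has property (L), `U = {h > 0}`, and
`I = [a,b] ⊆ U` satisfies
`max{|I|, inf_I h, sup_I h} ≤ 6 min{|I|, inf_I h, sup_I h}`.  If `g : U → ℂ` satisfies
(a) `g ∈ C¹(U)` with `h|g′| ≤ K|g|` on `U`, or
(b) `|g(x) − g(y)| ≤ K|x−y|^α |g(x)|/h(x)^α` whenever `x, y ∈ U` and `|x−y| ≤ c h(x)`,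
then `sup_I |g| ≤ C inf_I |g|` with `C` depending only on `K` in case (a) and only on
`K, α, c` in case (b). -/
theorem comparable_on_interval_of_propertyL :
    (∀ K : ℝ, 0 ≤ K → ∃ C : ℝ, 0 < C ∧
      ∀ h : ℝ → ℝ, PropertyL h → ∀ a b : ℝ, a ≤ b →
        Set.Icc a b ⊆ {x : ℝ | 0 < h x} →
        max (b - a) (max (sInf (h '' Set.Icc a b)) (sSup (h '' Set.Icc a b))) ≤
          6 * min (b - a) (min (sInf (h '' Set.Icc a b)) (sSup (h '' Set.Icc a b))) →
        ∀ g : ℝ → ℂ, ContDiffOn ℝ 1 g {x : ℝ | 0 < h x} →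
          (∀ x ∈ {x : ℝ | 0 < h x}, h x * ‖deriv g x‖ ≤ K * ‖g x‖) →
          sSup ((fun x => ‖g x‖) '' Set.Icc a b) ≤
            C * sInf ((fun x => ‖g x‖) '' Set.Icc a b)) ∧
    (∀ K α c : ℝ, 0 ≤ K → 0 ≤ α → α ≤ 1 → 0 < c → ∃ C : ℝ, 0 < C ∧
      ∀ h : ℝ → ℝ, PropertyL h → ∀ a b : ℝ, a ≤ b →
        Set.Icc a b ⊆ {x : ℝ | 0 < h x} →
        max (b - a) (max (sInf (h '' Set.Icc a b)) (sSup (h '' Set.Icc a b))) ≤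
          6 * min (b - a) (min (sInf (h '' Set.Icc a b)) (sSup (h '' Set.Icc a b))) →
        ∀ g : ℝ → ℂ,
          (∀ x ∈ {x : ℝ | 0 < h x}, ∀ y ∈ {x : ℝ | 0 < h x}, |x - y| ≤ c * h x →
            ‖g x - g y‖ ≤ K * |x - y| ^ α * ‖g x‖ / h x ^ α) →
          sSup ((fun x => ‖g x‖) '' Set.Icc a b) ≤
            C * sInf ((fun x => ‖g x‖) '' Set.Icc a b)) := by
  constructor
  · intro K hK
    refine ⟨exp (6 * K), exp_pos _, fun h hL a b hab hsub hmm g hg hbound => ?_⟩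
    have hcomp := sub_le_six_mul_and_le_six_mul_sub hL.1.continuousOn hmm
    have hha : 0 < h a := hsub (left_mem_Icc.2 hab)
    have hlt : a < b := by linarith [(hcomp a (left_mem_Icc.2 hab)).2]
    have hU : IsOpen {x | 0 < h x} := isOpen_lt continuous_const hL.1
    refine csSup_image_le_mul_csInf_image (nonempty_Icc.2 hab) (exp_pos _)
      (norm_le_exp_mul_norm_of_mul_norm_deriv_le hlt hK (by norm_num)
        (fun t ht => (hcomp t ht).1) (fun t ht => ?_) (fun t ht => hbound t (hsub ht)))
    exact (hg.differentiableOn one_ne_zero t (hsub ht)).differentiableAt (hU.mem_nhds (hsub ht))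
  · intro K α c hK hα _ hc
    refine ⟨(1 + K) ^ ⌈6 / min c 1⌉₊, by positivity,
      fun h hL a b hab hsub hmm g hg => csSup_image_le_mul_csInf_image (nonempty_Icc.2 hab)
        (by positivity) ?_⟩
    have hcomp := sub_le_six_mul_and_le_six_mul_sub hL.1.continuousOn hmm
    exact norm_le_pow_mul_norm_of_holder hK hα hc (by norm_num) hsub
      (fun t ht => (hcomp t ht).1) (fun x hx y hy => hg x (hsub hx) y (hsub hy))
end
end

section
/- Suppose h : ℝ → ℝ has property (L), let U = {x ∈ ℝ : h(x) > 0}, and let I ⊆ U be a closed bounded interval satisfying max{|I|, inf_{x∈I} h(x), sup_{x∈I} h(x)} ≤ 6 min{|I|, inf_{x∈I} h(x), sup_{x∈I} h(x)}. Let κ ≥ 0 be an integer and let g : U → ℂ satisfy at least one of: (a) g is C¹ on U and (h(x))^{κ+1} |g′(x)| ≤ K for all x ∈ U; or (b) for some α ∈ (0,1] and constants c > 0, K ≥ 0, one has |g(x) − g(y)| ≤ K |x−y|^α (h(x))^{−κ−α} whenever x, y ∈ U and |x−y| ≤ c h(x). Then either sup_{x∈I} |g(x)| ≤ C inf_{x∈I}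 |g(x)| or sup_{x∈I} |g(x)| ≤ C |I|^{−κ}, where C depends only on K, κ in case (a), and only on K, κ, α, c in case (b). -/
open MeasureTheory Real Set
open scoped ENNReal NNReal Topology Classical

noncomputable section

/-!
On `I = [a, b]` the comparability hypothesis gives `h ≥ |I| / 6`. Either regularity assumption
then bounds the oscillation `|g x - g y|` on `I` by `M |I|^{-κ}`: in case (a) through the mean value
theorem, in case (b) by chaining about `6 / c` Hölder steps of length at most `c |I| / 6 ≤ c h`.
A family of nonnegative numbers with oscillation at most `D` has `sup ≤ 2 inf` or `sup ≤ 2 D`.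
-/

theorem sSup_le_two_mul_sInf_or_sSup_le_two_mul {S : Set ℝ} {D : ℝ} (hne : S.Nonempty)
    (hnonneg : ∀ s ∈ S, 0 ≤ s) (hosc : ∀ s ∈ S, ∀ t ∈ S, s ≤ t + D) :
    sSup S ≤ 2 * sInf S ∨ sSup S ≤ 2 * D := by
  have hsup : sSup S ≤ sInf S + D :=
    csSup_le hne fun s hs => sub_le_iff_le_add.1 <|
      le_csInf hne fun t ht => sub_le_iff_le_add.2 (hosc s hs t ht)
  have hinf : 0 ≤ sInf S := Real.sInf_nonneg hnonneg
  rcases le_total (sInf S) D with hD | hD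
  · exact Or.inr (by linarith)
  · exact Or.inl (by linarith)

theorem norm_sub_le_nat_mul_of_norm_sub_le {E : Type*} [SeminormedAddCommGroup E] {g : ℝ → E}
    {a b ε : ℝ} {N : ℕ} (hN : 0 < N)
    (hstep : ∀ u ∈ Icc a b, ∀ v ∈ Icc a b, |u - v| ≤ (b - a) / N → ‖g u - g v‖ ≤ ε)
    {x y : ℝ} (hx : x ∈ Icc a b) (hy : y ∈ Icc a b) :
    ‖g x - g y‖ ≤ N * ε := by
  have hNpos : (0 : ℝ) < N := Nat.cast_pos.2 hN
  set p : ℕ → ℝ := fun i => x + ((i : ℝ) / N) • (y - x)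
  have hp_mem : ∀ i ≤ N, p i ∈ Icc a b := fun i hi =>
    (convex_Icc a b).add_smul_sub_mem hx hy
      ⟨by positivity, (div_le_one hNpos).2 (Nat.cast_le.2 hi)⟩
  have hp_step : ∀ i, |p i - p (i + 1)| ≤ (b - a) / N := fun i => by
    have hpi : p i - p (i + 1) = -((y - x) / N) := by
      simp only [p, smul_eq_mul]; push_cast; field_simp; ring
    rw [hpi, abs_neg, abs_div, abs_of_pos hNpos, ← Real.dist_eq]
    gcongr
    exact Real.dist_le_of_mem_Icc hy hx
  have hp_zero : p 0 = x := by simp [p]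
  have hp_N : p N = y := by simp [p, hNpos.ne']
  calc ‖g x - g y‖ = ‖∑ i ∈ Finset.range N, (g (p i) - g (p (i + 1)))‖ := by
        rw [Finset.sum_range_sub', hp_zero, hp_N]
    _ ≤ ∑ i ∈ Finset.range N, ‖g (p i) - g (p (i + 1))‖ := norm_sum_le _ _
    _ ≤ ∑ _i ∈ Finset.range N, ε := Finset.sum_le_sum fun i hi =>
        hstep _ (hp_mem i (Finset.mem_range.1 hi).le) _ (hp_mem (i + 1) (Finset.mem_range.1 hi))
          (hp_step i)
    _ = N * ε := by rw [Finset.sum_const, Finset.card_range, nsmul_eq_mul]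

theorem PropertyL.isOpen_pos {h : ℝ → ℝ} (hL : PropertyL h) : IsOpen {x | 0 < h x} :=
  isOpen_lt continuous_const hL.1

theorem PropertyL.bddBelow_image_s6 {h : ℝ → ℝ} (hL : PropertyL h) (s : Set ℝ) :
    BddBelow (h '' s) :=
  ⟨0, by rintro _ ⟨y, -, rfl⟩; exact hL.2.1 y⟩

theorem div_six_le_of_max_le_six_mul_min {h : ℝ → ℝ} {a b x : ℝ} (hbdd : BddBelow (h '' Icc a b))
    (hcomp : max (b - a) (max (sInf (h '' Icc a b)) (sSup (h '' Icc a b))) ≤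
      6 * min (b - a) (min (sInf (h '' Icc a b)) (sSup (h '' Icc a b))))
    (hx : x ∈ Icc a b) : (b - a) / 6 ≤ h x := by
  have hlen := (le_max_left _ _).trans hcomp
  have hmin : min (b - a) (min (sInf (h '' Icc a b)) (sSup (h '' Icc a b))) ≤
      sInf (h '' Icc a b) := (min_le_right _ _).trans (min_le_left _ _)
  have hinf : sInf (h '' Icc a b) ≤ h x := csInf_le hbdd ⟨x, hx, rfl⟩
  linarith

theorem sSup_le_or_sSup_le_of_norm_sub_le {g : ℝ → ℂ} {a b M : ℝ} {κ : ℕ} (hab : a ≤ b)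
    (hM : 0 ≤ M)
    (hosc : a < b → ∀ x ∈ Icc a b, ∀ y ∈ Icc a b, ‖g x - g y‖ ≤ M * (b - a) ^ (-(κ : ℤ))) :
    sSup ((fun x => ‖g x‖) '' Icc a b) ≤ (2 + 2 * M) * sInf ((fun x => ‖g x‖) '' Icc a b) ∨
      sSup ((fun x => ‖g x‖) '' Icc a b) ≤ (2 + 2 * M) * (b - a) ^ (-(κ : ℤ)) := by
  rcases hab.eq_or_lt with rfl | hlt
  · left
    rw [Icc_self, image_singleton, csSup_singleton, csInf_singleton]
    exact le_mul_of_one_le_left (norm_nonneg _) (by linarith)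
  set S := (fun x => ‖g x‖) '' Icc a b
  have hnonneg : ∀ s ∈ S, 0 ≤ s := by rintro _ ⟨y, -, rfl⟩; exact norm_nonneg _
  have hpow : 0 ≤ (b - a) ^ (-(κ : ℤ)) := zpow_nonneg (sub_pos.2 hlt).le _
  rcases sSup_le_two_mul_sInf_or_sSup_le_two_mul (D := M * (b - a) ^ (-(κ : ℤ)))
      ⟨_, mem_image_of_mem _ (left_mem_Icc.2 hab)⟩ hnonneg
      (by
        rintro _ ⟨x, hx, rfl⟩ _ ⟨y, hy, rfl⟩
        linarith [norm_sub_norm_le (g x) (g y), hosc hlt x hx y hy]) with h | h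
  · exact Or.inl (h.trans (by nlinarith [Real.sInf_nonneg hnonneg]))
  · exact Or.inr (h.trans (by nlinarith))

theorem norm_sub_le_of_pow_mul_norm_deriv_le {g : ℝ → ℂ} {h : ℝ → ℝ} {a b K : ℝ} {κ : ℕ}
    (hab : a < b) (hg : ∀ x ∈ Icc a b, DifferentiableAt ℝ g x)
    (hh : ∀ x ∈ Icc a b, (b - a) / 6 ≤ h x)
    (hder : ∀ x ∈ Icc a b, h x ^ (κ + 1) * ‖deriv g x‖ ≤ K)
    {x y : ℝ} (hx : x ∈ Icc a b) (hy : y ∈ Icc a b) :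
    ‖g x - g y‖ ≤ K * 6 ^ (κ + 1) * (b - a) ^ (-(κ : ℤ)) := by
  set L := b - a
  have hL : 0 < L := sub_pos.2 hab
  have hbound : ∀ z ∈ Icc a b, ‖deriv g z‖ ≤ K / (L / 6) ^ (κ + 1) := fun z hz => by
    rw [le_div_iff₀ (by positivity)]
    calc ‖deriv g z‖ * (L / 6) ^ (κ + 1) ≤ ‖deriv g z‖ * h z ^ (κ + 1) := by
          gcongr; exact hh z hz
      _ ≤ K := by linarith [hder z hz]
  calc ‖g x - g y‖ ≤ K / (L / 6) ^ (κ + 1) * ‖x - y‖ :=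
        (convex_Icc a b).norm_image_sub_le_of_norm_deriv_le hg hbound hy hx
    _ ≤ K / (L / 6) ^ (κ + 1) * L := by
        gcongr
        · exact (norm_nonneg _).trans (hbound x hx)
        · exact Real.dist_le_of_mem_Icc hx hy
    _ = K * 6 ^ (κ + 1) * L ^ (-(κ : ℤ)) := by
        rw [zpow_neg, zpow_natCast, div_pow, pow_succ L]; field_simp

theorem norm_sub_le_of_holder {g : ℝ → ℂ} {h : ℝ → ℝ} {a b K α c : ℝ} {κ : ℕ}
    (hab : a < b) (hK : 0 ≤ K) (hα : 0 < α) (hc : 0 < c)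
    (hh : ∀ x ∈ Icc a b, (b - a) / 6 ≤ h x)
    (hhol : ∀ x ∈ Icc a b, ∀ y ∈ Icc a b, |x - y| ≤ c * h x →
      ‖g x - g y‖ ≤ K * |x - y| ^ α * h x ^ (-((κ : ℝ) + α)))
    {x y : ℝ} (hx : x ∈ Icc a b) (hy : y ∈ Icc a b) :
    ‖g x - g y‖ ≤ ⌈6 / c⌉₊ * K * 6 ^ ((κ : ℝ) + α) * (b - a) ^ (-(κ : ℤ)) := by
  set L := b - a
  set N := ⌈6 / c⌉₊
  have hL : 0 < L := sub_pos.2 hab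
  have hN : 0 < N := Nat.ceil_pos.2 (by positivity)
  have hNc : 6 ≤ c * N := by
    have := Nat.le_ceil (6 / c); rw [div_le_iff₀ hc] at this; linarith
  have hstep : ∀ u ∈ Icc a b, ∀ v ∈ Icc a b, |u - v| ≤ L / N →
      ‖g u - g v‖ ≤ K * L ^ α * (L / 6) ^ (-((κ : ℝ) + α)) := by
    intro u hu v hv huv
    have hLN : L / N ≤ c * h u := by
      rw [div_le_iff₀ (Nat.cast_pos.2 hN)]
      nlinarith [hh u hu]
    calc ‖g u - g v‖ ≤ K * |u - v| ^ α * h u ^ (-((κ : ℝ) + α)) :=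
          hhol u hu v hv (huv.trans hLN)
      _ ≤ K * L ^ α * (L / 6) ^ (-((κ : ℝ) + α)) := by
          have hpow : |u - v| ^ α ≤ L ^ α := Real.rpow_le_rpow (abs_nonneg _)
            (huv.trans (div_le_self hL.le (Nat.one_le_cast.2 hN))) hα.le
          have hneg : h u ^ (-((κ : ℝ) + α)) ≤ (L / 6) ^ (-((κ : ℝ) + α)) :=
            Real.rpow_le_rpow_of_nonpos (by positivity) (hh u hu) (by linarith)
          have hhu : 0 ≤ h u := (by positivity : (0 : ℝ) ≤ L / 6).trans (hh u hu)
          exact mul_le_mul (by gcongr) hneg (Real.rpow_nonneg hhu _) (by positivity)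
  have hscale : L ^ α * (L / 6) ^ (-((κ : ℝ) + α)) = 6 ^ ((κ : ℝ) + α) * L ^ (-(κ : ℤ)) := by
    rw [Real.rpow_neg (by positivity), Real.div_rpow hL.le (by norm_num), zpow_neg, zpow_natCast,
      Real.rpow_add hL, Real.rpow_natCast]
    field_simp
  calc ‖g x - g y‖ ≤ N * (K * L ^ α * (L / 6) ^ (-((κ : ℝ) + α))) :=
        norm_sub_le_nat_mul_of_norm_sub_le hN hstep hx hy
    _ = N * K * 6 ^ ((κ : ℝ) + α) * L ^ (-(κ : ℤ)) := by rw [mul_assoc K, hscale]; ring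

/-- **Proposition 2.4.** Suppose `h` has property (L), `U = {h > 0}`, and `I = [a,b] ⊆ U`
satisfies `max{|I|, inf_I h, sup_I h} ≤ 6 min{|I|, inf_I h, sup_I h}`.  If `g : U → ℂ`
satisfies (a) `g ∈ C¹(U)` with `h^{κ+1}|g′| ≤ K` on `U`, or
(b) `|g(x) − g(y)| ≤ K|x−y|^α h(x)^{−κ−α}` whenever `x, y ∈ U` and `|x−y| ≤ c h(x)`,
then either `sup_I |g| ≤ C inf_I |g|` or `sup_I |g| ≤ C |I|^{−κ}`, with `C` depending only
on `K, κ` in case (a) and only on `K, κ, α, c` in case (b). -/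
theorem comparable_or_small_of_propertyL :
    (∀ (κ : ℕ) (K : ℝ), 0 ≤ K → ∃ C : ℝ, 0 < C ∧
      ∀ h : ℝ → ℝ, PropertyL h → ∀ a b : ℝ, a ≤ b →
        Set.Icc a b ⊆ {x : ℝ | 0 < h x} →
        max (b - a) (max (sInf (h '' Set.Icc a b)) (sSup (h '' Set.Icc a b))) ≤
          6 * min (b - a) (min (sInf (h '' Set.Icc a b)) (sSup (h '' Set.Icc a b))) →
        ∀ g : ℝ → ℂ, ContDiffOn ℝ 1 g {x : ℝ | 0 < h x} →
          (∀ x ∈ {x : ℝ | 0 < h x}, h x ^ (κ + 1) * ‖deriv g x‖ ≤ K) →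
          (sSup ((fun x => ‖g x‖) '' Set.Icc a b) ≤
              C * sInf ((fun x => ‖g x‖) '' Set.Icc a b) ∨
            sSup ((fun x => ‖g x‖) '' Set.Icc a b) ≤ C * (b - a) ^ (-(κ : ℤ)))) ∧
    (∀ (κ : ℕ) (K α c : ℝ), 0 ≤ K → 0 < α → α ≤ 1 → 0 < c → ∃ C : ℝ, 0 < C ∧
      ∀ h : ℝ → ℝ, PropertyL h → ∀ a b : ℝ, a ≤ b →
        Set.Icc a b ⊆ {x : ℝ | 0 < h x} →
        max (b - a) (max (sInf (h '' Set.Icc a b)) (sSup (h '' Set.Icc a b))) ≤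
          6 * min (b - a) (min (sInf (h '' Set.Icc a b)) (sSup (h '' Set.Icc a b))) →
        ∀ g : ℝ → ℂ,
          (∀ x ∈ {x : ℝ | 0 < h x}, ∀ y ∈ {x : ℝ | 0 < h x}, |x - y| ≤ c * h x →
            ‖g x - g y‖ ≤ K * |x - y| ^ α * h x ^ (-((κ : ℝ) + α))) →
          (sSup ((fun x => ‖g x‖) '' Set.Icc a b) ≤
              C * sInf ((fun x => ‖g x‖) '' Set.Icc a b) ∨
            sSup ((fun x => ‖g x‖) '' Set.Icc a b) ≤ C * (b - a) ^ (-(κ : ℤ)))) := by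
  refine ⟨fun κ K hK => ⟨2 + 2 * (K * 6 ^ (κ + 1)), by positivity, ?_⟩,
    fun κ K α c hK hα _ hc => ⟨2 + 2 * (⌈6 / c⌉₊ * K * 6 ^ ((κ : ℝ) + α)), by positivity, ?_⟩⟩
  · intro h hL a b hab hsub hcomp g hg hder
    refine sSup_le_or_sSup_le_of_norm_sub_le hab (by positivity) fun hlt x hx y hy => ?_
    exact norm_sub_le_of_pow_mul_norm_deriv_le hlt
      (fun z hz => (hg.differentiableOn one_ne_zero).differentiableAt
        (hL.isOpen_pos.mem_nhds (hsub hz)))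
      (fun z hz => div_six_le_of_max_le_six_mul_min (hL.bddBelow_image_s6 _) hcomp hz)
      (fun z hz => hder z (hsub hz)) hx hy
  · intro h hL a b hab hsub hcomp g hhol
    refine sSup_le_or_sSup_le_of_norm_sub_le hab (by positivity) fun hlt x hx y hy => ?_
    exact norm_sub_le_of_holder hlt hK hα hc
      (fun z hz => div_six_le_of_max_le_six_mul_min (hL.bddBelow_image_s6 _) hcomp hz)
      (fun u hu v hv => hhol u (hsub hu) v (hsub hv)) hx hy
end
end

section
/- Under the standing assumptions: (i) if ℓ₁, …, ℓ_N are each admissible for φ, κ, α with constants A, c, B, then the pointwise maximum max(ℓ₁, …, ℓ_N) is admissible for φ, κ, α with constants depending only on A, c, B, κ, α; (ii) if (ℓ_i)_{i∈𝒥} is an arbitrary (possibly infinite) family of functions, each admissible for φ, κ, α with the same constants A, c, B, then the pointwise supremum sup_{i∈𝒥} ℓ_i is admissible for φ, κ, α with constants depending only on A, c, B, κ, α. -/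
open MeasureTheory Real Set
open scoped ENNReal NNReal Topology Classical

noncomputable section

/-- `f` is locally `α`-Hölder continuous on `Ω`. -/
def LocallyHolderOn (α : ℝ) (f : ℝ → ℝ) (Ω : Set ℝ) : Prop :=
  ∀ x ∈ Ω, ∃ ε > (0 : ℝ), ∃ C : ℝ, ∀ y ∈ Ω ∩ Metric.ball x ε, ∀ z ∈ Ω ∩ Metric.ball x ε,
    |f y - f z| ≤ C * |y - z| ^ α

/-- `ℓ : ℝ → [0,∞)` is admissible for the phase `φ` on `Ω` relative to `κ`, `α`, with
constants `A ≥ 0`, `c > 0`, `B ≥ 0`: it is nonnegative, `1`-Lipschitz, vanishes off `Ω`,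
and satisfies the pointwise bounds (1.4) and (1.5) of the paper. -/
def Admissible (Ω : Set ℝ) (φ : ℝ → ℝ) (κ : ℕ) (α A c B : ℝ) (ℓ : ℝ → ℝ) : Prop :=
  (∀ x, 0 ≤ ℓ x) ∧ LipschitzWith 1 ℓ ∧ (∀ x ∉ Ω, ℓ x = 0) ∧
  (∀ x ∈ Ω, ∀ j : ℕ, 1 ≤ j → j ≤ κ →
    |iteratedDeriv (j + 1) φ x| * ℓ x ^ j ≤ A * |deriv φ x|) ∧
  (∀ x ∈ Ω, ∀ y ∈ Ω, |y - x| ≤ c * ℓ x →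
    |iteratedDeriv (κ + 1) φ x - iteratedDeriv (κ + 1) φ y| * ℓ x ^ ((κ : ℝ) + α)
      ≤ B * |x - y| ^ α * |deriv φ x|)

/-- If every member of a pointwise-bounded family of nonnegative numbers satisfies
`a i ^ j ≤ M` with `j ≥ 1`, so does the supremum. -/
lemma pow_ciSup_le {ι : Type} [Nonempty ι] {a : ι → ℝ} (h0 : ∀ i, 0 ≤ a i)
    (hb : BddAbove (Set.range a)) {j : ℕ} (hj : 1 ≤ j) {M : ℝ} (hM : 0 ≤ M)
    (h : ∀ i, a i ^ j ≤ M) : (⨆ i, a i) ^ j ≤ M := by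
  have hjne : j ≠ 0 := by omega
  have hs : (⨆ i, a i) ≤ M ^ ((j : ℝ)⁻¹) := by
    refine ciSup_le fun i => ?_
    calc a i = (a i ^ j) ^ ((j : ℝ)⁻¹) := (Real.pow_rpow_inv_natCast (h0 i) hjne).symm
    _ ≤ M ^ ((j : ℝ)⁻¹) := Real.rpow_le_rpow (pow_nonneg (h0 i) j) (h i) (by positivity)
  have hs0 : 0 ≤ (⨆ i, a i) := le_trans (h0 (Classical.arbitrary ι))
    (le_ciSup hb (Classical.arbitrary ι))
  calc (⨆ i, a i) ^ j ≤ (M ^ ((j : ℝ)⁻¹)) ^ j := pow_le_pow_left₀ hs0 hs j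
  _ = M := Real.rpow_inv_natCast_pow hM hjne

/-- The pointwise supremum of a pointwise-bounded family of admissible functions
(with common constants `A, c, B`) is admissible with constants
`A`, `c/2`, `2^(κ+α) * B`. -/
lemma sup_admissible {Ω : Set ℝ} {φ : ℝ → ℝ} {κ : ℕ} {α A c B : ℝ}
    (hα0 : 0 ≤ α) (hA : 0 ≤ A) (hc : 0 < c) (hB : 0 ≤ B)
    {ι : Type} [Nonempty ι] (ℓ : ι → ℝ → ℝ)
    (hadm : ∀ i, Admissible Ω φ κ α A c B (ℓ i))
    (hbdd : ∀ x, BddAbove (Set.range fun i => ℓ i x)) :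
    Admissible Ω φ κ α A (c / 2) ((2 : ℝ) ^ ((κ : ℝ) + α) * B)
      (fun x => ⨆ i, ℓ i x) := by
  set L : ℝ → ℝ := fun x => ⨆ i, ℓ i x with hL
  have i₀ : ι := Classical.arbitrary ι
  have hLnn : ∀ x, 0 ≤ L x := fun x =>
    le_trans ((hadm i₀).1 x) (le_ciSup (hbdd x) i₀)
  refine ⟨hLnn, ?_, ?_, ?_, ?_⟩
  · -- Lipschitz
    have key : ∀ x y : ℝ, L x ≤ L y + |x - y| := by
      intro x y
      refine ciSup_le fun i => ?_
      have h1 : ℓ i x - ℓ i y ≤ |x - y| := by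
        have h := (hadm i).2.1.dist_le_mul x y
        rw [Real.dist_eq, Real.dist_eq] at h
        norm_num at h
        exact le_trans (le_abs_self _) h
      have h2 : ℓ i y ≤ L y := le_ciSup (hbdd y) i
      linarith
    rw [lipschitzWith_iff_dist_le_mul]
    intro x y
    rw [Real.dist_eq, Real.dist_eq]
    have k1 := key x y
    have k2 := key y x
    rw [abs_sub_comm y x] at k2
    norm_num
    rw [abs_le]
    constructor <;> linarith
  · -- vanishes off Ω
    intro x hx
    refine le_antisymm (ciSup_le fun i => le_of_eq ((hadm i).2.2.1 x hx)) (hLnn x)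
  · -- bound (1.4)
    intro x hx j hj1 hjκ
    set D := |iteratedDeriv (j + 1) φ x|
    have hD : 0 ≤ D := abs_nonneg _
    have hM : 0 ≤ A * |deriv φ x| := by positivity
    rcases eq_or_lt_of_le hD with hD0 | hD0
    · rw [← hD0, zero_mul]; exact hM
    · rw [mul_comm, ← le_div_iff₀ hD0]
      refine pow_ciSup_le (fun i => (hadm i).1 x) (hbdd x) hj1 (by positivity) fun i => ?_
      rw [le_div_iff₀ hD0, mul_comm]
      exact (hadm i).2.2.2.1 x hx j hj1 hjκ
  · -- bound (1.5)
    intro x hx y hy hxy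
    set Δ := |iteratedDeriv (κ + 1) φ x - iteratedDeriv (κ + 1) φ y|
    rcases eq_or_lt_of_le (hLnn x) with hL0 | hL0
    · -- L x = 0 forces y = x
      have hyx : |y - x| ≤ 0 := by
        have : c / 2 * L x = 0 := by rw [← hL0, mul_zero]
        simpa [this] using hxy
      have : y = x := by
        have := abs_nonneg (y - x)
        have h0 : |y - x| = 0 := le_antisymm hyx this
        have := abs_eq_zero.mp h0
        linarith
      subst this
      have : Δ = 0 := by simp [Δ]
      rw [this, zero_mul]
      positivity
    · -- pick i with ℓ i x > L x / 2
      obtain ⟨i, hi⟩ := exists_lt_of_lt_ciSup (show L x / 2 < L x by linarith)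
      have hℓnn := (hadm i).1 x
      have hix : L x ≤ 2 * ℓ i x := by linarith
      have hyx' : |y - x| ≤ c * ℓ i x := by
        calc |y - x| ≤ c / 2 * L x := hxy
        _ ≤ c / 2 * (2 * ℓ i x) := by
            exact mul_le_mul_of_nonneg_left hix (by positivity)
        _ = c * ℓ i x := by ring
      have hineq := (hadm i).2.2.2.2 x hx y hy hyx'
      have he : (0 : ℝ) ≤ (κ : ℝ) + α := by positivity
      have hpow : L x ^ ((κ : ℝ) + α) ≤
          (2 : ℝ) ^ ((κ : ℝ) + α) * ℓ i x ^ ((κ : ℝ) + α) := by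
        calc L x ^ ((κ : ℝ) + α) ≤ (2 * ℓ i x) ^ ((κ : ℝ) + α) :=
              Real.rpow_le_rpow (le_of_lt hL0) hix he
        _ = (2 : ℝ) ^ ((κ : ℝ) + α) * ℓ i x ^ ((κ : ℝ) + α) :=
              Real.mul_rpow (by norm_num) hℓnn
      have hΔ : 0 ≤ Δ := abs_nonneg _
      calc Δ * L x ^ ((κ : ℝ) + α)
          ≤ Δ * ((2 : ℝ) ^ ((κ : ℝ) + α) * ℓ i x ^ ((κ : ℝ) + α)) :=
            mul_le_mul_of_nonneg_left hpow hΔ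
        _ = (2 : ℝ) ^ ((κ : ℝ) + α) * (Δ * ℓ i x ^ ((κ : ℝ) + α)) := by ring
        _ ≤ (2 : ℝ) ^ ((κ : ℝ) + α) * (B * |x - y| ^ α * |deriv φ x|) :=
            mul_le_mul_of_nonneg_left hineq (by positivity)
        _ = (2 : ℝ) ^ ((κ : ℝ) + α) * B * |x - y| ^ α * |deriv φ x| := by ring

/-- **Proposition 2.5, first point.** Under the standing assumptions, the pointwise maximum of
finitely many admissible functions (with common constants `A, c, B`) is admissible, and the
pointwise supremum of an arbitrary (pointwise bounded) family of admissible functions with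
uniformly bounded constants is admissible; the new constants depend only on `A, c, B, κ, α`. -/
theorem max_and_sup_of_admissible
    (κ : ℕ) (α A c B : ℝ) (hα0 : 0 ≤ α) (hα1 : α ≤ 1)
    (hA : 0 ≤ A) (hc : 0 < c) (hB : 0 ≤ B) :
    ∃ A' c' B' : ℝ, 0 ≤ A' ∧ 0 < c' ∧ 0 ≤ B' ∧
      ∀ (Ω : Set ℝ) (φ : ℝ → ℝ), IsOpen Ω → Ω.Nonempty →
        (∀ x ∈ Ω, 0 < deriv φ x) →
        (∀ j : ℕ, j ≤ κ → ∀ x ∈ Ω, DifferentiableAt ℝ (iteratedDeriv j φ) x) →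
        LocallyHolderOn α (iteratedDeriv (κ + 1) φ) Ω →
        -- (i) finite pointwise maxima
        ((∀ (N : ℕ) (ℓ : Fin (N + 1) → ℝ → ℝ),
            (∀ i, Admissible Ω φ κ α A c B (ℓ i)) →
            Admissible Ω φ κ α A' c' B' fun x => ⨆ i, ℓ i x) ∧
        -- (ii) arbitrary pointwise suprema
          (∀ (ι : Type) (ℓ : ι → ℝ → ℝ), Nonempty ι →
            (∀ i, Admissible Ω φ κ α A c B (ℓ i)) →
            (∀ x, BddAbove (Set.range fun i => ℓ i x)) →
            Admissible Ω φ κ α A' c' B' fun x => ⨆ i, ℓ i x)) := by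
  refine ⟨A, c / 2, (2 : ℝ) ^ ((κ : ℝ) + α) * B, hA, by positivity, by positivity,
    fun Ω φ _ _ _ _ _ => ⟨?_, ?_⟩⟩
  · intro N ℓ hadm
    exact sup_admissible hα0 hA hc hB ℓ hadm fun x =>
      (Set.finite_range _).bddAbove
  · intro ι ℓ hne hadm hbdd
    exact sup_admissible hα0 hA hc hB ℓ hadm hbdd
end
end

section
/- Let φ be a real polynomial of degree d+1 with d ≥ 1, and let Ω be a nonempty open subset of {x ∈ ℝ : φ′(x) > 0}. Define ℓ(x) = min( min_z |x − z|, dist(x, ℝ∖Ω) ) for x ∈ Ω and ℓ(x) = 0 for x ∉ Ω, where z ranges over the complex zeros of φ′. Then for every nonnegative integer κ and every α ∈ [0,1], ℓ is admissible for φ, κ, α on Ω, with admissibility constants depending only on d, κ, α. -/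
/-!
Over `ℂ`, `φ' = c ∏ᵢ (X - zᵢ)` with `d` roots `zᵢ`. If every root lies at distance `≥ L` from `x`,
differentiating the product (`(∏ᵢ fᵢ)' = ∑ᵢ ∏_{k ≠ i} fₖ`) and inducting on the order gives
`|φ^{(j+1)}(x)| L^j ≤ d^j |φ'(x)|`; with `L = ℓ(x)` this is (1.4).
For `|t - x| ≤ L/2` the roots stay at distance `≥ L/2` from `t` and `|t - zᵢ| ≤ 3/2 |x - zᵢ|`, so
`|φ^{(κ+2)}(t)| ≤ (2d/L)^{κ+1} (3/2)^d |φ'(x)|`, and the mean value theorem bounds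
`|φ^{(κ+1)}(x) - φ^{(κ+1)}(y)|` by this times `|x - y|`. As `|x - y| ≤ L`,
`|x - y| L^{κ+α} ≤ |x - y|^α L^{κ+1}`, which gives (1.5) with `c = 1/2`.
Finally `ℓ(x)` is the distance from `x` to the roots of `φ'` together with `ℝ ∖ Ω`, hence
`1`-Lipschitz.
-/

open MeasureTheory Real Set
open scoped ENNReal NNReal Topology Classical

noncomputable section

open Polynomial

namespace Multiset

variable {𝕜 : Type*} [NormedField 𝕜]

theorem norm_eval_iterate_derivative_prod_X_sub_C_mul_pow_le (j : ℕ) {s : Multiset 𝕜}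
    {x : 𝕜} {L : ℝ} (hL : 0 ≤ L) (hs : ∀ z ∈ s, L ≤ ‖x - z‖) :
    ‖(derivative^[j] (s.map (X - C ·)).prod).eval x‖ * L ^ j
      ≤ (card s : ℝ) ^ j * ‖((s.map (X - C ·)).prod).eval x‖ := by
  induction j generalizing s with
  | zero => simp
  | succ j ih =>
    have hder : derivative^[j + 1] (s.map (X - C ·)).prod
        = (s.map fun z => derivative^[j] ((s.erase z).map (X - C ·)).prod).sum := by
      rw [Function.iterate_succ_apply, derivative_prod]
      simp only [derivative_sub, derivative_X, derivative_C, sub_zero, mul_one]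
      rw [← Module.End.pow_apply, map_multiset_sum, map_map]
      simp only [Function.comp_def, Module.End.pow_apply]
    have hterm : ∀ z ∈ s,
        ‖(derivative^[j] ((s.erase z).map (X - C ·)).prod).eval x‖ * L ^ (j + 1)
          ≤ (card s : ℝ) ^ j * ‖((s.map (X - C ·)).prod).eval x‖ := by
      intro z hz
      have hsplit : ‖((s.map (X - C ·)).prod).eval x‖
          = ‖x - z‖ * ‖(((s.erase z).map (X - C ·)).prod).eval x‖ := by
        rw [← cons_erase hz, map_cons, prod_cons, erase_cons_head]
        simp
      have hcard : (card (s.erase z) : ℝ) ^ j ≤ (card s : ℝ) ^ j := by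
        gcongr ?_ ^ _
        exact_mod_cast card_le_card (erase_le z s)
      calc _ = ‖(derivative^[j] ((s.erase z).map (X - C ·)).prod).eval x‖ * L ^ j * L := by
            ring
        _ ≤ (card (s.erase z) : ℝ) ^ j * ‖(((s.erase z).map (X - C ·)).prod).eval x‖
              * ‖x - z‖ :=
            mul_le_mul (ih fun w hw => hs w (mem_of_mem_erase hw)) (hs z hz) hL
              (by positivity)
        _ ≤ (card s : ℝ) ^ j * ‖(((s.erase z).map (X - C ·)).prod).eval x‖ * ‖x - z‖ := by
            gcongr
        _ = _ := by rw [hsplit]; ring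
    calc _ ≤ (s.map fun z => ‖(derivative^[j] ((s.erase z).map (X - C ·)).prod).eval x‖).sum
          * L ^ (j + 1) := by
          gcongr
          rw [hder, eval_multisetSum, map_map]
          exact (norm_multiset_sum_le _).trans_eq (by rw [map_map]; rfl)
      _ = (s.map fun z =>
            ‖(derivative^[j] ((s.erase z).map (X - C ·)).prod).eval x‖ * L ^ (j + 1)).sum :=
          sum_map_mul_right.symm
      _ ≤ (s.map fun _ => (card s : ℝ) ^ j * ‖((s.map (X - C ·)).prod).eval x‖).sum :=
          sum_map_le_sum_map _ _ hterm
      _ = _ := by simp [pow_succ]; ring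

theorem norm_eval_prod_X_sub_C_le {s : Multiset 𝕜} {x ξ : 𝕜} {L : ℝ}
    (hs : ∀ z ∈ s, L ≤ ‖x - z‖) (hξ : ‖ξ - x‖ ≤ L / 2) :
    ‖((s.map (X - C ·)).prod).eval ξ‖
      ≤ (3 / 2) ^ card s * ‖((s.map (X - C ·)).prod).eval x‖ := by
  induction s using Multiset.induction_on with
  | empty => simp
  | cons a s ih =>
    have ha := hs a (mem_cons_self a s)
    have hξa : ‖ξ - a‖ ≤ 3 / 2 * ‖x - a‖ := calc
      ‖ξ - a‖ = ‖(ξ - x) + (x - a)‖ := by rw [sub_add_sub_cancel]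
      _ ≤ ‖ξ - x‖ + ‖x - a‖ := norm_add_le _ _
      _ ≤ 3 / 2 * ‖x - a‖ := by linarith
    simp only [map_cons, prod_cons, eval_mul, eval_sub, eval_X, eval_C, norm_mul, card_cons,
      pow_succ']
    calc _ ≤ 3 / 2 * ‖x - a‖ * ((3 / 2) ^ card s * ‖((s.map (X - C ·)).prod).eval x‖) :=
          mul_le_mul hξa (ih fun z hz => hs z (mem_cons_of_mem hz)) (norm_nonneg _)
            (by positivity)
      _ = _ := by ring

end Multiset

theorem Real.mul_rpow_add_le_rpow_mul_pow (k : ℕ) {a L α : ℝ} (ha : 0 ≤ a) (haL : a ≤ L)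
    (hα : α ≤ 1) :
    a * L ^ ((k : ℝ) + α) ≤ a ^ α * L ^ (k + 1) := by
  rcases ha.eq_or_lt with rfl | ha
  · simp only [zero_mul]
    positivity
  have hL := ha.trans_le haL
  calc a * L ^ ((k : ℝ) + α) = a ^ α * a ^ (1 - α) * L ^ ((k : ℝ) + α) := by
        rw [← Real.rpow_add ha, add_sub_cancel, Real.rpow_one]
    _ ≤ a ^ α * L ^ (1 - α) * L ^ ((k : ℝ) + α) := by
        gcongr
    _ = a ^ α * L ^ (k + 1) := by
        rw [mul_assoc, ← Real.rpow_add hL, ← Real.rpow_natCast]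
        congr 2
        push_cast
        ring

theorem sInf_norm_sub_image_union_eq_infDist (S : Set ℂ) (U : Set ℝ) (x : ℝ) :
    sInf (((fun z : ℂ => ‖(x : ℂ) - z‖) '' S) ∪ ((fun y : ℝ => |x - y|) '' U))
      = Metric.infDist (x : ℂ) (S ∪ Complex.ofReal '' U) := by
  rw [Metric.infDist_eq_iInf, iInf, ← image_eq_range, image_union, image_image]
  congr 2
  · exact image_congr fun z _ => (Complex.dist_eq _ _).symm
  · exact image_congr fun y _ => by
      rw [Complex.dist_eq, ← Complex.ofReal_sub, Complex.norm_real, Real.norm_eq_abs]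

namespace Polynomial

section IsAlgClosed

variable {𝕜 : Type*} [NormedField 𝕜] [IsAlgClosed 𝕜]

theorem eval_iterate_derivative_eq_leadingCoeff_mul (P : 𝕜[X]) (j : ℕ) (x : 𝕜) :
    (derivative^[j] P).eval x
      = P.leadingCoeff * (derivative^[j] (P.roots.map (X - C ·)).prod).eval x := by
  conv_lhs => rw [(IsAlgClosed.splits P).eq_prod_roots]
  rw [iterate_derivative_C_mul, eval_mul, eval_C]

theorem norm_eval_iterate_derivative_mul_pow_le (P : 𝕜[X]) (j : ℕ) {x : 𝕜} {L : ℝ}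
    (hL : 0 ≤ L) (hP : ∀ z ∈ P.roots, L ≤ ‖x - z‖) :
    ‖(derivative^[j] P).eval x‖ * L ^ j ≤ (P.natDegree : ℝ) ^ j * ‖P.eval x‖ := by
  have h := Multiset.norm_eval_iterate_derivative_prod_X_sub_C_mul_pow_le j hL hP
  rw [← (IsAlgClosed.splits P).natDegree_eq_card_roots] at h
  have h0 := eval_iterate_derivative_eq_leadingCoeff_mul P 0 x
  rw [Function.iterate_zero_apply, Function.iterate_zero_apply] at h0
  rw [eval_iterate_derivative_eq_leadingCoeff_mul, h0, norm_mul, norm_mul, mul_assoc,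
    mul_left_comm _ ‖P.leadingCoeff‖]
  exact mul_le_mul_of_nonneg_left h (norm_nonneg _)

theorem norm_eval_le_of_norm_sub_le (P : 𝕜[X]) {x ξ : 𝕜} {L : ℝ}
    (hP : ∀ z ∈ P.roots, L ≤ ‖x - z‖) (hξ : ‖ξ - x‖ ≤ L / 2) :
    ‖P.eval ξ‖ ≤ (3 / 2) ^ P.natDegree * ‖P.eval x‖ := by
  have h := Multiset.norm_eval_prod_X_sub_C_le hP hξ
  rw [← (IsAlgClosed.splits P).natDegree_eq_card_roots] at h
  have h0 := fun y => eval_iterate_derivative_eq_leadingCoeff_mul P 0 y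
  simp only [Function.iterate_zero_apply] at h0
  rw [h0, h0, norm_mul, norm_mul, mul_left_comm]
  exact mul_le_mul_of_nonneg_left h (norm_nonneg _)

end IsAlgClosed

theorem norm_eval_map_ofReal (p : ℝ[X]) (x : ℝ) :
    ‖(p.map (algebraMap ℝ ℂ)).eval (x : ℂ)‖ = |p.eval x| := by
  rw [eval_map_algebraMap, ← Complex.coe_algebraMap, aeval_algebraMap_apply_eq_algebraMap_eval,
    Complex.coe_algebraMap, Complex.norm_real, Real.norm_eq_abs]

theorem abs_eval_iterate_derivative_mul_pow_le (p : ℝ[X]) (j : ℕ) {x L : ℝ} (hL : 0 ≤ L)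
    (hp : ∀ z ∈ p.aroots ℂ, L ≤ ‖(x : ℂ) - z‖) :
    |(derivative^[j] p).eval x| * L ^ j ≤ (p.natDegree : ℝ) ^ j * |p.eval x| := by
  simpa only [iterate_derivative_map, norm_eval_map_ofReal, natDegree_map] using
    norm_eval_iterate_derivative_mul_pow_le (p.map (algebraMap ℝ ℂ)) j hL hp

theorem abs_eval_le_of_abs_sub_le (p : ℝ[X]) {x t L : ℝ}
    (hp : ∀ z ∈ p.aroots ℂ, L ≤ ‖(x : ℂ) - z‖) (ht : |t - x| ≤ L / 2) :
    |p.eval t| ≤ (3 / 2) ^ p.natDegree * |p.eval x| := by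
  have ht' : ‖(t : ℂ) - x‖ ≤ L / 2 := by rwa [← Complex.ofReal_sub, Complex.norm_real]
  simpa only [norm_eval_map_ofReal, natDegree_map] using
    norm_eval_le_of_norm_sub_le (p.map (algebraMap ℝ ℂ)) hp ht'

theorem iteratedDeriv_eval {𝕜 : Type*} [NontriviallyNormedField 𝕜] (p : 𝕜[X]) (n : ℕ) :
    iteratedDeriv n (fun x => p.eval x) = fun x => (derivative^[n] p).eval x := by
  induction n with
  | zero => simp
  | succ n ih =>
    rw [iteratedDeriv_succ, ih, Function.iterate_succ_apply']
    funext x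
    exact Polynomial.deriv _

theorem abs_sub_eval_iterate_derivative_mul_rpow_le (p : ℝ[X]) (k : ℕ) {α x y L : ℝ}
    (hα : α ≤ 1) (hp : ∀ z ∈ p.aroots ℂ, L ≤ ‖(x : ℂ) - z‖)
    (hxy : |y - x| ≤ L / 2) :
    |(derivative^[k] p).eval x - (derivative^[k] p).eval y| * L ^ ((k : ℝ) + α)
      ≤ (p.natDegree : ℝ) ^ (k + 1) * (3 / 2) ^ p.natDegree * 2 ^ (k + 1)
        * |x - y| ^ α * |p.eval x| := by
  set d := p.natDegree
  set N := (d : ℝ) ^ (k + 1) * (3 / 2) ^ d * 2 ^ (k + 1) * |p.eval x|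
  have hL : 0 ≤ L := by linarith [abs_nonneg (y - x)]
  rcases hL.eq_or_lt with rfl | hL
  · obtain rfl : y = x := by simpa [sub_eq_zero] using hxy
    simp only [sub_self, abs_zero, zero_mul]
    positivity
  have hbound : ∀ t ∈ Metric.closedBall x (L / 2),
      ‖deriv (fun t => (derivative^[k] p).eval t) t‖ ≤ N / L ^ (k + 1) := by
    intro t ht
    rw [Metric.mem_closedBall, Real.dist_eq] at ht
    have hpt : ∀ z ∈ p.aroots ℂ, L / 2 ≤ ‖(t : ℂ) - z‖ := fun z hz => by
      have htx : ‖(x : ℂ) - t‖ = |t - x| := by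
        rw [← Complex.ofReal_sub, Complex.norm_real, Real.norm_eq_abs, abs_sub_comm]
      linarith [hp z hz, norm_sub_le_norm_sub_add_norm_sub (x : ℂ) t z]
    have hder := abs_eval_iterate_derivative_mul_pow_le p (k + 1) (by positivity) hpt
    have hcomp := abs_eval_le_of_abs_sub_le p hp ht
    rw [Polynomial.deriv, ← Function.iterate_succ_apply' derivative, Real.norm_eq_abs,
      le_div_iff₀ (by positivity)]
    calc _ = |(derivative^[k + 1] p).eval t| * (L / 2) ^ (k + 1) * 2 ^ (k + 1) := by
          rw [div_pow, mul_assoc, div_mul_cancel₀ _ (by positivity)]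
      _ ≤ (d : ℝ) ^ (k + 1) * ((3 / 2) ^ d * |p.eval x|) * 2 ^ (k + 1) := by
          gcongr ?_ * _
          exact hder.trans (by gcongr)
      _ = N := by ring
  have hmvt : |(derivative^[k] p).eval x - (derivative^[k] p).eval y|
      ≤ N / L ^ (k + 1) * |x - y| := by
    have := (convex_closedBall x (L / 2)).norm_image_sub_le_of_norm_deriv_le
      (fun t _ => Polynomial.differentiableAt _) hbound
      (Metric.mem_closedBall_self (by positivity))
      (by rwa [Metric.mem_closedBall, Real.dist_eq])
    rwa [Real.norm_eq_abs, Real.norm_eq_abs, abs_sub_comm, abs_sub_comm y] at this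
  have hxyL : |x - y| ≤ L := by rw [abs_sub_comm]; linarith
  calc _ ≤ N / L ^ (k + 1) * (|x - y| * L ^ ((k : ℝ) + α)) := by
        rw [← mul_assoc]; gcongr
    _ ≤ N / L ^ (k + 1) * (|x - y| ^ α * L ^ (k + 1)) := by
        gcongr _ * ?_
        exact Real.mul_rpow_add_le_rpow_mul_pow k (abs_nonneg _) hxyL hα
    _ = _ := by field_simp; ring

end Polynomial

theorem admissible_infDist_of_aroots_subset (φ : ℝ[X]) {d κ : ℕ} {α : ℝ} {Ω : Set ℝ}
    {T : Set ℂ} (hφ : φ.derivative.natDegree = d) (hd : 1 ≤ d) (hα : α ≤ 1)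
    (hroots : ∀ z ∈ φ.derivative.aroots ℂ, z ∈ T) (hΩ : Complex.ofReal '' Ωᶜ ⊆ T) :
    Admissible Ω (fun x => φ.eval x) κ α ((d : ℝ) ^ κ) (1 / 2)
      ((d : ℝ) ^ (κ + 1) * (3 / 2) ^ d * 2 ^ (κ + 1)) fun x => Metric.infDist (x : ℂ) T := by
  have hdist : ∀ x : ℝ, ∀ z ∈ φ.derivative.aroots ℂ,
      Metric.infDist (x : ℂ) T ≤ ‖(x : ℂ) - z‖ := fun x z hz =>
    (Metric.infDist_le_dist_of_mem (hroots z hz)).trans_eq (Complex.dist_eq _ _)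
  refine ⟨fun _ => Metric.infDist_nonneg, ?_,
    fun x hx => Metric.infDist_zero_of_mem (hΩ ⟨x, hx, rfl⟩),
    fun x _ j _ hjκ => ?_, fun x _ y _ hxy => ?_⟩
  · simpa only [mul_one, Function.comp_def] using
      (Metric.lipschitz_infDist_pt T).comp Complex.isometry_ofReal.lipschitz
  · rw [Polynomial.iteratedDeriv_eval, Polynomial.deriv, Function.iterate_succ_apply]
    calc _ ≤ (d : ℝ) ^ j * |φ.derivative.eval x| := by
          simpa only [hφ] using
            abs_eval_iterate_derivative_mul_pow_le _ j Metric.infDist_nonneg (hdist x)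
      _ ≤ (d : ℝ) ^ κ * |φ.derivative.eval x| := by
          gcongr
          exact_mod_cast hd
  · rw [Polynomial.iteratedDeriv_eval, Polynomial.deriv, Function.iterate_succ_apply]
    simpa only [hφ] using
      abs_sub_eval_iterate_derivative_mul_rpow_le _ κ hα (hdist x) (by linarith)

theorem polynomial_distance_admissible_general
    (d : ℕ) (hd : 1 ≤ d) (κ : ℕ) (α : ℝ) (hα1 : α ≤ 1) :
    ∃ A c B : ℝ, 0 ≤ A ∧ 0 < c ∧ 0 ≤ B ∧
      ∀ (φ : Polynomial ℝ) (Ω : Set ℝ),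
        φ.natDegree = d + 1 → IsOpen Ω → Ω.Nonempty →
        Ω ⊆ {x : ℝ | 0 < φ.derivative.eval x} →
        Admissible Ω (fun x => φ.eval x) κ α A c B fun x =>
          if x ∈ Ω then
            sInf (((fun z : ℂ => ‖(x : ℂ) - z‖) ''
                {z : ℂ | Polynomial.aeval z φ.derivative = 0}) ∪
              ((fun y : ℝ => |x - y|) '' Ωᶜ))
          else 0 := by
  refine ⟨(d : ℝ) ^ κ, 1 / 2, (d : ℝ) ^ (κ + 1) * (3 / 2) ^ d * 2 ^ (κ + 1), by positivity,
    by norm_num, by positivity, fun φ Ω hφ _ _ _ => ?_⟩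
  set T : Set ℂ := {z | aeval z φ.derivative = 0} ∪ Complex.ofReal '' Ωᶜ
  convert admissible_infDist_of_aroots_subset φ (T := T) (by simp [hφ]) hd hα1
    (fun z hz => Or.inl (mem_aroots'.1 hz).2) subset_union_right using 2 with x
  split_ifs with hx
  · exact sInf_norm_sub_image_union_eq_infDist _ _ x
  · exact (Metric.infDist_zero_of_mem (s := T) (Or.inr ⟨x, hx, rfl⟩)).symm

/-- **Proposition 2.6.** Let `φ` be a real polynomial of degree `d + 1` (`d ≥ 1`) and let
`Ω` be a nonempty open subset of `{φ′ > 0}`.  The function equal, on `Ω`, to the minimum of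
the distance to the complex zeros of `φ′` and the distance to `ℝ ∖ Ω` (and to `0` off `Ω`)
is admissible for `φ, κ, α` on `Ω` for every `κ` and `α ∈ [0,1]`, with constants depending
only on `d, κ, α`. -/
theorem polynomial_distance_admissible
    (d : ℕ) (hd : 1 ≤ d) (κ : ℕ) (α : ℝ) (hα0 : 0 ≤ α) (hα1 : α ≤ 1) :
    ∃ A c B : ℝ, 0 ≤ A ∧ 0 < c ∧ 0 ≤ B ∧
      ∀ (φ : Polynomial ℝ) (Ω : Set ℝ),
        φ.natDegree = d + 1 → IsOpen Ω → Ω.Nonempty →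
        Ω ⊆ {x : ℝ | 0 < φ.derivative.eval x} →
        Admissible Ω (fun x => φ.eval x) κ α A c B fun x =>
          if x ∈ Ω then
            sInf (((fun z : ℂ => ‖(x : ℂ) - z‖) ''
                {z : ℂ | Polynomial.aeval z φ.derivative = 0}) ∪
              ((fun y : ℝ => |x - y|) '' Ωᶜ))
          else 0 :=
  polynomial_distance_admissible_general d hd κ α hα1

end
end

section
/- Let d ≥ 1 be an integer, let z₁, …, z_d ∈ ℂ, and let p(z) = ∏_{j=1}^d (z − z_j). Define ℓ₀(z) = min_{1≤j≤d} |z − z_j|. Then for every integer 0 ≤ k ≤ d and every z ∈ ℂ: |p^{(k)}(z)| (ℓ₀(z))^k ≤ (d!/(d−k)!) |p(z)|. -/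
open MeasureTheory Real Set
open scoped ENNReal NNReal Topology Classical

noncomputable section

/-! Differentiating `∏ⱼ (X - zⱼ)` once gives the sum of the `d` products with one linear factor
removed; iterating, `p^{(k)}` is a sum of `d (d - 1) ⋯ (d - k + 1)` products of `d - k` factors.
At `w`, each removed factor `|w - zⱼ|` is at least `ℓ₀(w)`, so each term times `ℓ₀(w)^k` is at
most `|p(w)|`. The bound is proved by induction on `k`, simultaneously for all sub-products. -/

open Finset Polynomial

theorem Nat.mul_descFactorial_pred (n k : ℕ) :
    n * (n - 1).descFactorial k = n.descFactorial (k + 1) := by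
  cases n with
  | zero => simp
  | succ n => rw [Nat.add_sub_cancel, Nat.succ_descFactorial_succ]

namespace Polynomial

variable {R ι : Type*}

theorem derivative_prod_X_sub_C [CommRing R] [DecidableEq ι] (s : Finset ι) (z : ι → R) :
    derivative (∏ j ∈ s, (X - C (z j))) = ∑ j ∈ s, ∏ i ∈ s.erase j, (X - C (z i)) := by
  simp [derivative_prod_finset]

theorem norm_eval_iterate_derivative_prod_X_sub_C_mul_pow_le [NormedCommRing R] [NormOneClass R]
    (z : ι → R) (w : R) {ℓ : ℝ} (hℓ₀ : 0 ≤ ℓ) (k : ℕ) (s : Finset ι)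
    (hℓ : ∀ j ∈ s, ℓ ≤ ‖w - z j‖) :
    ‖(derivative^[k] (∏ j ∈ s, (X - C (z j)))).eval w‖ * ℓ ^ k ≤
      ((#s).descFactorial k : ℕ) * ∏ j ∈ s, ‖w - z j‖ := by
  induction k generalizing s with
  | zero => simpa [eval_prod] using norm_prod_le s (fun j => w - z j)
  | succ k ih =>
    have hterm : ∀ j ∈ s,
        ‖(derivative^[k] (∏ i ∈ s.erase j, (X - C (z i)))).eval w‖ * ℓ ^ k * ℓ ≤
          ((#s - 1).descFactorial k : ℕ) * ∏ i ∈ s, ‖w - z i‖ := by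
      intro j hj
      have hprod : (∏ i ∈ s.erase j, ‖w - z i‖) * ℓ ≤ ∏ i ∈ s, ‖w - z i‖ := by
        rw [← mul_prod_erase s (fun i => ‖w - z i‖) hj, mul_comm]
        exact mul_le_mul_of_nonneg_right (hℓ j hj) (prod_nonneg fun i _ => norm_nonneg _)
      calc _ ≤ ((#(s.erase j)).descFactorial k : ℕ) * (∏ i ∈ s.erase j, ‖w - z i‖) * ℓ :=
            mul_le_mul_of_nonneg_right
              (ih (s.erase j) fun i hi => hℓ i (mem_of_mem_erase hi)) hℓ₀
        _ ≤ _ := by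
            rw [card_erase_of_mem hj, mul_assoc]
            exact mul_le_mul_of_nonneg_left hprod (Nat.cast_nonneg _)
    rw [Function.iterate_succ_apply, derivative_prod_X_sub_C, iterate_derivative_sum,
      eval_finsetSum]
    calc _ ≤ (∑ j ∈ s, ‖(derivative^[k] (∏ i ∈ s.erase j, (X - C (z i)))).eval w‖) * ℓ ^ (k + 1) :=
          mul_le_mul_of_nonneg_right (norm_sum_le _ _) (pow_nonneg hℓ₀ _)
      _ = ∑ j ∈ s, ‖(derivative^[k] (∏ i ∈ s.erase j, (X - C (z i)))).eval w‖ * ℓ ^ k * ℓ := by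
          simp only [sum_mul, pow_succ, mul_assoc]
      _ ≤ ∑ _j ∈ s, ((#s - 1).descFactorial k : ℕ) * ∏ i ∈ s, ‖w - z i‖ := sum_le_sum hterm
      _ = _ := by
          rw [sum_const, nsmul_eq_mul, ← mul_assoc, ← Nat.mul_descFactorial_pred]
          push_cast
          ring

end Polynomial

theorem derivative_bound_of_roots_general
    (d : ℕ) (z : Fin d → ℂ) (k : ℕ) (w : ℂ) :
    ‖((Polynomial.derivative^[k]
          (∏ j : Fin d, (Polynomial.X - Polynomial.C (z j)))).eval w)‖ *
      (⨅ j : Fin d, ‖w - z j‖) ^ k ≤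
      (d.descFactorial k : ℝ) *
        ‖(∏ j : Fin d, (Polynomial.X - Polynomial.C (z j))).eval w‖ := by
  have hbdd : BddBelow (range fun j => ‖w - z j‖) :=
    ⟨0, by rintro _ ⟨j, rfl⟩; exact norm_nonneg _⟩
  have h := norm_eval_iterate_derivative_prod_X_sub_C_mul_pow_le z w
    (Real.iInf_nonneg fun j => norm_nonneg _) k univ fun j _ => ciInf_le hbdd j
  simpa [eval_prod, norm_prod] using h

/-- If `p(z) = ∏_{j=1}^d (z − z_j)` and `ℓ₀(z) = min_j |z − z_j|`, then for `0 ≤ k ≤ d`,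
`|p^{(k)}(z)| ℓ₀(z)^k ≤ (d!/(d−k)!) |p(z)|` for every `z ∈ ℂ`. -/
theorem derivative_bound_of_roots
    (d : ℕ) (hd : 1 ≤ d) (z : Fin d → ℂ) (k : ℕ) (hk : k ≤ d) (w : ℂ) :
    ‖((Polynomial.derivative^[k]
          (∏ j : Fin d, (Polynomial.X - Polynomial.C (z j)))).eval w)‖ *
      (⨅ j : Fin d, ‖w - z j‖) ^ k ≤
      (d.descFactorial k : ℝ) *
        ‖(∏ j : Fin d, (Polynomial.X - Polynomial.C (z j))).eval w‖ :=
  derivative_bound_of_roots_general d z k w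
end
end

section
/- Let ℓ : ℝ → [0,∞), let U = {x ∈ ℝ : ℓ(x) > 0}, and let G be a countable collection of closed bounded intervals contained in U such that: the union of the intervals in G equals U; every I ∈ G intersects exactly two other members of G (one on its left and one on its right), with the ratio of lengths of any two intersecting intervals of G in [1/2, 2]; any two disjoint intervals I, I′ ∈ G are separated by a distance at least |I|/4; and every I ∈ G satisfies max{|I|, inf_{x∈I} ℓ(x), sup_{x∈I} ℓ(x)} ≤ 6 min{|I|, inf_{x∈I} ℓ(x), sup_{x∈I} ℓ(x)}. Let G_L ⊆ G and for each I ∈ G_L let Λ_I > 0 satisfy Λ_I |I| ≥ 1. Then for every b < 0 and every m ≥ 1 − b there is a constant C, depending only on b and m, such that for all x ∈ U: Σ_{I∈G_L} |I|^b (1 + Λ_I dist(x, I))^{−m} ≤ C (ℓ(x))^b. -/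
/-!
Fix `x` with `ℓ x > 0` and a Whitney interval `I₀ ∋ x`, so `ℓ x ≤ 6 |I₀|`. Every `I ∈ G` either
meets `I₀`, and then `|I₀| ≤ 2 |I|`, or is separated from it, and then `dist(x, I) ≥ |I₀| / 4`; in
both cases `ℓ x ≤ 24 (|I| + dist(x, I))`. Together with `Λ_I |I| ≥ 1` and `m ≥ 1 - b` this bounds
each term by `25^(1-b)` times the integral over `I` of `(ℓ x + |x - t|)^(b-1)`. No point lies in
more than three intervals of `G`, so the sum is at most `3 · 25^(1-b)` times the integral of this
weight over `ℝ`, which is `2 ℓ(x)^b / (-b)`.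
-/

open MeasureTheory Real Set
open scoped ENNReal

theorem lintegral_comp_abs (f : ℝ → ℝ≥0∞) : ∫⁻ x, f |x| = 2 * ∫⁻ x in Ioi 0, f x := by
  have hpos : ∫⁻ x in Ioi 0, f |x| = ∫⁻ x in Ioi 0, f x :=
    setLIntegral_congr_fun measurableSet_Ioi fun x hx => by rw [abs_of_pos hx]
  have hneg : ∫⁻ x in Iic 0, f |x| = ∫⁻ x in Ioi 0, f x := by
    have := (Measure.measurePreserving_neg volume).setLIntegral_comp_preimage_emb
      (Homeomorph.neg ℝ).measurableEmbedding (fun x => f |x|) (Iic 0)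
    rw [← hpos, ← this, setLIntegral_congr Ioi_ae_eq_Ici]
    simp
  rw [← lintegral_add_compl _ measurableSet_Ioi, compl_Ioi, hpos, hneg, two_mul]

theorem lintegral_Ioi_add_rpow {c b : ℝ} (hc : 0 < c) (hb : b < 0) :
    ∫⁻ u in Ioi 0, ENNReal.ofReal ((c + u) ^ (b - 1)) = ENNReal.ofReal (c ^ b / -b) := by
  have htrans := (measurePreserving_add_left volume c).setLIntegral_comp_preimage_emb
    (measurableEmbedding_addLeft c) (fun s => ENNReal.ofReal (s ^ (b - 1))) (Ioi c)
  rw [preimage_const_add_Ioi, sub_self] at htrans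
  rw [htrans, ← ofReal_integral_eq_lintegral_ofReal
    (integrableOn_Ioi_rpow_of_lt (by linarith) hc), integral_Ioi_rpow_of_lt (by linarith) hc,
    sub_add_cancel, neg_div, div_neg]
  filter_upwards [ae_restrict_mem measurableSet_Ioi] with s hs
  exact rpow_nonneg (hc.trans hs).le _

theorem lintegral_add_abs_sub_rpow {c b : ℝ} (hc : 0 < c) (hb : b < 0) (x : ℝ) :
    ∫⁻ t, ENNReal.ofReal ((c + |x - t|) ^ (b - 1)) = 2 * ENNReal.ofReal (c ^ b / -b) := by
  rw [lintegral_sub_left_eq_self (fun t => ENNReal.ofReal ((c + |t|) ^ (b - 1))) x,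
    lintegral_comp_abs fun u => ENNReal.ofReal ((c + u) ^ (b - 1)), lintegral_Ioi_add_rpow hc hb]

theorem ENNReal.tsum_le_card_mul {ι : Type*} {f : ι → ℝ≥0∞} {c : ℝ≥0∞} (A : Finset ι)
    (hA : ∀ i ∉ A, f i = 0) (hc : ∀ i ∈ A, f i ≤ c) : ∑' i, f i ≤ A.card * c := by
  rw [tsum_eq_sum hA, ← nsmul_eq_mul]
  exact A.sum_le_card_nsmul f c hc

theorem tsum_setLIntegral_le_mul {ι X : Type*} [Countable ι] [MeasurableSpace X] {μ : Measure X}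
    {s : ι → Set X} (hs : ∀ i, MeasurableSet (s i)) {f : X → ℝ≥0∞} (hf : Measurable f) {N : ℕ}
    (hmult : ∀ t, ∃ A : Finset ι, A.card ≤ N ∧ ∀ i, t ∈ s i → i ∈ A) :
    ∑' i, ∫⁻ t in s i, f t ∂μ ≤ N * ∫⁻ t, f t ∂μ := by
  have hpt (t : X) : ∑' i, (s i).indicator f t ≤ N * f t := by
    obtain ⟨A, hAN, hA⟩ := hmult t
    calc ∑' i, (s i).indicator f t ≤ A.card * f t :=
          ENNReal.tsum_le_card_mul A (fun i hi => indicator_of_notMem (mt (hA i) hi) f)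
            fun i _ => indicator_le_self _ _ t
      _ ≤ N * f t := by gcongr
  calc ∑' i, ∫⁻ t in s i, f t ∂μ = ∫⁻ t, ∑' i, (s i).indicator f t ∂μ := by
        rw [lintegral_tsum fun i => (hf.indicator (hs i)).aemeasurable]
        simp_rw [lintegral_indicator (hs _)]
    _ ≤ ∫⁻ t, N * f t ∂μ := lintegral_mono hpt
    _ = N * ∫⁻ t, f t ∂μ := lintegral_const_mul _ hf

theorem exists_finset_card_le_three_of_neighbors {α β : Type*} {G H : Set α} {S : α → Set β}
    (hnbr : ∀ I ∈ G, ∃ J K, ∀ L ∈ G, L ≠ I → (S L ∩ S I).Nonempty → L = J ∨ L = K)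
    (hH : H ⊆ G) (t : β) : ∃ A : Finset H, A.card ≤ 3 ∧ ∀ L : H, t ∈ S L → L ∈ A := by
  classical
  by_cases ht : ∃ I ∈ G, t ∈ S I
  · obtain ⟨I, hI, htI⟩ := ht
    obtain ⟨J, K, hJK⟩ := hnbr I hI
    refine ⟨({I, J, K} : Finset α).subtype (· ∈ H), ?_, fun L htL => ?_⟩
    · rw [Finset.card_subtype]
      exact (Finset.card_filter_le _ _).trans Finset.card_le_three
    · rw [Finset.mem_subtype]
      by_cases hLI : (L : α) = I
      · simp [hLI]
      · rcases hJK L (hH L.2) hLI ⟨t, htL, htI⟩ with h | h <;> simp [h]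
  · exact ⟨∅, by simp, fun L htL => (ht ⟨L, hH L.2, htL⟩).elim⟩

theorem le_mul_of_max_le_mul_min {α : Type*} {f : α → ℝ} {s : Set α} {L c : ℝ} (hL : 0 < L)
    (hc : 0 ≤ c)
    (h : max L (max (sInf (f '' s)) (sSup (f '' s))) ≤
      c * min L (min (sInf (f '' s)) (sSup (f '' s))))
    {y : α} (hy : y ∈ s) : f y ≤ c * L := by
  have hmin : min L (min (sInf (f '' s)) (sSup (f '' s))) ≤ L := min_le_left _ _
  have hmax : sSup (f '' s) ≤ max L (max (sInf (f '' s)) (sSup (f '' s))) :=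
    (le_max_right _ _).trans (le_max_right _ _)
  -- otherwise `sSup (f '' s) = 0` and the hypothesis would force `L ≤ 0`
  have hbdd : BddAbove (f '' s) := by
    by_contra hunb
    rw [Real.sSup_of_not_bddAbove hunb] at h
    have : min L (min (sInf (f '' s)) 0) ≤ 0 := (min_le_right _ _).trans (min_le_right _ _)
    nlinarith [le_max_left L (max (sInf (f '' s)) 0)]
  calc f y ≤ sSup (f '' s) := le_csSup hbdd (mem_image_of_mem f hy)
    _ ≤ c * L := hmax.trans (h.trans (mul_le_mul_of_nonneg_left hmin hc))

theorem le_mul_length_add_infDist {I₀ I : ℝ × ℝ} {x l : ℝ} (hxI₀ : x ∈ Icc I₀.1 I₀.2)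
    (hI : I.1 < I.2) (hl : l ≤ 6 * (I₀.2 - I₀.1))
    (hratio : (Icc I.1 I.2 ∩ Icc I₀.1 I₀.2).Nonempty → I₀.2 - I₀.1 ≤ 2 * (I.2 - I.1))
    (hsep : Icc I₀.1 I₀.2 ∩ Icc I.1 I.2 = ∅ →
      ∀ x ∈ Icc I₀.1 I₀.2, ∀ y ∈ Icc I.1 I.2, (I₀.2 - I₀.1) / 4 ≤ |x - y|) :
    l ≤ 24 * (I.2 - I.1 + Metric.infDist x (Icc I.1 I.2)) := by
  have hd : 0 ≤ Metric.infDist x (Icc I.1 I.2) := Metric.infDist_nonneg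
  by_cases hmeet : (Icc I.1 I.2 ∩ Icc I₀.1 I₀.2).Nonempty
  · linarith [hratio hmeet]
  · have hdisj : Icc I₀.1 I₀.2 ∩ Icc I.1 I.2 = ∅ := by
      rwa [inter_comm, ← not_nonempty_iff_eq_empty]
    have hfar : (I₀.2 - I₀.1) / 4 ≤ Metric.infDist x (Icc I.1 I.2) :=
      (Metric.le_infDist (nonempty_Icc.2 hI.le)).2 fun y hy => hsep hdisj x hxI₀ y hy
    linarith

theorem rpow_mul_one_add_mul_rpow_neg_le {L d Λ ρ c b m : ℝ} (hL : 0 < L) (hd : 0 ≤ d)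
    (hΛ : 1 ≤ Λ * L) (hρ : 0 < ρ) (hρc : ρ ≤ c * (L + d)) (hb : b ≤ 1) (hm : 1 - b ≤ m) :
    L ^ b * (1 + Λ * d) ^ (-m) ≤ c ^ (1 - b) * (ρ ^ (b - 1) * L) := by
  have hc : 0 < c := by nlinarith
  have hA : 1 ≤ 1 + Λ * d := by nlinarith
  -- `d ≤ Λ L d` turns the size condition into `ρ ≤ c L (1 + Λ d)`
  have hρA : ρ ≤ c * L * (1 + Λ * d) := by
    nlinarith [mul_le_mul_of_nonneg_left hΛ (mul_nonneg hc.le hd)]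
  have hc' : c ^ (b - 1) = (c ^ (1 - b))⁻¹ := by rw [← rpow_neg hc.le, neg_sub]
  calc L ^ b * (1 + Λ * d) ^ (-m) ≤ L ^ b * (1 + Λ * d) ^ (b - 1) := by
        gcongr
        linarith
    _ = c ^ (1 - b) * ((c * L * (1 + Λ * d)) ^ (b - 1) * L) := by
        rw [mul_rpow (by positivity) (by linarith), mul_rpow hc.le hL.le, hc',
          rpow_sub_one hL.ne']
        field_simp
    _ ≤ c ^ (1 - b) * (ρ ^ (b - 1) * L) := by
        have := rpow_le_rpow_of_nonpos hρ hρA (by linarith : b - 1 ≤ 0)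
        gcongr

theorem ofReal_rpow_mul_le_setLIntegral {p q x l c Λ b m : ℝ} (hpq : p < q) (hl : 0 < l)
    (hΛ : 1 ≤ Λ * (q - p)) (hb : b ≤ 1) (hm : 1 - b ≤ m)
    (hscale : l ≤ c * (q - p + Metric.infDist x (Icc p q))) :
    ENNReal.ofReal ((q - p) ^ b * (1 + Λ * Metric.infDist x (Icc p q)) ^ (-m)) ≤
      ENNReal.ofReal ((c + 1) ^ (1 - b)) *
        ∫⁻ t in Icc p q, ENNReal.ofReal ((l + |x - t|) ^ (b - 1)) := by
  set d := Metric.infDist x (Icc p q)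
  have hd : 0 ≤ d := Metric.infDist_nonneg
  have hρ : 0 < l + d + (q - p) := by linarith
  have hfar (t : ℝ) (ht : t ∈ Icc p q) : l + |x - t| ≤ l + d + (q - p) := by
    have := Metric.dist_le_infDist_add_diam (x := x) (Metric.isBounded_Icc p q) ht
    rw [diam_Icc hpq.le, dist_eq] at this
    linarith
  have hint : ENNReal.ofReal ((l + d + (q - p)) ^ (b - 1) * (q - p)) ≤
      ∫⁻ t in Icc p q, ENNReal.ofReal ((l + |x - t|) ^ (b - 1)) := by
    rw [ENNReal.ofReal_mul (by positivity), ← volume_Icc, ← setLIntegral_const]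
    refine setLIntegral_mono (by fun_prop) fun t ht => ENNReal.ofReal_le_ofReal ?_
    exact rpow_le_rpow_of_nonpos (by positivity) (hfar t ht) (by linarith)
  calc ENNReal.ofReal ((q - p) ^ b * (1 + Λ * d) ^ (-m))
      ≤ ENNReal.ofReal ((c + 1) ^ (1 - b) * ((l + d + (q - p)) ^ (b - 1) * (q - p))) := by
        refine ENNReal.ofReal_le_ofReal
          (rpow_mul_one_add_mul_rpow_neg_le (sub_pos.2 hpq) hd hΛ hρ ?_ hb hm)
        linarith
    _ ≤ _ := by
        rw [ENNReal.ofReal_mul' (by positivity)]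
        gcongr

/-- **Lemma 3.2 (summation lemma).** Let `G` be a Whitney-type collection of intervals for
`ℓ` (covering `U = {ℓ > 0}`, with neighbor, ratio, separation, and `6`-comparability
properties), let `G_L ⊆ G` and `Λ_I |I| ≥ 1` for `I ∈ G_L`.  Then for `b < 0` and
`m ≥ 1 − b` there is `C = C(b, m)` such that for every `x ∈ U`:
`Σ_{I∈G_L} |I|^b (1 + Λ_I d(x,I))^{−m} ≤ C ℓ(x)^b`. -/
theorem whitney_summation
    (b m : ℝ) (hb : b < 0) (hm : 1 - b ≤ m) :
    ∃ C : ℝ, 0 < C ∧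
      ∀ (ℓ : ℝ → ℝ) (G Glarge : Set (ℝ × ℝ)) (Λ : ℝ × ℝ → ℝ),
        (∀ x, 0 ≤ ℓ x) → G.Countable → (∀ I ∈ G, I.1 < I.2) →
        (⋃ I ∈ G, Set.Icc I.1 I.2) = {x : ℝ | 0 < ℓ x} →
        (∀ I ∈ G, ∃ J ∈ G, ∃ K ∈ G, J ≠ I ∧ K ≠ I ∧ J ≠ K ∧
          J.1 < I.1 ∧ I.2 < K.2 ∧
          (Set.Icc J.1 J.2 ∩ Set.Icc I.1 I.2).Nonempty ∧
          (Set.Icc I.1 I.2 ∩ Set.Icc K.1 K.2).Nonempty ∧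
          ∀ L ∈ G, L ≠ I → (Set.Icc L.1 L.2 ∩ Set.Icc I.1 I.2).Nonempty → L = J ∨ L = K) →
        (∀ I ∈ G, ∀ J ∈ G, (Set.Icc I.1 I.2 ∩ Set.Icc J.1 J.2).Nonempty →
          J.2 - J.1 ≤ 2 * (I.2 - I.1)) →
        (∀ I ∈ G, ∀ J ∈ G, Set.Icc I.1 I.2 ∩ Set.Icc J.1 J.2 = ∅ →
          ∀ x ∈ Set.Icc I.1 I.2, ∀ y ∈ Set.Icc J.1 J.2, (I.2 - I.1) / 4 ≤ |x - y|) →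
        (∀ I ∈ G,
          max (I.2 - I.1) (max (sInf (ℓ '' Set.Icc I.1 I.2)) (sSup (ℓ '' Set.Icc I.1 I.2))) ≤
            6 * min (I.2 - I.1)
              (min (sInf (ℓ '' Set.Icc I.1 I.2)) (sSup (ℓ '' Set.Icc I.1 I.2)))) →
        Glarge ⊆ G →
        (∀ I ∈ Glarge, 0 < Λ I ∧ 1 ≤ Λ I * (I.2 - I.1)) →
        ∀ x : ℝ, 0 < ℓ x →
          ∑' I : Glarge,
              ENNReal.ofReal
                (((I : ℝ × ℝ).2 - (I : ℝ × ℝ).1) ^ b *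
                  (1 + Λ I * Metric.infDist x (Set.Icc (I : ℝ × ℝ).1 (I : ℝ × ℝ).2)) ^ (-m)) ≤
            ENNReal.ofReal (C * ℓ x ^ b) := by
  refine ⟨6 * 25 ^ (1 - b) / -b, div_pos (by positivity) (neg_pos.2 hb), ?_⟩
  intro ℓ G Gl Λ _ hGc hlen hcover hnbr hratio hsep hcomp hGl hΛ x hx
  have : Countable Gl := (hGc.mono hGl).to_subtype
  obtain ⟨I₀, hI₀, hxI₀⟩ := mem_iUnion₂.mp (hcover ▸ hx : x ∈ ⋃ I ∈ G, Icc I.1 I.2)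
  have hl : ℓ x ≤ 6 * (I₀.2 - I₀.1) :=
    le_mul_of_max_le_mul_min (sub_pos.2 (hlen I₀ hI₀)) (by norm_num) (hcomp I₀ hI₀) hxI₀
  have hmult := exists_finset_card_le_three_of_neighbors (S := fun I => Icc I.1 I.2)
    (fun I hI => by obtain ⟨J, -, K, -, -, -, -, -, -, -, -, h⟩ := hnbr I hI; exact ⟨J, K, h⟩) hGl
  calc _ ≤ ∑' I : Gl, ENNReal.ofReal ((24 + 1) ^ (1 - b)) *
          ∫⁻ t in Icc (I : ℝ × ℝ).1 (I : ℝ × ℝ).2, ENNReal.ofReal ((ℓ x + |x - t|) ^ (b - 1)) :=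
        ENNReal.tsum_le_tsum fun I => ofReal_rpow_mul_le_setLIntegral (hlen I (hGl I.2)) hx
          (hΛ I I.2).2 (by linarith) hm
          (le_mul_length_add_infDist hxI₀ (hlen I (hGl I.2)) hl (hratio I (hGl I.2) I₀ hI₀)
            (hsep I₀ hI₀ I (hGl I.2)))
    _ ≤ ENNReal.ofReal ((24 + 1) ^ (1 - b)) *
          (3 * ∫⁻ t, ENNReal.ofReal ((ℓ x + |x - t|) ^ (b - 1))) := by
        rw [ENNReal.tsum_mul_left]
        gcongr
        exact_mod_cast tsum_setLIntegral_le_mul (fun _ => measurableSet_Icc) (by fun_prop) hmult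
    _ = ENNReal.ofReal (6 * 25 ^ (1 - b) / -b * ℓ x ^ b) := by
        rw [lintegral_add_abs_sub_rpow hx hb, ← ENNReal.ofReal_ofNat 2, ← ENNReal.ofReal_ofNat 3,
          ← ENNReal.ofReal_mul zero_le_two, ← ENNReal.ofReal_mul zero_le_three,
          ← ENNReal.ofReal_mul (by positivity)]
        congr 1
        norm_num
        ring
end

section
/- Let α ∈ (0,1] and let h : ℝ → [0,∞) be a continuous function satisfying |h(x) − h(y)| ≤ α 2^{α−1} |x−y|^α for all x, y ∈ ℝ. Then the function h^{1/α} has property (L). -/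
open MeasureTheory Real Set
open scoped ENNReal NNReal Topology Classical

noncomputable section

lemma key_ineq {α : ℝ} (hα0 : 0 < α) (hα1 : α ≤ 1) :
    α * 2 ^ (α - 1) ≤ (2:ℝ) ^ α - 1 := by
  have hconv := convexOn_exp.2 (Set.mem_univ (0:ℝ)) (Set.mem_univ (-Real.log 2))
    (by linarith : (0:ℝ) ≤ 1 - α) hα0.le (by ring)
  simp only [smul_eq_mul, mul_zero, zero_add, Real.exp_zero, mul_one] at hconv
  have he : Real.exp (-Real.log 2) = 2⁻¹ := by
    rw [Real.exp_neg, Real.exp_log (by norm_num)]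
  rw [he] at hconv
  have h2 : (2:ℝ) ^ (-α) = Real.exp (Real.log 2 * (-α)) :=
    Real.rpow_def_of_pos (by norm_num) _
  have hconv' : (2:ℝ) ^ (-α) ≤ 1 - α / 2 := by
    rw [h2]
    calc Real.exp (Real.log 2 * (-α)) = Real.exp (α * -Real.log 2) := by ring_nf
    _ ≤ (1 - α) + α * 2⁻¹ := hconv
    _ = 1 - α / 2 := by ring
  have hpos : (0:ℝ) < 2 ^ α := Real.rpow_pos_of_pos (by norm_num) _
  have hinv : (2:ℝ) ^ (-α) = (2 ^ α)⁻¹ := Real.rpow_neg (by norm_num) _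
  rw [hinv] at hconv'
  have hsub : (2:ℝ) ^ (α - 1) = 2 ^ α / 2 := by
    rw [Real.rpow_sub (by norm_num), Real.rpow_one]
  rw [hsub]
  have := (inv_le_iff_one_le_mul₀ hpos).mp hconv'
  nlinarith [hpos]

/-- If `h ≥ 0` is continuous and `|h(x) − h(y)| ≤ α 2^{α−1} |x−y|^α`, then `h^{1/α}` has
property (L). -/
theorem propertyL_of_holder
    (α : ℝ) (hα0 : 0 < α) (hα1 : α ≤ 1)
    (h : ℝ → ℝ) (hcont : Continuous h) (hnn : ∀ x, 0 ≤ h x)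
    (hH : ∀ x y : ℝ, |h x - h y| ≤ α * 2 ^ (α - 1) * |x - y| ^ α) :
    PropertyL fun x => h x ^ (1 / α) := by
  have hinvα : (0:ℝ) ≤ 1 / α := by positivity
  set g : ℝ → ℝ := fun x => h x ^ (1 / α) with hg
  have hgcont : Continuous g := hcont.rpow_const (fun x => Or.inr hinvα)
  have hgnn : ∀ x, 0 ≤ g x := fun x => Real.rpow_nonneg (hnn x) _
  have hgpow : ∀ x, (g x) ^ α = h x := by
    intro x
    simp only [hg]
    rw [← Real.rpow_mul (hnn x), one_div_mul_cancel hα0.ne', Real.rpow_one]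
  refine ⟨hgcont, hgnn, ?_⟩
  intro a b hab
  have hK : IsCompact (Set.Icc a b) := isCompact_Icc
  have hne : (Set.Icc a b).Nonempty := Set.nonempty_Icc.2 hab
  obtain ⟨p, hp, hpmax⟩ := hK.exists_isMaxOn hne hgcont.continuousOn
  obtain ⟨q, hq, hqmin⟩ := hK.exists_isMinOn hne hgcont.continuousOn
  have hSup : sSup (g '' Set.Icc a b) = g p := by
    refine IsGreatest.csSup_eq ⟨Set.mem_image_of_mem _ hp, ?_⟩
    rintro _ ⟨x, hx, rfl⟩
    exact hpmax hx
  have hInf : sInf (g '' Set.Icc a b) = g q := by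
    refine IsLeast.csInf_eq ⟨Set.mem_image_of_mem _ hq, ?_⟩
    rintro _ ⟨x, hx, rfl⟩
    exact hqmin hx
  rw [hSup, hInf]
  by_cases hcase : g p ≤ 2 * g q
  · exact Or.inl hcase
  · right
    push_neg at hcase
    set M := g p with hM
    set m := g q with hm
    have hm0 : 0 ≤ m := hgnn q
    have hM0 : 0 < M := lt_of_le_of_lt (by linarith) hcase
    have hmq : m < M / 2 := by linarith
    -- h p - h q = M^α - m^α
    have hdiff : M ^ α - m ^ α ≤ α * 2 ^ (α - 1) * (b - a) ^ α := by
      have h1 : M ^ α - m ^ α = h p - h q := by rw [hgpow, hgpow]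
      have h2 : h p - h q ≤ |h p - h q| := le_abs_self _
      have h3 : |p - q| ≤ b - a := by
        rw [abs_sub_le_iff]
        constructor <;> [linarith [hp.1, hp.2, hq.1, hq.2]; linarith [hp.1, hp.2, hq.1, hq.2]]
      have h4 : |p - q| ^ α ≤ (b - a) ^ α :=
        Real.rpow_le_rpow (abs_nonneg _) h3 hα0.le
      calc M ^ α - m ^ α = h p - h q := h1
        _ ≤ |h p - h q| := h2
        _ ≤ α * 2 ^ (α - 1) * |p - q| ^ α := hH p q
        _ ≤ α * 2 ^ (α - 1) * (b - a) ^ α := by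
            have : (0:ℝ) ≤ α * 2 ^ (α - 1) := by positivity
            exact mul_le_mul_of_nonneg_left h4 this
    have hmlt : m ^ α < (M / 2) ^ α := Real.rpow_lt_rpow hm0 hmq hα0
    have hMhalf : (M / 2) ^ α = M ^ α / 2 ^ α :=
      Real.div_rpow hM0.le (by norm_num : (0:ℝ) ≤ 2) α
    have h2pos : (0:ℝ) < 2 ^ α := Real.rpow_pos_of_pos (by norm_num) _
    have h2gt : (1:ℝ) < 2 ^ α := by
      have := Real.rpow_lt_rpow_left_iff (x := (2:ℝ)) (by norm_num) (y := 0) (z := α)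
      simpa [Real.rpow_zero] using this.mpr hα0
    have hkey := key_ineq hα0 hα1
    -- M^α - M^α/2^α < α 2^(α-1) (b-a)^α ≤ (2^α - 1)(b-a)^α
    have hba0 : (0:ℝ) ≤ (b - a) ^ α := Real.rpow_nonneg (by linarith) _
    have hmain : M ^ α * (2 ^ α - 1) / 2 ^ α < (2 ^ α - 1) * (b - a) ^ α := by
      have l1 : M ^ α - M ^ α / 2 ^ α < α * 2 ^ (α - 1) * (b - a) ^ α := by
        calc M ^ α - M ^ α / 2 ^ α = M ^ α - (M / 2) ^ α := by rw [hMhalf]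
          _ < M ^ α - m ^ α := by linarith
          _ ≤ _ := hdiff
      have l2 : α * 2 ^ (α - 1) * (b - a) ^ α ≤ (2 ^ α - 1) * (b - a) ^ α :=
        mul_le_mul_of_nonneg_right hkey hba0
      have l3 : M ^ α * (2 ^ α - 1) / 2 ^ α = M ^ α - M ^ α / 2 ^ α := by
        field_simp
      linarith
    have hfin : M ^ α < (2 * (b - a)) ^ α := by
      have hMα : M ^ α / 2 ^ α < (b - a) ^ α := by
        have h21 : (0:ℝ) < 2 ^ α - 1 := by linarith
        rw [div_lt_iff₀ h2pos] at *
        nlinarith [hmain]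
      have : M ^ α < 2 ^ α * (b - a) ^ α := by
        rw [div_lt_iff₀ h2pos] at hMα
        linarith
      calc M ^ α < 2 ^ α * (b - a) ^ α := this
        _ = (2 * (b - a)) ^ α := (Real.mul_rpow (by norm_num) (by linarith)).symm
    by_contra hcon
    push_neg at hcon
    exact absurd (Real.rpow_le_rpow (by linarith [hgnn p]) hcon hα0.le) (not_le.2 hfin)
end
end

section
/- (i) Every nonnegative, continuous, 1-Lipschitz function h : ℝ → [0,∞) has property (L). (ii) If h : ℝ → [0,∞) has property (L) and ε ∈ [0,1), then the function εh has property (L). -/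
open MeasureTheory Real Set
open scoped ENNReal NNReal Topology Classical

noncomputable section

lemma aux_sSup_mem {h : ℝ → ℝ} (hc : Continuous h) {a b : ℝ} (hab : a ≤ b) :
    sSup (h '' Set.Icc a b) ∈ h '' Set.Icc a b :=
  ((isCompact_Icc.image hc)).sSup_mem ((nonempty_Icc.2 hab).image h)

lemma aux_sInf_mem {h : ℝ → ℝ} (hc : Continuous h) {a b : ℝ} (hab : a ≤ b) :
    sInf (h '' Set.Icc a b) ∈ h '' Set.Icc a b :=
  ((isCompact_Icc.image hc)).sInf_mem ((nonempty_Icc.2 hab).image h)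

lemma aux_le_sSup {h : ℝ → ℝ} (hc : Continuous h) {a b : ℝ} {x : ℝ} (hx : x ∈ Set.Icc a b) :
    h x ≤ sSup (h '' Set.Icc a b) :=
  le_csSup (isCompact_Icc.image hc).bddAbove (Set.mem_image_of_mem h hx)

lemma aux_sInf_le {h : ℝ → ℝ} (hc : Continuous h) {a b : ℝ} {x : ℝ} (hx : x ∈ Set.Icc a b) :
    sInf (h '' Set.Icc a b) ≤ h x :=
  csInf_le (isCompact_Icc.image hc).bddBelow (Set.mem_image_of_mem h hx)

/-- (i) every nonnegative continuous `1`-Lipschitz function has property (L);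
(ii) property (L) is preserved under multiplication by `ε ∈ [0,1)`. -/
theorem propertyL_of_lipschitz_and_smul :
    (∀ h : ℝ → ℝ, Continuous h → (∀ x, 0 ≤ h x) → LipschitzWith 1 h → PropertyL h) ∧
    (∀ h : ℝ → ℝ, PropertyL h → ∀ ε : ℝ, 0 ≤ ε → ε < 1 → PropertyL fun x => ε * h x) := by
  constructor
  · intro h hc hnn hlip
    refine ⟨hc, hnn, ?_⟩
    intro a b hab
    rcases le_or_gt (sSup (h '' Set.Icc a b)) (2 * sInf (h '' Set.Icc a b)) with h1 | h2
    · exact Or.inl h1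
    · right
      obtain ⟨x, hx, hxM⟩ := aux_sSup_mem hc hab
      obtain ⟨y, hy, hym⟩ := aux_sInf_mem hc hab
      have hd : |h x - h y| ≤ |x - y| := by
        have := hlip.dist_le_mul x y
        simpa [Real.dist_eq] using this
      have hxy : |x - y| ≤ b - a := by
        rw [abs_sub_le_iff]
        constructor <;> linarith [hx.1, hx.2, hy.1, hy.2]
      have hd2 : h x - h y ≤ b - a := le_trans (le_trans (le_abs_self _) hd) hxy
      rw [← hxM, ← hym] at h2
      linarith [hnn y]
  · intro h hP ε hε0 hε1
    obtain ⟨hc, hnn, hL⟩ := hP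
    refine ⟨continuous_const.mul hc, fun x => mul_nonneg hε0 (hnn x), ?_⟩
    intro a b hab
    set M := sSup (h '' Set.Icc a b) with hM
    set m := sInf (h '' Set.Icc a b) with hm
    have hgr : IsGreatest ((fun x => ε * h x) '' Set.Icc a b) (ε * M) := by
      constructor
      · obtain ⟨x, hx, hxM⟩ := aux_sSup_mem hc hab
        exact ⟨x, hx, show ε * h x = ε * M by rw [hM, hxM]⟩
      · rintro y ⟨x, hx, rfl⟩
        exact mul_le_mul_of_nonneg_left (aux_le_sSup hc hx) hε0
    have hls : IsLeast ((fun x => ε * h x) '' Set.Icc a b) (ε * m) := by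
      constructor
      · obtain ⟨x, hx, hxm⟩ := aux_sInf_mem hc hab
        exact ⟨x, hx, show ε * h x = ε * m by rw [hm, hxm]⟩
      · rintro y ⟨x, hx, rfl⟩
        exact mul_le_mul_of_nonneg_left (aux_sInf_le hc hx) hε0
    rw [hgr.csSup_eq, hls.csInf_eq]
    have hM0 : 0 ≤ M := by
      obtain ⟨x, hx, hxM⟩ := aux_sSup_mem hc hab
      rw [hM, ← hxM]; exact hnn x
    rcases hL a b hab with h1 | h2
    · left; nlinarith
    · right
      calc ε * M ≤ M := mul_le_of_le_one_left hM0 hε1.le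
        _ < 2 * (b - a) := h2
end
end
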